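/- arXiv:math/0009250 — 8 statements merged into one kernel-verified Lean document; each statement's English description precedes it below -/
import Mathlib

section
/- If T is a well-founded closed tree on a Polish space X (i.e. T ⊆ ⋃ₙ Xⁿ closed in each Xⁿ with the product topology, ordered by extension, with no infinite branch), then the order o(T) of T is a countable ordinal. -/
open Ordinal

/-- The derived tree of a tree of finite sequences (ordered by extension):
remove all maximal elements. -/
def derivedTree {X : Type*} (T : Set (List X)) : Set (List X) :=
  {l ∈ T | ∃ l' ∈ T, l <+: l' ∧ l ≠ l'}

/-- Transfinite iterates `T^α` of the derivation. -/
noncomputable def derivTreeIter {X : Type*} (T : Set (List X)) : Ordinal → Set (List X) :=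
  fun o =>
    Ordinal.limitRecOn o T (fun _ S => derivedTree S)
      (fun o _ ih => ⋂ (β : Ordinal) (h : β < o), ih β h)

/-- A tree is well-founded if it has no infinite linearly ordered subset,
equivalently no strictly increasing infinite chain of nodes. -/
def TreeWellFounded {X : Type*} (T : Set (List X)) : Prop :=
  ¬ ∃ f : ℕ → List X, (∀ n, f n ∈ T) ∧ ∀ n, f n <+: f (n + 1) ∧ f n ≠ f (n + 1)

/-- A tree on a topological space is closed if for each `n` its set of nodes of
length `n` is closed in `Xⁿ` with the product topology. -/
def TreeClosed {X : Type*} [TopologicalSpace X] (T : Set (List X)) : Prop :=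
  ∀ n : ℕ, IsClosed {v : Fin n → X | List.ofFn v ∈ T}

/-!
A countable well-founded tree has countable order: each of the first `ω₁` derivation steps
would remove a new node, so the derivation stabilises before `ω₁`, and a tree contained in its
own derived tree contains an infinite chain unless it is empty.

A closed tree `T` on a Polish space is reduced to a countable one (Kunen–Martin). Fix a complete
metric and a dense sequence `u`. The new tree consists of finite lists of layers of `u`-codes
approximating, ever more finely, initial segments of strict chains in `T`. Every strict extension
in `T` is mirrored by appending a layer, so the new tree has order at least that of `T`; and an
infinite branch of the new tree would give Cauchy approximations of chains in `T`, whose limit is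
an infinite chain in `T` because `T` is closed.
-/

open Filter Topology

section Derivation

variable {Y Z : Type*}

theorem derivTreeIter_zero (T : Set (List Y)) : derivTreeIter T 0 = T :=
  Ordinal.limitRecOn_zero ..

theorem derivTreeIter_add_one (T : Set (List Y)) (α : Ordinal) :
    derivTreeIter T (α + 1) = derivedTree (derivTreeIter T α) :=
  Ordinal.limitRecOn_add_one ..

theorem derivTreeIter_limit (T : Set (List Y)) {α : Ordinal} (h : Order.IsSuccLimit α) :
    derivTreeIter T α = ⋂ β < α, derivTreeIter T β :=
  Ordinal.limitRecOn_limit _ _ _ _ h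

theorem derivedTree_subset (T : Set (List Y)) : derivedTree T ⊆ T := fun _ h => h.1

theorem derivTreeIter_antitone (T : Set (List Y)) : Antitone (derivTreeIter T) := by
  intro β α hβα
  induction α using Ordinal.limitRecOn with
  | zero => rw [nonpos_iff_eq_zero.mp hβα]
  | add_one γ ih =>
    rcases hβα.eq_or_lt with rfl | hlt
    · exact subset_rfl
    rw [derivTreeIter_add_one]
    exact (derivedTree_subset _).trans (ih (Order.lt_add_one_iff.mp hlt))
  | limit α hα _ =>
    rcases hβα.eq_or_lt with rfl | hlt
    · exact subset_rfl
    rw [derivTreeIter_limit T hα]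
    exact Set.biInter_subset_of_mem hlt

theorem derivTreeIter_subset (T : Set (List Y)) (α : Ordinal) : derivTreeIter T α ⊆ T := by
  simpa only [derivTreeIter_zero] using derivTreeIter_antitone T (zero_le (a := α))

theorem TreeWellFounded.mono {S T : Set (List Y)} (hT : TreeWellFounded T) (hST : S ⊆ T) :
    TreeWellFounded S :=
  fun ⟨f, hfS, hf⟩ => hT ⟨f, fun n => hST (hfS n), hf⟩

theorem TreeWellFounded.eq_empty_of_subset_derivedTree {S : Set (List Y)}
    (hS : TreeWellFounded S) (h : S ⊆ derivedTree S) : S = ∅ := by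
  refine Set.eq_empty_of_forall_notMem fun l₀ hl₀ => hS ?_
  choose! next hnextS hnext using fun l (hl : l ∈ S) => (h hl).2
  have hmem : ∀ n, next^[n] l₀ ∈ S := fun n => by
    induction n with
    | zero => exact hl₀
    | succ n ih => rw [Function.iterate_succ_apply']; exact hnextS _ ih
  refine ⟨fun n => next^[n] l₀, hmem, fun n => ?_⟩
  simp only [Function.iterate_succ_apply']
  exact hnext _ (hmem n)

theorem exists_lt_aleph_one_ord_add_one_eq_of_antitone {β : Type*} {f : Ordinal → Set β}
    (hf : Antitone f) (hc : (f 0).Countable) :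
    ∃ α < (Cardinal.aleph 1).ord, f (α + 1) = f α := by
  by_contra! h
  have hdrop : ∀ α : Set.Iio (Cardinal.aleph 1).ord, ∃ x ∈ f α, x ∉ f (α + 1) :=
    fun α => Set.exists_of_ssubset ((hf le_self_add).ssubset_of_ne (h α α.2))
  choose e he he' using hdrop
  have hne : ∀ α β, α < β → e α ≠ e β := fun α β hαβ heq =>
    he' α (heq ▸ hf (Order.add_one_le_of_lt hαβ) (he β))
  have hinj : Function.Injective fun α => (⟨e α, hf (zero_le (a := α.1)) (he α)⟩ : f 0) := by
    intro α β heq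
    by_contra hαβ
    rcases lt_or_gt_of_ne hαβ with hlt | hlt
    · exact hne α β hlt (congrArg Subtype.val heq)
    · exact hne β α hlt (congrArg Subtype.val heq).symm
  have := hc.to_subtype
  have := hinj.countable
  have hle := Cardinal.mk_le_aleph0 (α := Set.Iio (Cardinal.aleph 1).ord)
  simp [Cardinal.mk_Iio_ordinal] at hle

theorem TreeWellFounded.exists_derivTreeIter_eq_empty {T : Set (List Y)}
    (hwf : TreeWellFounded T) (hc : T.Countable) :
    ∃ α < (Cardinal.aleph 1).ord, derivTreeIter T α = ∅ := by
  obtain ⟨α, hα, hstable⟩ := exists_lt_aleph_one_ord_add_one_eq_of_antitone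
    (derivTreeIter_antitone T) (by rwa [derivTreeIter_zero])
  refine ⟨α, hα, (hwf.mono (derivTreeIter_subset T α)).eq_empty_of_subset_derivedTree ?_⟩
  rw [← derivTreeIter_add_one, hstable]

theorem mem_derivTreeIter_of_simulation {T : Set (List Y)} {W : Set (List Z)}
    (R : List Y → List Z → Prop) (hR : ∀ l w, R l w → w ∈ W)
    (hstep : ∀ l l' w, R l w → l' ∈ T → l <+: l' → l ≠ l' → ∃ w', R l' w' ∧ w <+: w' ∧ w ≠ w')
    {α : Ordinal} {l : List Y} {w : List Z} (hl : l ∈ derivTreeIter T α) (hlw : R l w) :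
    w ∈ derivTreeIter W α := by
  induction α using Ordinal.limitRecOn generalizing l w with
  | zero => rw [derivTreeIter_zero]; exact hR l w hlw
  | add_one γ ih =>
    rw [derivTreeIter_add_one] at hl ⊢
    obtain ⟨hlγ, l', hl', hpre, hne⟩ := hl
    obtain ⟨w', hlw', hwpre, hwne⟩ := hstep l l' w hlw (derivTreeIter_subset T γ hl') hpre hne
    exact ⟨ih hlγ hlw, w', ih hl' hlw', hwpre, hwne⟩
  | limit α hα ih =>
    rw [derivTreeIter_limit _ hα] at hl ⊢
    simp only [Set.mem_iInter] at hl ⊢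
    exact fun β hβ => ih β hβ (hl β hβ) hlw

end Derivation

section PrefixChain

variable {α : Type*}

theorem List.IsPrefix.length_lt_of_ne {a b : List α} (h : a <+: b) (hne : a ≠ b) :
    a.length < b.length :=
  h.length_le.lt_of_ne fun hlen => hne (h.eq_of_length hlen)

theorem List.IsPrefix.getD_eq {a b : List α} (h : a <+: b) {j : ℕ} (hj : j < a.length) (d : α) :
    a.getD j d = b.getD j d := by
  rw [List.getD_eq_getElem _ _ hj, List.getD_eq_getElem _ _ (hj.trans_le h.length_le),
    h.getElem hj]

theorem List.ofFn_prefix_ofFn {x y : ℕ → α} {m m' : ℕ} (hm : m ≤ m') (h : ∀ q < m, x q = y q) :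
    List.ofFn (fun q : Fin m => x q) <+: List.ofFn (fun q : Fin m' => y q) :=
  List.prefix_iff_getElem.2 ⟨by simpa using hm, fun q hq => by
    simpa using h q (by simpa using hq)⟩

theorem List.ofFn_getD {l : List α} {m : ℕ} (h : l.length = m) (d : α) :
    List.ofFn (fun q : Fin m => l.getD q d) = l := by
  subst h
  exact List.ext_getElem (by simp) fun q _ hq => by simp

variable {f : ℕ → List α}

theorem isPrefix_of_prefixChain (hf : ∀ n, f n <+: f (n + 1)) {m n : ℕ} (hmn : m ≤ n) :
    f m <+: f n := by
  induction n, hmn using Nat.le_induction with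
  | base => exact List.prefix_refl _
  | succ n _ ih => exact ih.trans (hf n)

theorem le_length_of_strictPrefixChain (hf : ∀ n, f n <+: f (n + 1) ∧ f n ≠ f (n + 1))
    (n : ℕ) : n ≤ (f n).length := by
  induction n with
  | zero => exact Nat.zero_le _
  | succ n ih => exact ih.trans_lt ((hf n).1.length_lt_of_ne (hf n).2)

theorem getD_eq_of_strictPrefixChain (hf : ∀ n, f n <+: f (n + 1) ∧ f n ≠ f (n + 1))
    {n j : ℕ} (hjn : j < n) (d : α) : (f n).getD j d = (f (j + 1)).getD j d :=
  ((isPrefix_of_prefixChain (fun n => (hf n).1) hjn).getD_eq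
    (le_length_of_strictPrefixChain hf (j + 1)) d).symm

end PrefixChain

theorem cauchySeq_of_eventually_dist_le {X : Type*} [PseudoMetricSpace X] {v c : ℕ → X}
    {ε : ℕ → ℝ} (hε : Tendsto ε atTop (𝓝 0))
    (h : ∀ᶠ j in atTop, ∀ n, j < n → dist (v n) (c j) ≤ ε j) : CauchySeq v := by
  refine Metric.cauchySeq_iff'.2 fun δ hδ => ?_
  obtain ⟨j, hjc, hjδ⟩ := (h.and (hε.eventually (gt_mem_nhds (half_pos hδ)))).exists
  refine ⟨j + 1, fun n hn => ?_⟩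
  calc dist (v n) (v (j + 1)) ≤ dist (v n) (c j) + dist (v (j + 1)) (c j) :=
        dist_triangle_right _ _ _
    _ ≤ ε j + ε j := add_le_add (hjc n (by omega)) (hjc (j + 1) (by omega))
    _ < δ := by linarith

section Metric

variable {X : Type*} [MetricSpace X]

def ListClose (ε : ℝ) : List X → List X → Prop :=
  List.Forall₂ fun x y => dist x y < ε

theorem ListClose.dist_getD_lt {ε : ℝ} {a b : List X} (h : ListClose ε a b) (hε : 0 < ε)
    (q : ℕ) (d : X) : dist (a.getD q d) (b.getD q d) < ε := by
  induction h generalizing q with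
  | nil => simpa using hε
  | cons hxy _ ih =>
    cases q with
    | zero => simpa using hxy
    | succ q => simpa using ih q

theorem TreeClosed.ofFn_mem_of_tendsto [Inhabited X] {T : Set (List X)} (hcl : TreeClosed T)
    {l : ℕ → List X} {m : ℕ} {x : ℕ → X}
    (hx : ∀ q, Tendsto (fun n => (l n).getD q default) atTop (𝓝 (x q)))
    (hl : ∀ᶠ n in atTop, (l n).length = m ∧ l n ∈ T) :
    List.ofFn (fun q : Fin m => x q) ∈ T := by
  refine (hcl m).mem_of_tendsto (tendsto_pi_nhds.2 fun q => hx q) ?_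
  filter_upwards [hl] with n ⟨hlen, hmem⟩
  show List.ofFn _ ∈ T
  rwa [List.ofFn_getD hlen]

theorem TreeClosed.not_treeWellFounded_of_listClose [CompleteSpace X] [Inhabited X]
    {T : Set (List X)} (hcl : TreeClosed T) {L a : ℕ → ℕ → List X} {ε : ℕ → ℝ}
    (hε₀ : ∀ j, 0 < ε j) (hε : Tendsto ε atTop (𝓝 0))
    (hmem : ∀ n i, i < n → L n i ∈ T)
    (hchain : ∀ n i, i + 1 < n → L n i <+: L n (i + 1) ∧ L n i ≠ L n (i + 1))
    (hclose : ∀ n j i, i ≤ j → j < n → ListClose (ε j) (L n i) (a i j)) :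
    ¬ TreeWellFounded T := by
  set m : ℕ → ℕ := fun i => (a i i).length
  have hlen : ∀ n i, i < n → (L n i).length = m i := fun n i hi =>
    (hclose n i i le_rfl hi).length_eq
  have hconv : ∀ i q, ∃ x, Tendsto (fun n => (L n i).getD q default) atTop (𝓝 x) :=
    fun i q => cauchySeq_tendsto_of_complete <| cauchySeq_of_eventually_dist_le
      (c := fun j => (a i j).getD q default) hε <| by
        filter_upwards [eventually_ge_atTop i] with j hij n hjn
        exact ((hclose n j i hij hjn).dist_getD_lt (hε₀ j) q default).le
  choose x hx using hconv
  have hm : ∀ i, m i < m (i + 1) := fun i => by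
    obtain ⟨hpre, hne⟩ := hchain (i + 2) i (by omega)
    simpa only [hlen (i + 2) i (by omega), hlen (i + 2) (i + 1) (by omega)] using
      hpre.length_lt_of_ne hne
  have hx_succ : ∀ i q, q < m i → x i q = x (i + 1) q := fun i q hq =>
    tendsto_nhds_unique (hx i q) <| (hx (i + 1) q).congr' <| by
      filter_upwards [eventually_gt_atTop (i + 1)] with n hn
      exact ((hchain n i hn).1.getD_eq (by rw [hlen n i (by omega)]; exact hq) default).symm
  refine fun hwf => hwf ⟨fun i => List.ofFn (fun q : Fin (m i) => x i q), fun i => ?_, fun i => ?_⟩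
  · refine hcl.ofFn_mem_of_tendsto (hx i) ?_
    filter_upwards [eventually_gt_atTop i] with n hn
    exact ⟨hlen n i hn, hmem n i hn⟩
  · refine ⟨List.ofFn_prefix_ofFn (hm i).le (hx_succ i), fun h => (hm i).ne ?_⟩
    simpa using congrArg List.length h

end Metric

section ApproxTree

variable {X : Type*} [MetricSpace X] {u : ℕ → X} {T : Set (List X)}

/-- Layer `j` of `w` lists codes, as indices into `u`, of `1 / (j + 1)`-approximations of
the members `L 0, …, L j` of a strict chain in `T`. Since each layer re-approximates all earlier
members more finely, the approximations converge along an infinite branch. -/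
structure IsApproxNode (u : ℕ → X) (T : Set (List X)) (w : List (List (List ℕ)))
    (L : ℕ → List X) : Prop where
  mem : ∀ i < w.length, L i ∈ T
  chain : ∀ i, i + 1 < w.length → L i <+: L (i + 1) ∧ L i ≠ L (i + 1)
  close : ∀ j < w.length, ∀ i ≤ j,
    ListClose (1 / (j + 1)) (L i) (((w.getD j []).getD i []).map u)

def approxTree (u : ℕ → X) (T : Set (List X)) : Set (List (List (List ℕ))) :=
  {w | ∃ L, IsApproxNode u T w L}

theorem approxTree_wellFounded [CompleteSpace X] [Inhabited X] (hcl : TreeClosed T)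
    (hwf : TreeWellFounded T) (u : ℕ → X) : TreeWellFounded (approxTree u T) := by
  rintro ⟨f, hfW, hf⟩
  choose L hL using hfW
  have hlen := le_length_of_strictPrefixChain hf
  refine hcl.not_treeWellFounded_of_listClose
    (a := fun i j => (((f (j + 1)).getD j []).getD i []).map u)
    (fun j => Nat.one_div_pos_of_nat) tendsto_one_div_add_atTop_nhds_zero_nat
    (fun n i hi => (hL n).mem i (hi.trans_le (hlen n)))
    (fun n i hi => (hL n).chain i (hi.trans_le (hlen n)))
    (fun n j i hij hjn => ?_) hwf
  rw [← getD_eq_of_strictPrefixChain hf hjn]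
  exact (hL n).close j (hjn.trans_le (hlen n)) i hij

theorem DenseRange.exists_codes_listClose (hu : DenseRange u) {ε : ℝ} (hε : 0 < ε)
    (L : ℕ → List X) (j : ℕ) :
    ∃ codes : List (List ℕ), ∀ i ≤ j, ListClose ε (L i) ((codes.getD i []).map u) := by
  choose g hg using fun x => hu.exists_dist_lt x hε
  refine ⟨(List.range (j + 1)).map fun i => (L i).map g, fun i hij => ?_⟩
  have hi : i < j + 1 := Nat.lt_succ_of_le hij
  simp only [List.getD_eq_getElem?_getD, List.getElem?_map, List.getElem?_range hi,
    Option.map_some, Option.getD_some, List.map_map]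
  exact List.forall₂_map_right_iff.2 (List.forall₂_same.2 fun x _ => hg x)

theorem IsApproxNode.exists_append (hu : DenseRange u) {w : List (List (List ℕ))}
    {L : ℕ → List X} {k : ℕ} {l' : List X} (hw : IsApproxNode u T w L) (hk : w.length = k + 1)
    (hl' : l' ∈ T) (hpre : L k <+: l') (hne : L k ≠ l') :
    ∃ layer, IsApproxNode u T (w ++ [layer]) (Function.update L (k + 1) l') := by
  obtain ⟨layer, hlayer⟩ := hu.exists_codes_listClose
    (Nat.one_div_pos_of_nat (n := k + 1)) (Function.update L (k + 1) l') (k + 1)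
  have hL : ∀ i ≤ k, Function.update L (k + 1) l' i = L i := fun i hi =>
    Function.update_of_ne (by omega) _ _
  have hlen : (w ++ [layer]).length = k + 2 := by simp [hk]
  have hold : ∀ j ≤ k, (w ++ [layer]).getD j [] = w.getD j [] := fun j hj =>
    List.getD_append _ _ _ _ (by omega)
  have hnew : (w ++ [layer]).getD (k + 1) [] = layer := by
    rw [List.getD_append_right _ _ _ _ (by omega)]
    simp [hk]
  refine ⟨layer, ⟨fun i hi => ?_, fun i hi => ?_, fun j hj i hij => ?_⟩⟩
  · rcases Nat.lt_succ_iff_lt_or_eq.1 (hlen ▸ hi : i < k + 1 + 1) with hi | rfl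
    · rw [hL i (by omega)]
      exact hw.mem i (by omega)
    · simpa using hl'
  · rcases Nat.lt_succ_iff_lt_or_eq.1 (by omega : i < k + 1) with hi | rfl
    · rw [hL i (by omega), hL (i + 1) (by omega)]
      exact hw.chain i (by omega)
    · rw [hL i le_rfl, Function.update_self]
      exact ⟨hpre, hne⟩
  · rcases Nat.lt_succ_iff_lt_or_eq.1 (hlen ▸ hj : j < k + 1 + 1) with hj | rfl
    · rw [hold j (by omega), hL i (by omega)]
      exact hw.close j (by omega) i hij
    · rw [hnew]
      exact_mod_cast hlayer i hij

theorem derivTreeIter_eq_empty_of_approxTree (hu : DenseRange u) {α : Ordinal}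
    (h : derivTreeIter (approxTree u T) α = ∅) : derivTreeIter T α = ∅ := by
  refine Set.eq_empty_of_forall_notMem fun l hl => ?_
  let R (l : List X) (w : List (List (List ℕ))) : Prop :=
    ∃ L k, w.length = k + 1 ∧ L k = l ∧ IsApproxNode u T w L
  have hstep : ∀ l l' w, R l w → l' ∈ T → l <+: l' → l ≠ l' →
      ∃ w', R l' w' ∧ w <+: w' ∧ w ≠ w' := by
    rintro l l' w ⟨L, k, hk, rfl, hw⟩ hl' hpre hne
    obtain ⟨layer, hw'⟩ := hw.exists_append hu hk hl' hpre hne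
    exact ⟨w ++ [layer], ⟨_, k + 1, by simp [hk], Function.update_self .., hw'⟩,
      List.prefix_append _ _, by simp⟩
  obtain ⟨layer, hlayer⟩ := hu.exists_codes_listClose one_pos (fun _ => l) 0
  have hroot : R l [layer] := by
    refine ⟨fun _ => l, 0, rfl, rfl, fun _ _ => derivTreeIter_subset T α hl,
      fun i hi => by simp at hi, fun j hj i hij => ?_⟩
    obtain rfl : j = 0 := by simpa using hj
    simpa using hlayer i hij
  have hmem := mem_derivTreeIter_of_simulation (W := approxTree u T) R
    (fun _ w ⟨L, _, _, _, hw⟩ => (⟨L, hw⟩ : w ∈ approxTree u T)) hstep hl hroot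
  rwa [h] at hmem

end ApproxTree

theorem order_lt_omega1_of_wellFounded_closed_tree_on_polish_general
    {X : Type*} [TopologicalSpace X] [PolishSpace X]
    (T : Set (List X))
    (hwf : TreeWellFounded T) (hcl : TreeClosed T) :
    ∃ α : Ordinal, α < (Cardinal.aleph 1).ord ∧ derivTreeIter T α = ∅ := by
  rcases isEmpty_or_nonempty X with hX | hX
  · exact hwf.exists_derivTreeIter_eq_empty (Set.to_countable T)
  inhabit X
  let := TopologicalSpace.upgradeIsCompletelyMetrizable X
  obtain ⟨u, hu⟩ := TopologicalSpace.exists_dense_seq X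
  obtain ⟨α, hα, hempty⟩ :=
    (approxTree_wellFounded hcl hwf u).exists_derivTreeIter_eq_empty (Set.to_countable _)
  exact ⟨α, hα, derivTreeIter_eq_empty_of_approxTree hu hempty⟩

/-- If `T` is a well-founded closed tree on a Polish space, then some countable
iterate of the derivation is empty; that is, the order `o(T)` of `T` is a
countable ordinal. -/
theorem order_lt_omega1_of_wellFounded_closed_tree_on_polish
    {X : Type*} [TopologicalSpace X] [PolishSpace X]
    (T : Set (List X)) (hT : ∀ l ∈ T, l ≠ [])
    (hwf : TreeWellFounded T) (hcl : TreeClosed T) :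
    ∃ α : Ordinal, α < (Cardinal.aleph 1).ord ∧ derivTreeIter T α = ∅ :=
  order_lt_omega1_of_wellFounded_closed_tree_on_polish_general T hwf hcl
end

section
/- Let X be a Banach space and (x_i)_{i=1}^m a normalized K-basic sequence in X. Then (x_i)_{i=1}^m is an ℓ₁⁺-K-sequence (i.e. (1/K)∑aᵢ ≤ ‖∑aᵢxᵢ‖ for all nonnegative scalars aᵢ) if and only if there exists f in the unit sphere of X* with f(xᵢ) ≥ 1/K for each i. -/
/-!
Both directions compare `∑ aᵢ xᵢ` with a functional. If `f` has norm one and `f(xᵢ) ≥ 1/K`,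
then `‖∑ aᵢ xᵢ‖ ≥ f(∑ aᵢ xᵢ) ≥ (1/K) ∑ aᵢ`. Conversely, the lower `ℓ₁⁺` estimate says exactly
that the convex set of convex combinations of the `xᵢ` misses the open ball of radius `1/K`;
a Hahn–Banach functional separating them, rescaled to norm one, is at least `1/K` on every `xᵢ`.
-/

variable {X : Type*} [NormedAddCommGroup X] [NormedSpace ℝ X]

/-- Partial sum `∑_{i < p} aᵢ xᵢ` of a finite sequence. -/
def prefSum {m : ℕ} (x : Fin m → X) (a : Fin m → ℝ) (p : ℕ) : X :=
  ∑ i : Fin m, if (i : ℕ) < p then a i • x i else 0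

/-- `(x_i)_{i=1}^m` is `K`-basic: the basis constant is at most `K`. -/
def IsFinBasic {m : ℕ} (K : ℝ) (x : Fin m → X) : Prop :=
  ∀ (a : Fin m → ℝ) (p q : ℕ), p ≤ q → q ≤ m →
    ‖prefSum x a p‖ ≤ K * ‖prefSum x a q‖

/-- `(x_i)_{i=1}^m` is normalized: each vector has norm one. -/
def IsNormalizedFin {m : ℕ} (x : Fin m → X) : Prop := ∀ i, ‖x i‖ = 1

open Metric

lemma exists_norm_le_inv_one_le_apply_of_disjoint_ball {S : Set X} {r : ℝ} (hr : 0 < r)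
    (hS : Convex ℝ S) (hdisj : Disjoint (ball (0 : X) r) S) :
    ∃ g : StrongDual ℝ X, ‖g‖ ≤ r⁻¹ ∧ ∀ y ∈ S, 1 ≤ g y := by
  obtain ⟨f, u, hball, hS⟩ :=
    geometric_hahn_banach_open (convex_ball _ _) isOpen_ball hS hdisj
  have hu : 0 < u := by simpa using hball 0 (mem_ball_self hr)
  -- The ball is symmetric, so `f < u` on it bounds `|f|` by `u` there: `u⁻¹ • f` lies in its polar.
  have hpolar : u⁻¹ • f ∈ StrongDual.polar ℝ (ball (0 : X) r) := by
    refine (StrongDual.mem_polar_iff ℝ _).2 fun z hz => ?_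
    have hz' : -z ∈ ball (0 : X) r := by simpa using hz
    have hlt := hball z hz
    have hneg_lt := hball (-z) hz'
    rw [map_neg] at hneg_lt
    rw [smul_apply, smul_eq_mul, norm_mul, norm_inv, Real.norm_eq_abs,
      Real.norm_eq_abs, abs_of_pos hu, inv_mul_le_one₀ hu, abs_le]
    constructor <;> linarith
  rw [NormedSpace.polar_ball hr, mem_closedBall_zero_iff] at hpolar
  refine ⟨u⁻¹ • f, hpolar, fun y hy => ?_⟩
  rw [smul_apply, smul_eq_mul, le_inv_mul_iff₀ hu, mul_one]
  exact hS y hy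

lemma exists_norm_eq_one_le_apply_of_le_norm {S : Set X} {r : ℝ} (hr : 0 < r)
    (hS : Convex ℝ S) (hne : S.Nonempty) (hle : ∀ y ∈ S, r ≤ ‖y‖) :
    ∃ f : StrongDual ℝ X, ‖f‖ = 1 ∧ ∀ y ∈ S, r ≤ f y := by
  have hdisj : Disjoint (ball (0 : X) r) S :=
    Set.disjoint_left.2 fun y hy hyS => (mem_ball_zero_iff.1 hy).not_ge (hle y hyS)
  obtain ⟨g, hg, hgS⟩ := exists_norm_le_inv_one_le_apply_of_disjoint_ball hr hS hdisj
  obtain ⟨y₀, hy₀⟩ := hne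
  have hg0 : 0 < ‖g‖ := norm_pos_iff.2 fun h => by have := hgS y₀ hy₀; norm_num [h] at this
  refine ⟨‖g‖⁻¹ • g, by rw [norm_smul, norm_inv, norm_norm, inv_mul_cancel₀ hg0.ne'], ?_⟩
  intro y hy
  calc r ≤ ‖g‖⁻¹ := by rwa [le_inv_comm₀ hr hg0]
    _ ≤ ‖g‖⁻¹ * g y := le_mul_of_one_le_right (inv_nonneg.2 hg0.le) (hgS y hy)

theorem l1Plus_iff_exists_functional_general
    {m : ℕ} (hm : 1 ≤ m) (K : ℝ) (hK : 1 ≤ K) (x : Fin m → X) :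
    (∀ a : Fin m → ℝ, (∀ i, 0 ≤ a i) →
        (1 / K) * ∑ i, a i ≤ ‖∑ i, a i • x i‖) ↔
      ∃ f : StrongDual ℝ X, ‖f‖ = 1 ∧ ∀ i, 1 / K ≤ f (x i) := by
  constructor
  · intro hl1
    set S := Fintype.linearCombination ℝ x '' stdSimplex ℝ (Fin m)
    have hx : ∀ i, x i ∈ S := fun i =>
      ⟨Pi.single i 1, single_mem_stdSimplex ℝ i, by simp⟩
    have hle : ∀ y ∈ S, 1 / K ≤ ‖y‖ := by
      rintro _ ⟨a, ⟨ha, hsum⟩, rfl⟩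
      simpa [Fintype.linearCombination_apply, hsum] using hl1 a ha
    obtain ⟨f, hf, hfS⟩ := exists_norm_eq_one_le_apply_of_le_norm (by positivity)
      ((convex_stdSimplex ℝ _).linear_image _) ⟨_, hx ⟨0, hm⟩⟩ hle
    exact ⟨f, hf, fun i => hfS _ (hx i)⟩
  · rintro ⟨f, hf, hfx⟩ a ha
    calc (1 / K) * ∑ i, a i = ∑ i, a i * (1 / K) := by rw [Finset.mul_sum]; simp only [mul_comm]
      _ ≤ ∑ i, a i * f (x i) :=
          Finset.sum_le_sum fun i _ => mul_le_mul_of_nonneg_left (hfx i) (ha i)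
      _ = f (∑ i, a i • x i) := by simp
      _ ≤ ‖∑ i, a i • x i‖ := by
          simpa [hf] using (le_abs_self _).trans (f.le_opNorm (∑ i, a i • x i))

/-- A normalized `K`-basic sequence is an `ℓ₁⁺-K`-sequence iff there is a norm one
functional `f` with `f(xᵢ) ≥ 1/K` for each `i`. -/
theorem l1Plus_iff_exists_functional [CompleteSpace X]
    {m : ℕ} (hm : 1 ≤ m) (K : ℝ) (hK : 1 ≤ K) (x : Fin m → X)
    (hnorm : IsNormalizedFin x) (hbasic : IsFinBasic K x) :
    (∀ a : Fin m → ℝ, (∀ i, 0 ≤ a i) →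
        (1 / K) * ∑ i, a i ≤ ‖∑ i, a i • x i‖) ↔
      ∃ f : StrongDual ℝ X, ‖f‖ = 1 ∧ ∀ i, 1 / K ≤ f (x i) :=
  l1Plus_iff_exists_functional_general hm K hK x
end

section
/- If (x_i)_{i=1}^m is an ℓ₁⁺-K-sequence in a Banach space X and f ∈ S_{X*} satisfies f(xᵢ) ≥ 1/K for 1 ≤ i ≤ m, then the sequence (xᵢ/f(xᵢ))_{i=1}^m is a 2K-wide-(s) sequence. -/
variable {X : Type*} [NormedAddCommGroup X] [NormedSpace ℝ X]

/-- An `ℓ₁⁺-K`-sequence: normalized, `K`-basic, and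
`(1/K) ∑ aᵢ ≤ ‖∑ aᵢ xᵢ‖` for nonnegative scalars. -/
def IsL1Plus {m : ℕ} (K : ℝ) (x : Fin m → X) : Prop :=
  IsNormalizedFin x ∧ IsFinBasic K x ∧
    ∀ a : Fin m → ℝ, (∀ i, 0 ≤ a i) → (1 / K) * ∑ i, a i ≤ ‖∑ i, a i • x i‖

/-- An `ℓ∞⁺-K`-sequence: normalized, `K`-basic, and there are coefficients
`aᵢ ∈ [1/K, 1]` with `‖∑ aᵢ xᵢ‖ ≤ K`. -/
def IsLInfPlus {m : ℕ} (K : ℝ) (x : Fin m → X) : Prop :=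
  IsNormalizedFin x ∧ IsFinBasic K x ∧
    ∃ a : Fin m → ℝ, (∀ i, 1 / K ≤ a i ∧ a i ≤ 1) ∧ ‖∑ i, a i • x i‖ ≤ K

/-- A `λ`-wide-(s) sequence: `2λ`-basic, `‖xᵢ‖ ≤ λ`, and
`sup_k |∑_{i≥k} aᵢ| ≤ λ ‖∑ aᵢ xᵢ‖` for all scalars. -/
def IsWideS {m : ℕ} (l : ℝ) (x : Fin m → X) : Prop :=
  IsFinBasic (2 * l) x ∧ (∀ i, ‖x i‖ ≤ l) ∧
    ∀ (a : Fin m → ℝ) (k : ℕ),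
      |∑ i : Fin m, if k ≤ (i : ℕ) then a i else 0| ≤ l * ‖∑ i, a i • x i‖

/-- A `λ`-wide-(c) sequence: `λ`-basic, `1/λ ≤ ‖xᵢ‖ ≤ 1`, and `‖∑ xᵢ‖ ≤ λ`. -/
def IsWideC {m : ℕ} (l : ℝ) (x : Fin m → X) : Prop :=
  IsFinBasic l x ∧ (∀ i, 1 / l ≤ ‖x i‖ ∧ ‖x i‖ ≤ 1) ∧ ‖∑ i, x i‖ ≤ l

/-!
Rescaling by `f` gives vectors `yᵢ` with `f yᵢ = 1`, so the tail sum `∑_{i ≥ k} aᵢ` is the value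
of `f` on the tail vector `∑ aᵢ yᵢ - P_k`, where `P_k` is the `k`-th partial sum. Since `‖f‖ ≤ 1`
and the `yᵢ` remain `K`-basic, this is at most `(1 + K) ‖∑ aᵢ yᵢ‖ ≤ 2K ‖∑ aᵢ yᵢ‖`.
-/

open Finset

section FiniteBasicSequence

variable {m : ℕ}

lemma prefSum_smul_left (c : Fin m → ℝ) (x : Fin m → X) (a : Fin m → ℝ) (p : ℕ) :
    prefSum (fun i => c i • x i) a p = prefSum x (fun i => a i * c i) p := by
  unfold prefSum
  refine sum_congr rfl fun i _ => ?_
  split_ifs <;> simp [smul_smul]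

lemma prefSum_min (x : Fin m → X) (a : Fin m → ℝ) (p : ℕ) :
    prefSum x a (min p m) = prefSum x a p := by
  unfold prefSum
  refine sum_congr rfl fun i _ => ?_
  simp [i.is_lt]

lemma prefSum_self (x : Fin m → X) (a : Fin m → ℝ) : prefSum x a m = ∑ i, a i • x i := by
  unfold prefSum
  exact sum_congr rfl fun i _ => if_pos i.is_lt

lemma IsFinBasic.smul {K : ℝ} {x : Fin m → X} (hx : IsFinBasic K x) (c : Fin m → ℝ) :
    IsFinBasic K (fun i => c i • x i) := by
  intro a p q hpq hqm
  simpa only [prefSum_smul_left] using hx _ p q hpq hqm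

lemma IsFinBasic.mono {K L : ℝ} {x : Fin m → X} (hx : IsFinBasic K x) (hKL : K ≤ L) :
    IsFinBasic L x := fun a p q hpq hqm =>
  (hx a p q hpq hqm).trans (mul_le_mul_of_nonneg_right hKL (norm_nonneg _))

lemma IsFinBasic.norm_prefSum_le {K : ℝ} {x : Fin m → X} (hx : IsFinBasic K x)
    (a : Fin m → ℝ) (p : ℕ) : ‖prefSum x a p‖ ≤ K * ‖∑ i, a i • x i‖ := by
  rw [← prefSum_min, ← prefSum_self]
  exact hx a _ m (min_le_right _ _) le_rfl

lemma sum_tail_eq_apply_sub_prefSum (f : StrongDual ℝ X) {y : Fin m → X}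
    (hfy : ∀ i, f (y i) = 1) (a : Fin m → ℝ) (k : ℕ) :
    ∑ i : Fin m, (if k ≤ (i : ℕ) then a i else 0) = f (∑ i, a i • y i - prefSum y a k) := by
  simp only [prefSum, map_sub, map_sum, ← sum_sub_distrib]
  refine sum_congr rfl fun i _ => ?_
  split_ifs <;> simp [hfy] <;> omega

lemma IsFinBasic.abs_sum_tail_le {K : ℝ} {y : Fin m → X} (hy : IsFinBasic K y)
    {f : StrongDual ℝ X} (hf : ‖f‖ ≤ 1) (hfy : ∀ i, f (y i) = 1) (a : Fin m → ℝ) (k : ℕ) :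
    |∑ i : Fin m, (if k ≤ (i : ℕ) then a i else 0)| ≤ (1 + K) * ‖∑ i, a i • y i‖ := by
  rw [sum_tail_eq_apply_sub_prefSum f hfy, ← Real.norm_eq_abs]
  calc ‖f (∑ i, a i • y i - prefSum y a k)‖
      ≤ 1 * ‖∑ i, a i • y i - prefSum y a k‖ := f.le_of_opNorm_le hf _
    _ ≤ ‖∑ i, a i • y i‖ + ‖prefSum y a k‖ := by rw [one_mul]; exact norm_sub_le _ _
    _ ≤ ‖∑ i, a i • y i‖ + K * ‖∑ i, a i • y i‖ := by gcongr; exact hy.norm_prefSum_le a k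
    _ = (1 + K) * ‖∑ i, a i • y i‖ := by ring

lemma isWideS_of_apply_eq_one {K : ℝ} (hK : 1 ≤ K) {y : Fin m → X} (hy : IsFinBasic K y)
    (hny : ∀ i, ‖y i‖ ≤ 2 * K) {f : StrongDual ℝ X} (hf : ‖f‖ ≤ 1)
    (hfy : ∀ i, f (y i) = 1) : IsWideS (2 * K) y := by
  refine ⟨hy.mono (by linarith), hny, fun a k => ?_⟩
  refine (hy.abs_sum_tail_le hf hfy a k).trans ?_
  gcongr
  linarith

end FiniteBasicSequence

/-- If `(x_i)` is an `ℓ₁⁺-K`-sequence and `f ∈ S_{X*}` with `f(xᵢ) ≥ 1/K`, then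
`(xᵢ / f(xᵢ))` is a `2K`-wide-(s) sequence. -/
theorem wideS_of_l1Plus {m : ℕ} (K : ℝ) (hK : 1 ≤ K) (x : Fin m → X)
    (hx : IsL1Plus K x) (f : StrongDual ℝ X) (hf : ‖f‖ = 1)
    (hfx : ∀ i, 1 / K ≤ f (x i)) :
    IsWideS (2 * K) (fun i => (f (x i))⁻¹ • x i) := by
  obtain ⟨hnorm, hbasic, -⟩ := hx
  have hfx_pos : ∀ i, 0 < f (x i) := fun i =>
    (one_div_pos.mpr (zero_lt_one.trans_le hK)).trans_le (hfx i)
  refine isWideS_of_apply_eq_one hK (hbasic.smul _) (fun i => ?_) hf.le (fun i => ?_)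
  · have hinv_le : (f (x i))⁻¹ ≤ K := inv_le_of_inv_le₀ (by linarith) (by simpa using hfx i)
    rw [norm_smul, hnorm i, mul_one, norm_inv, Real.norm_of_nonneg (hfx_pos i).le]
    linarith
  · rw [map_smul, smul_eq_mul, inv_mul_cancel₀ (hfx_pos i).ne']
end

section
/- Fix α < ω₁ and consider the tree Tree(S_α) = (S_α, ⊆) of Schreier sets ordered by inclusion. The order of Tree(S_α) is ω^α + 1. -/
/-!
Lower bound: for every `n`, the empty set survives `ω^α` derivations of the tail
`{F ∈ S_α | n ≤ min F}`. At a successor, a union of `j < k` successive `S_β`-blocks with entries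
`≥ k` can still be extended by a further block placed beyond it, so every block contributes `ω^β`
derivations; at a limit, the tail of `S_{α_n}` from `n` on lies in `S_α`.

Upper bound: `S_α` carries a strictly decreasing ordinal labelling with values below `ω^α` off
`∅`, which forces `S_α^(ω^α) ⊆ {∅}`. A concatenation of two trees is labelled by the largest
natural sum of the labels of its two parts (natural, because both parts can grow), so unions of
`k` blocks of `S_β` get labels below `ω^β·k`, and a nonempty `F ∈ S_{β+1}` is such a union with
`k = min F`. At a limit, a nonempty `F ∈ S_α` lies in one of `S_{α_0}, …, S_{α_{min F}}` and gets
the largest of its labels there.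
-/

/-- The first uncountable ordinal `ω₁`. -/
noncomputable def omega1 : Ordinal := (Cardinal.aleph 1).ord

/-- `S, A` form a Schreier system: `S α` is the Schreier family of finite subsets
of `ℕ` (defined by the usual transfinite recursion, where at each countable limit
ordinal `α` the fixed increasing sequence `A α : ℕ → Ordinal` converging to `α`
is used). -/
def SchreierSystem (S : Ordinal → Set (Finset ℕ)) (A : Ordinal → ℕ → Ordinal) : Prop :=
  (S 0 = {F | ∃ n : ℕ, 1 ≤ n ∧ F = {n}} ∪ {∅}) ∧
  (S 1 = {F | ∀ n ∈ F, F.card ≤ n}) ∧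
  (∀ α : Ordinal, α + 1 < omega1 →
    S (α + 1) = {F | ∃ (k : ℕ) (Fs : Fin k → Finset ℕ),
      (∀ i, Fs i ∈ S α) ∧
      (∀ i j : Fin k, i < j → ∀ a ∈ Fs i, ∀ b ∈ Fs j, a < b) ∧
      (∀ i, ∀ a ∈ Fs i, k ≤ a) ∧
      F = Finset.univ.biUnion Fs}) ∧
  (∀ α : Ordinal, α < omega1 → Order.IsSuccLimit α →
    StrictMono (A α) ∧ (∀ n : ℕ, A α n < α) ∧ (∀ β < α, ∃ n : ℕ, β ≤ A α n) ∧
    S α = {F | ∃ n : ℕ, F ∈ S (A α n) ∧ ∀ a ∈ F, n ≤ a})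

/-- The derived tree of `(T, ⊆)`: remove all maximal elements. -/
def derivedFinsetTree (T : Set (Finset ℕ)) : Set (Finset ℕ) :=
  {F ∈ T | ∃ G ∈ T, F ⊂ G}

/-- Transfinite iterates of the derivation of the tree `(T, ⊆)`. -/
noncomputable def derivFinsetTreeIter (T : Set (Finset ℕ)) : Ordinal → Set (Finset ℕ) :=
  fun o =>
    Ordinal.limitRecOn o T (fun _ S => derivedFinsetTree S)
      (fun o _ ih => ⋂ (β : Ordinal) (h : β < o), ih β h)

/-- The order of the tree `(T, ⊆)`: the least `α` with `T^α = ∅`. -/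
noncomputable def finsetTreeOrder (T : Set (Finset ℕ)) : Ordinal :=
  sInf {o : Ordinal | derivFinsetTreeIter T o = ∅}

open Ordinal Order

namespace Ordinal

universe u

/-- Hessenberg's natural sum. -/
noncomputable def nadd : Ordinal.{u} → Ordinal.{u} → Ordinal.{u}
  | a, b => max (⨆ p : Set.Iio a, succ (nadd p.1 b)) (⨆ q : Set.Iio b, succ (nadd a q.1))
termination_by a b => (a, b)
decreasing_by
  · exact Prod.Lex.left _ _ p.2
  · exact Prod.Lex.right _ q.2

infixl:65 " ♯ " => nadd

theorem nadd_le_iff {a b c : Ordinal.{u}} :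
    a ♯ b ≤ c ↔ (∀ a' < a, a' ♯ b < c) ∧ ∀ b' < b, a ♯ b' < c := by
  rw [nadd, max_le_iff, Ordinal.iSup_le_iff, Ordinal.iSup_le_iff]
  simp only [succ_le_iff, Subtype.forall, Set.mem_Iio]

theorem nadd_strictMono_left (b : Ordinal.{u}) : StrictMono (· ♯ b) :=
  fun _ a h => (nadd_le_iff.1 (le_refl (a ♯ b))).1 _ h

theorem nadd_strictMono_right (a : Ordinal.{u}) : StrictMono (a ♯ ·) :=
  fun _ b h => (nadd_le_iff.1 (le_refl (a ♯ b))).2 _ h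

theorem nadd_le_nadd {a a' b b' : Ordinal.{u}} (ha : a' ≤ a) (hb : b' ≤ b) : a' ♯ b' ≤ a ♯ b :=
  ((nadd_strictMono_left b').monotone ha).trans ((nadd_strictMono_right a).monotone hb)

theorem nadd_lt_nadd_of_lt_of_le {a a' b b' : Ordinal.{u}} (ha : a' < a) (hb : b' ≤ b) :
    a' ♯ b' < a ♯ b :=
  (nadd_strictMono_left b' ha).trans_le ((nadd_strictMono_right a).monotone hb)

theorem nadd_lt_nadd_of_le_of_lt {a a' b b' : Ordinal.{u}} (ha : a' ≤ a) (hb : b' < b) :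
    a' ♯ b' < a ♯ b :=
  ((nadd_strictMono_left b').monotone ha).trans_lt (nadd_strictMono_right a hb)

theorem le_nadd_self (a b : Ordinal.{u}) : b ≤ a ♯ b :=
  (nadd_strictMono_right a).le_apply

theorem zero_nadd_zero : (0 : Ordinal.{u}) ♯ 0 = 0 :=
  nonpos_iff_eq_zero.1 <| nadd_le_iff.2
    ⟨fun _ h => (not_lt_zero h).elim, fun _ h => (not_lt_zero h).elim⟩

theorem exists_nat_mul_add_of_lt_mul_omega0 {δ a : Ordinal.{u}} (hδ : δ ≠ 0) (ha : a < δ * ω) :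
    ∃ (q : ℕ) (r : Ordinal), r < δ ∧ a = δ * q + r := by
  obtain ⟨q, hq⟩ := lt_omega0.1 ((lt_mul_iff_div_lt hδ).1 ha)
  exact ⟨q, a % δ, mod_lt a hδ, by rw [← hq, div_add_mod]⟩

theorem mul_nat_add_lt_mul_nat_add {δ u u' : Ordinal.{u}} {n n' : ℕ} (hn : n' < n)
    (hu' : u' < δ) : δ * n' + u' < δ * n + u :=
  calc δ * n' + u' < δ * n' + δ := (add_lt_add_iff_left _).2 hu'
    _ = δ * (n' + 1 : ℕ) := by push_cast; rw [mul_add_one]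
    _ ≤ δ * n := mul_le_mul_right (by exact_mod_cast hn) _
    _ ≤ δ * n + u := le_self_add

theorem mul_nat_add_lt_mul_omega0 {δ r : Ordinal.{u}} (q : ℕ) (hr : r < δ) :
    δ * q + r < δ * ω :=
  calc δ * q + r < δ * (q + 1 : ℕ) + 0 := mul_nat_add_lt_mul_nat_add (Nat.lt_succ_self q) hr
    _ ≤ δ * ω := by rw [add_zero]; exact mul_le_mul_right (natCast_lt_omega0 _).le _

theorem lt_or_eq_and_lt_of_mul_nat_add_lt {δ r r' : Ordinal.{u}} {q q' : ℕ} (hr : r < δ)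
    (h : δ * q' + r' < δ * q + r) : q' < q ∨ q' = q ∧ r' < r := by
  rcases lt_trichotomy q' q with hlt | rfl | hgt
  · exact Or.inl hlt
  · exact Or.inr ⟨rfl, (add_lt_add_iff_left _).1 h⟩
  · exact (h.trans (mul_nat_add_lt_mul_nat_add hgt hr)).false.elim

theorem nadd_mul_nat_add_le {δ r t : Ordinal.{u}} (hδ : ∀ a < δ, ∀ b < δ, a ♯ b < δ) (q s : ℕ)
    (hr : r < δ) (ht : t < δ) : (δ * q + r) ♯ (δ * s + t) ≤ δ * (q + s : ℕ) + (r ♯ t) := by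
  suffices ∀ x y : Ordinal.{u}, ∀ (q s : ℕ) (r t : Ordinal.{u}), r < δ → t < δ →
      x = δ * q + r → y = δ * s + t → x ♯ y ≤ δ * (q + s : ℕ) + (r ♯ t) from
    this _ _ q s r t hr ht rfl rfl
  have hδ0 : δ ≠ 0 := (pos_of_gt hr).ne'
  intro x
  induction x using WellFoundedLT.induction with
  | _ x IHx =>
  intro y
  induction y using WellFoundedLT.induction with
  | _ y IHy =>
  intro q s r t hr ht hx hy
  refine nadd_le_iff.2 ⟨fun x' hx' => ?_, fun y' hy' => ?_⟩
  · obtain ⟨q', r', hr', rfl⟩ := exists_nat_mul_add_of_lt_mul_omega0 hδ0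
      (lt_trans hx' (hx ▸ mul_nat_add_lt_mul_omega0 q hr))
    refine (IHx _ hx' y q' s r' t hr' ht rfl hy).trans_lt ?_
    rcases lt_or_eq_and_lt_of_mul_nat_add_lt hr (hx ▸ hx') with hq | ⟨rfl, hr⟩
    · exact mul_nat_add_lt_mul_nat_add (Nat.add_lt_add_right hq s) (hδ _ hr' _ ht)
    · exact (add_lt_add_iff_left _).2 (nadd_strictMono_left t hr)
  · obtain ⟨s', t', ht', rfl⟩ := exists_nat_mul_add_of_lt_mul_omega0 hδ0
      (lt_trans hy' (hy ▸ mul_nat_add_lt_mul_omega0 s ht))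
    refine (IHy _ hy' q s' r t' hr ht' hx rfl).trans_lt ?_
    rcases lt_or_eq_and_lt_of_mul_nat_add_lt ht (hy ▸ hy') with hs | ⟨rfl, ht⟩
    · exact mul_nat_add_lt_mul_nat_add (Nat.add_lt_add_left hs q) (hδ _ hr _ ht')
    · exact (add_lt_add_iff_left _).2 (nadd_strictMono_right r ht)

theorem nadd_lt_omega0_opow {e : Ordinal.{u}} : ∀ a < ω ^ e, ∀ b < ω ^ e, a ♯ b < ω ^ e := by
  induction e using WellFoundedLT.induction with
  | _ e IH =>
  rcases zero_or_succ_or_isSuccLimit e with rfl | ⟨d, rfl⟩ | hl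
  · simp only [opow_zero, Order.lt_one_iff]
    rintro a rfl b rfl
    rw [zero_nadd_zero]
  · intro a ha b hb
    rw [opow_succ] at ha hb ⊢
    have hδ0 : ω ^ d ≠ 0 := opow_ne_zero d omega0_ne_zero
    obtain ⟨q, r, hr, rfl⟩ := exists_nat_mul_add_of_lt_mul_omega0 hδ0 ha
    obtain ⟨s, t, ht, rfl⟩ := exists_nat_mul_add_of_lt_mul_omega0 hδ0 hb
    have hδ := IH d (lt_succ d)
    exact (nadd_mul_nat_add_le hδ q s hr ht).trans_lt (mul_nat_add_lt_mul_omega0 _ (hδ _ hr _ ht))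
  · intro a ha b hb
    obtain ⟨c₁, hc₁, ha⟩ := (lt_opow_of_isSuccLimit omega0_ne_zero hl).1 ha
    obtain ⟨c₂, hc₂, hb⟩ := (lt_opow_of_isSuccLimit omega0_ne_zero hl).1 hb
    have hc : max c₁ c₂ < e := max_lt hc₁ hc₂
    have ha' := ha.trans_le (opow_le_opow_right omega0_pos (le_max_left c₁ c₂))
    have hb' := hb.trans_le (opow_le_opow_right omega0_pos (le_max_right c₁ c₂))
    exact (IH _ hc a ha' b hb').trans_le (opow_le_opow_right omega0_pos hc.le)

theorem omega0_opow_nadd_mul_le (e : Ordinal.{u}) (m : ℕ) :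
    ω ^ e ♯ (ω ^ e * m) ≤ ω ^ e * (m + 1 : ℕ) := by
  have h := nadd_mul_nat_add_le nadd_lt_omega0_opow 1 m (opow_pos e omega0_pos)
    (opow_pos e omega0_pos)
  rwa [Nat.cast_one, mul_one, add_zero, add_zero, zero_nadd_zero, add_zero, add_comm 1 m] at h

end Ordinal

section DerivedTree

variable {T T' : Set (Finset ℕ)}

theorem derivFinsetTreeIter_zero (T : Set (Finset ℕ)) : derivFinsetTreeIter T 0 = T :=
  limitRecOn_zero _ _ _

theorem derivFinsetTreeIter_succ (T : Set (Finset ℕ)) (o : Ordinal) :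
    derivFinsetTreeIter T (o + 1) = derivedFinsetTree (derivFinsetTreeIter T o) :=
  limitRecOn_add_one _ _ _ _

theorem mem_derivFinsetTreeIter_of_isSuccLimit {o : Ordinal} (ho : IsSuccLimit o)
    {F : Finset ℕ} :
    F ∈ derivFinsetTreeIter T o ↔ ∀ β < o, F ∈ derivFinsetTreeIter T β := by
  rw [derivFinsetTreeIter, limitRecOn_limit _ _ _ _ ho]
  simp only [Set.mem_iInter]
  rfl

theorem derivFinsetTreeIter_antitone (T : Set (Finset ℕ)) : Antitone (derivFinsetTreeIter T) := by
  intro β o hβo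
  induction o using Ordinal.limitRecOn with
  | zero => rw [nonpos_iff_eq_zero.1 hβo]
  | add_one o IH =>
    rcases hβo.lt_or_eq with hβ | rfl
    · rw [derivFinsetTreeIter_succ]
      exact fun F hF => IH (lt_add_one_iff.1 hβ) hF.1
    · rfl
  | limit o ho IH =>
    rcases hβo.lt_or_eq with hβ | rfl
    · exact fun F hF => (mem_derivFinsetTreeIter_of_isSuccLimit ho).1 hF β hβ
    · rfl

theorem derivFinsetTreeIter_subset (T : Set (Finset ℕ)) (o : Ordinal) :
    derivFinsetTreeIter T o ⊆ T :=
  (derivFinsetTreeIter_antitone T (zero_le (a := o))).trans_eq (derivFinsetTreeIter_zero T)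

theorem mapsTo_derivFinsetTreeIter {φ : Finset ℕ → Finset ℕ} (hφ : Set.MapsTo φ T T')
    (hφ_mono : ∀ F ∈ T, ∀ G ∈ T, F ⊂ G → φ F ⊂ φ G) (o : Ordinal) :
    Set.MapsTo φ (derivFinsetTreeIter T o) (derivFinsetTreeIter T' o) := by
  induction o using Ordinal.limitRecOn with
  | zero => simpa only [derivFinsetTreeIter_zero] using hφ
  | add_one o IH =>
    simp only [derivFinsetTreeIter_succ]
    rintro F ⟨hF, G, hG, hFG⟩
    have hsub := derivFinsetTreeIter_subset T o
    exact ⟨IH hF, φ G, IH hG, hφ_mono F (hsub hF) G (hsub hG) hFG⟩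
  | limit o ho IH =>
    intro F hF
    rw [mem_derivFinsetTreeIter_of_isSuccLimit ho] at hF ⊢
    exact fun β hβ => IH β hβ (hF β hβ)

theorem derivFinsetTreeIter_mono (h : T ⊆ T') (o : Ordinal) :
    derivFinsetTreeIter T o ⊆ derivFinsetTreeIter T' o :=
  mapsTo_derivFinsetTreeIter (φ := id) h (fun _ _ _ _ h => h) o

theorem derivFinsetTreeIter_add (T : Set (Finset ℕ)) (a b : Ordinal) :
    derivFinsetTreeIter T (a + b) = derivFinsetTreeIter (derivFinsetTreeIter T a) b := by
  induction b using Ordinal.limitRecOn with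
  | zero => rw [add_zero, derivFinsetTreeIter_zero]
  | add_one b IH => rw [← add_assoc, derivFinsetTreeIter_succ, derivFinsetTreeIter_succ, IH]
  | limit b hb IH =>
    ext F
    rw [mem_derivFinsetTreeIter_of_isSuccLimit (isSuccLimit_add a hb),
      mem_derivFinsetTreeIter_of_isSuccLimit hb]
    constructor
    · intro hF β hβ
      rw [← IH β hβ]
      exact hF _ ((add_lt_add_iff_left a).2 hβ)
    · intro hF γ hγ
      rcases lt_or_ge γ a with hγa | haγ
      · exact derivFinsetTreeIter_antitone T hγa.le
          (derivFinsetTreeIter_subset _ _ (hF 0 hb.bot_lt))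
      · obtain ⟨β, rfl⟩ := exists_add_of_le haγ
        have hβ := (add_lt_add_iff_left a).1 hγ
        exact IH β hβ ▸ hF β hβ

theorem le_of_mem_derivFinsetTreeIter {v : Finset ℕ → Ordinal} (hv : StrictAntiOn v T)
    {o : Ordinal} {F : Finset ℕ} (hF : F ∈ derivFinsetTreeIter T o) : o ≤ v F := by
  induction o using Ordinal.limitRecOn generalizing F with
  | zero => exact zero_le
  | add_one o IH =>
    rw [derivFinsetTreeIter_succ] at hF
    obtain ⟨hF, G, hG, hFG⟩ := hF
    have hsub := derivFinsetTreeIter_subset T o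
    exact add_one_le_of_lt ((IH hG).trans_lt (hv (hsub hF) (hsub hG) hFG))
  | limit o ho IH =>
    by_contra! h
    have hlt := ho.add_one_lt h
    exact (lt_add_one (v F)).not_ge
      (IH _ hlt (derivFinsetTreeIter_antitone T hlt.le hF))

theorem finsetTreeOrder_eq_add_one {o : Ordinal} (h : derivFinsetTreeIter T o = {∅}) :
    finsetTreeOrder T = o + 1 := by
  have hempty : derivFinsetTreeIter T (o + 1) = ∅ := by
    rw [derivFinsetTreeIter_succ, h, Set.eq_empty_iff_forall_notMem]
    rintro F ⟨rfl, G, rfl, hss⟩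
    exact hss.ne rfl
  refine le_antisymm (csInf_le' hempty) (le_csInf ⟨_, hempty⟩ fun b hb => ?_)
  by_contra! hbo
  have h0 : ∅ ∈ derivFinsetTreeIter T o := h ▸ rfl
  have := derivFinsetTreeIter_antitone T (lt_add_one_iff.1 hbo) h0
  rwa [show derivFinsetTreeIter T b = ∅ from hb] at this

end DerivedTree

structure IsRankBelow (T : Set (Finset ℕ)) (v : Finset ℕ → Ordinal) (δ : Ordinal) : Prop where
  strictAntiOn : StrictAntiOn v T
  le : ∀ F ∈ T, v F ≤ δ
  lt : ∀ F ∈ T, F.Nonempty → v F < δ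

namespace IsRankBelow

variable {T : Set (Finset ℕ)} {v : Finset ℕ → Ordinal} {δ δ' : Ordinal}

theorem mono (hv : IsRankBelow T v δ) (hδ : δ ≤ δ') : IsRankBelow T v δ' :=
  ⟨hv.strictAntiOn, fun F hF => (hv.le F hF).trans hδ,
    fun F hF hne => (hv.lt F hF hne).trans_le hδ⟩

theorem derivFinsetTreeIter_subset_singleton (hv : IsRankBelow T v δ) :
    derivFinsetTreeIter T δ ⊆ {∅} := by
  intro F hF
  by_contra hne
  have hFT := derivFinsetTreeIter_subset T δ hF
  exact (hv.lt F hFT (Finset.nonempty_iff_ne_empty.2 hne)).not_ge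
    (le_of_mem_derivFinsetTreeIter hv.strictAntiOn hF)

open Classical in
theorem biUnion {ι : Type*} (s : Finset ι) {T : ι → Set (Finset ℕ)}
    {v : ι → Finset ℕ → Ordinal} (hT : ∀ i, IsLowerSet (T i))
    (hv : ∀ i ∈ s, IsRankBelow (T i) (v i) δ) :
    IsRankBelow (⋃ i ∈ s, T i) (fun F => s.sup fun i => if F ∈ T i then v i F else 0) δ := by
  refine ⟨?_, fun F _ => Finset.sup_le fun i hi => ?_, fun F hF hne => ?_⟩
  · intro F _ G hG hFG
    obtain ⟨j, hj, hGj⟩ := Set.mem_iUnion₂.1 hG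
    have hval : ∀ i ∈ s, G ∈ T i → v i G < s.sup fun i => if F ∈ T i then v i F else 0 := by
      intro i hi hGi
      have hFi := hT i hFG.le hGi
      refine ((hv i hi).strictAntiOn hFi hGi hFG).trans_le ?_
      exact (if_pos hFi).symm.le.trans
        (Finset.le_sup (f := fun i => if F ∈ T i then v i F else 0) hi)
    have hpos := (zero_le (a := v j G)).trans_lt (hval j hj hGj)
    refine (Finset.sup_lt_iff hpos).2 fun i hi => ?_
    split_ifs with hGi
    · exact hval i hi hGi
    · exact hpos
  · split_ifs with hFi
    · exact (hv i hi).le F hFi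
    · exact zero_le
  · obtain ⟨j, hj, hFj⟩ := Set.mem_iUnion₂.1 hF
    have hpos := (zero_le (a := v j F)).trans_lt ((hv j hj).lt F hFj hne)
    refine (Finset.sup_lt_iff hpos).2 fun i hi => ?_
    split_ifs with hFi
    · exact (hv i hi).lt F hFi hne
    · exact hpos

/-- Extending `F` can only lower `min F`, so the ranks of the increasing family `U` glue. -/
theorem of_forall_mem_min' {U : ℕ → Set (Finset ℕ)} {w : ℕ → Finset ℕ → Ordinal}
    {δ : ℕ → Ordinal} {Δ : Ordinal} (hU : ∀ p, IsLowerSet (U p))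
    (hw : ∀ p, IsRankBelow (U p) (w p) (δ p)) (hδ : ∀ p, δ p < Δ)
    (hw_mono : ∀ p q, p ≤ q → ∀ F ∈ U p, w p F ≤ w q F)
    (hT : ∀ F ∈ T, ∀ hF : F.Nonempty, F ∈ U (F.min' hF)) :
    IsRankBelow T (fun F => if hF : F.Nonempty then w (F.min' hF) F else Δ) Δ := by
  have hlt : ∀ F ∈ T, ∀ hF : F.Nonempty, w (F.min' hF) F < Δ :=
    fun F hFT hF => ((hw _).le F (hT F hFT hF)).trans_lt (hδ _)
  refine ⟨?_, fun F hF => ?_, fun F hF hne => by simpa only [dif_pos hne] using hlt F hF hne⟩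
  · intro F _ G hG hFG
    have hGne : G.Nonempty := Finset.nonempty_iff_ne_empty.2 (ne_bot_of_gt hFG)
    simp only [dif_pos hGne]
    by_cases hFne : F.Nonempty
    · simp only [dif_pos hFne]
      have hmin : G.min' hGne ≤ F.min' hFne := Finset.min'_le _ _ (hFG.le (F.min'_mem hFne))
      have hGU := hT G hG hGne
      have hFU := hU _ hFG.le hGU
      exact ((hw _).strictAntiOn hFU hGU hFG).trans_le (hw_mono _ _ hmin F hFU)
    · simpa only [dif_neg hFne] using hlt G hG hGne
  · split_ifs with hne
    · exact (hlt F hF hne).le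
    · exact le_rfl

end IsRankBelow

def Precedes (L R : Finset ℕ) : Prop := ∀ a ∈ L, ∀ b ∈ R, a < b

theorem Precedes.mono {L L' R R' : Finset ℕ} (h : Precedes L R) (hL : L' ⊆ L) (hR : R' ⊆ R) :
    Precedes L' R' :=
  fun a ha b hb => h a (hL ha) b (hR hb)

def restrictAbove (T : Set (Finset ℕ)) (n : ℕ) : Set (Finset ℕ) := {F | F ∈ T ∧ ∀ a ∈ F, n ≤ a}

def concat (T₁ T₂ : Set (Finset ℕ)) : Set (Finset ℕ) :=
  {H | ∃ L ∈ T₁, ∃ R ∈ T₂, Precedes L R ∧ L ∪ R = H}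

open Classical in
noncomputable def concatRank (T₁ T₂ : Set (Finset ℕ)) (v₁ v₂ : Finset ℕ → Ordinal)
    (H : Finset ℕ) : Ordinal :=
  ((H.powerset ×ˢ H.powerset).filter fun p =>
    p.1 ∈ T₁ ∧ p.2 ∈ T₂ ∧ Precedes p.1 p.2 ∧ p.1 ∪ p.2 = H).sup fun p => v₁ p.1 ♯ v₂ p.2

section Concat

variable {T T₁ T₂ : Set (Finset ℕ)} {v₁ v₂ : Finset ℕ → Ordinal}

theorem restrictAbove_anti (T : Set (Finset ℕ)) {m n : ℕ} (h : m ≤ n) :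
    restrictAbove T n ⊆ restrictAbove T m :=
  fun _ hF => ⟨hF.1, fun a ha => h.trans (hF.2 a ha)⟩

theorem restrictAbove_zero (T : Set (Finset ℕ)) : restrictAbove T 0 = T :=
  Set.ext fun _ => and_iff_left fun _ _ => Nat.zero_le _

theorem IsLowerSet.restrictAbove (hT : IsLowerSet T) (n : ℕ) : IsLowerSet (restrictAbove T n) :=
  fun _ _ hGF hF => ⟨hT hGF hF.1, fun a ha => hF.2 a (hGF ha)⟩

theorem IsLowerSet.concat (h₁ : IsLowerSet T₁) (h₂ : IsLowerSet T₂) :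
    IsLowerSet (concat T₁ T₂) := by
  rintro H G hGH ⟨L, hL, R, hR, hLR, rfl⟩
  refine ⟨L ∩ G, h₁ Finset.inter_subset_left hL, R ∩ G, h₂ Finset.inter_subset_left hR,
    hLR.mono Finset.inter_subset_left Finset.inter_subset_left, ?_⟩
  rw [← Finset.union_inter_distrib_right, Finset.inter_eq_right.2 hGH]

theorem le_concatRank {L R : Finset ℕ} (hL : L ∈ T₁) (hR : R ∈ T₂) (hLR : Precedes L R) :
    v₁ L ♯ v₂ R ≤ concatRank T₁ T₂ v₁ v₂ (L ∪ R) := by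
  classical
  refine Finset.le_sup (f := fun p : Finset ℕ × Finset ℕ => v₁ p.1 ♯ v₂ p.2) (b := (L, R)) ?_
  simp only [Finset.mem_filter, Finset.mem_product, Finset.mem_powerset, and_true]
  exact ⟨⟨Finset.subset_union_left, Finset.subset_union_right⟩, hL, hR, hLR⟩

theorem concatRank_le {H : Finset ℕ} {X : Ordinal}
    (h : ∀ L ∈ T₁, ∀ R ∈ T₂, Precedes L R → L ∪ R = H → v₁ L ♯ v₂ R ≤ X) :
    concatRank T₁ T₂ v₁ v₂ H ≤ X := by
  classical
  refine Finset.sup_le fun p hp => ?_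
  simp only [Finset.mem_filter] at hp
  exact h p.1 hp.2.1 p.2 hp.2.2.1 hp.2.2.2.1 hp.2.2.2.2

theorem concatRank_lt {H : Finset ℕ} {X : Ordinal} (hH : H ∈ concat T₁ T₂)
    (h : ∀ L ∈ T₁, ∀ R ∈ T₂, Precedes L R → L ∪ R = H → v₁ L ♯ v₂ R < X) :
    concatRank T₁ T₂ v₁ v₂ H < X := by
  classical
  obtain ⟨L, hL, R, hR, hLR, hH⟩ := hH
  refine (Finset.sup_lt_iff ((zero_le (a := v₁ L ♯ v₂ R)).trans_lt (h L hL R hR hLR hH))).2 ?_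
  simp only [Finset.mem_filter]
  exact fun p hp => h p.1 hp.2.1 p.2 hp.2.2.1 hp.2.2.2.1 hp.2.2.2.2

theorem concatRank_strictAntiOn (h₁ : IsLowerSet T₁) (h₂ : IsLowerSet T₂)
    (hv₁ : StrictAntiOn v₁ T₁) (hv₂ : StrictAntiOn v₂ T₂) :
    StrictAntiOn (concatRank T₁ T₂ v₁ v₂) (concat T₁ T₂) := by
  intro H _ H' hH' hHH'
  refine concatRank_lt hH' fun L hL R hR hLR hLRH' => ?_
  -- Cut the splitting `L ∪ R` of `H'` down to a splitting of `H`; one of the parts shrinks.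
  have hL' : L ∩ H ∈ T₁ := h₁ Finset.inter_subset_left hL
  have hR' : R ∩ H ∈ T₂ := h₂ Finset.inter_subset_left hR
  have hsplit : (L ∩ H) ∪ (R ∩ H) = H := by
    rw [← Finset.union_inter_distrib_right, hLRH', Finset.inter_eq_right.2 hHH'.le]
  refine lt_of_lt_of_le ?_ (hsplit ▸ le_concatRank hL' hR'
    (hLR.mono Finset.inter_subset_left Finset.inter_subset_left))
  by_cases hLs : L ∩ H = L
  · have hRs : R ∩ H ⊂ R := by
      refine Finset.inter_subset_left.ssubset_of_ne fun hRs => hHH'.ne ?_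
      rw [← hsplit, hLs, hRs, hLRH']
    exact nadd_lt_nadd_of_le_of_lt (congrArg v₁ hLs.symm).le (hv₂ hR' hR hRs)
  · exact nadd_lt_nadd_of_lt_of_le (hv₁ hL' hL (Finset.inter_subset_left.ssubset_of_ne hLs))
      (hv₂.antitoneOn hR' hR Finset.inter_subset_left)

theorem IsRankBelow.concat {a b : Ordinal} (h₁ : IsLowerSet T₁) (h₂ : IsLowerSet T₂)
    (hv₁ : IsRankBelow T₁ v₁ a) (hv₂ : IsRankBelow T₂ v₂ b) :
    IsRankBelow (concat T₁ T₂) (concatRank T₁ T₂ v₁ v₂) (a ♯ b) := by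
  refine ⟨concatRank_strictAntiOn h₁ h₂ hv₁.strictAntiOn hv₂.strictAntiOn,
    fun H _ => concatRank_le fun L hL R hR _ _ => nadd_le_nadd (hv₁.le L hL) (hv₂.le R hR),
    fun H hH hne => concatRank_lt hH fun L hL R hR _ hLR => ?_⟩
  rcases Finset.union_nonempty.1 (hLR ▸ hne) with hLne | hRne
  · exact nadd_lt_nadd_of_lt_of_le (hv₁.lt L hL hLne) (hv₂.le R hR)
  · exact nadd_lt_nadd_of_le_of_lt (hv₁.le L hL) (hv₂.lt R hR hRne)

theorem union_ssubset_union_of_disjoint {G R R' : Finset ℕ} (hR : R ⊂ R') (hG : Disjoint G R') :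
    G ∪ R ⊂ G ∪ R' := by
  refine Finset.ssubset_iff_subset_ne.2 ⟨Finset.union_subset_union_right hR.le, fun h => ?_⟩
  refine hR.ne (hR.le.antisymm fun x hx => ?_)
  have hx' : x ∈ G ∪ R := h ▸ Finset.mem_union_right G hx
  exact (Finset.mem_union.1 hx').resolve_left (Finset.disjoint_right.1 hG hx)

theorem derivFinsetTreeIter_subset_concat {a : Ordinal}
    (h : ∀ N, ∅ ∈ derivFinsetTreeIter (restrictAbove T₂ N) a) (b : Ordinal) :
    derivFinsetTreeIter T₁ b ⊆ derivFinsetTreeIter (concat T₁ T₂) (a + b) := by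
  rw [derivFinsetTreeIter_add]
  refine derivFinsetTreeIter_mono (fun G hG => ?_) b
  -- `G = G ∪ ∅`, and `G ∪ ·` embeds the part of `T₂` beyond `max G` into the concatenation.
  set N := G.sup id + 1
  have hGN : ∀ x ∈ G, x < N := fun x hx => Nat.lt_succ_of_le (Finset.le_sup (f := id) hx)
  have hdisj : ∀ R ∈ restrictAbove T₂ N, Disjoint G R :=
    fun R hR => Finset.disjoint_left.2 fun x hxG hxR => (hGN x hxG).not_ge (hR.2 x hxR)
  have hmaps : Set.MapsTo (G ∪ ·) (restrictAbove T₂ N) (concat T₁ T₂) :=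
    fun R hR => ⟨G, hG, R, hR.1, fun x hx y hy => (hGN x hx).trans_le (hR.2 y hy), rfl⟩
  simpa using mapsTo_derivFinsetTreeIter hmaps
    (fun R _ R' hR' hRR' => union_ssubset_union_of_disjoint hRR' (hdisj R' hR')) a (h N)

end Concat

def blocks (T : Set (Finset ℕ)) : ℕ → Set (Finset ℕ)
  | 0 => {∅}
  | m + 1 => concat T (blocks T m)

noncomputable def blocksRank (T : Set (Finset ℕ)) (v : Finset ℕ → Ordinal) :
    ℕ → Finset ℕ → Ordinal
  | 0 => fun _ => 0
  | m + 1 => concatRank T (blocks T m) v (blocksRank T v m)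

section Blocks

variable {T T' : Set (Finset ℕ)}

theorem Finset.biUnion_univ_fin_succ {m : ℕ} (Fs : Fin (m + 1) → Finset ℕ) :
    Finset.univ.biUnion Fs = Fs 0 ∪ Finset.univ.biUnion fun i : Fin m => Fs i.succ := by
  ext x
  simp [Fin.exists_fin_succ]

theorem mem_blocks_iff {m : ℕ} {H : Finset ℕ} :
    H ∈ blocks T m ↔ ∃ Fs : Fin m → Finset ℕ, (∀ i, Fs i ∈ T) ∧
      (∀ i j, i < j → Precedes (Fs i) (Fs j)) ∧ H = Finset.univ.biUnion Fs := by
  induction m generalizing H with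
  | zero => simp [blocks]
  | succ m IH =>
    constructor
    · rintro ⟨L, hL, R, hR, hLR, rfl⟩
      obtain ⟨Fs, hFs, hFs_lt, rfl⟩ := IH.1 hR
      refine ⟨Fin.cons L Fs, Fin.cases hL hFs, fun i j hij => ?_, ?_⟩
      · induction j using Fin.cases with
        | zero => exact absurd hij (Fin.not_lt_zero i)
        | succ j =>
          induction i using Fin.cases with
          | zero => exact hLR.mono le_rfl (Finset.subset_biUnion_of_mem _ (Finset.mem_univ j))
          | succ i => exact hFs_lt i j (Fin.succ_lt_succ_iff.1 hij)
      · simp [Finset.biUnion_univ_fin_succ]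
    · rintro ⟨Fs, hFs, hFs_lt, rfl⟩
      have hR := IH.2 ⟨_, fun i => hFs i.succ,
        fun i j hij => hFs_lt _ _ (Fin.succ_lt_succ_iff.2 hij), rfl⟩
      refine ⟨Fs 0, hFs 0, _, hR, fun a ha b hb => ?_, (Finset.biUnion_univ_fin_succ Fs).symm⟩
      obtain ⟨j, -, hb⟩ := Finset.mem_biUnion.1 hb
      exact hFs_lt 0 j.succ (Fin.succ_pos j) a ha b hb

theorem blocks_mono (h : T ⊆ T') : ∀ m, blocks T m ⊆ blocks T' m
  | 0 => le_rfl
  | m + 1 => fun _ ⟨L, hL, R, hR, hLR, hH⟩ => ⟨L, h hL, R, blocks_mono h m hR, hLR, hH⟩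

theorem blocks_restrictAbove_subset (n : ℕ) :
    ∀ m, blocks (restrictAbove T n) m ⊆ restrictAbove (blocks T m) n
  | 0 => fun _ hF => ⟨hF, by simp [Set.mem_singleton_iff.1 hF]⟩
  | m + 1 => by
    rintro _ ⟨L, hL, R, hR, hLR, rfl⟩
    have hR' := blocks_restrictAbove_subset n m hR
    refine ⟨⟨L, hL.1, R, hR'.1, hLR, rfl⟩, fun x hx => ?_⟩
    rcases Finset.mem_union.1 hx with hx | hx
    · exact hL.2 x hx
    · exact hR'.2 x hx

theorem IsLowerSet.blocks (hT : IsLowerSet T) : ∀ m, IsLowerSet (blocks T m)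
  | 0 => fun _ _ hGF hF => Finset.subset_empty.1 (Set.mem_singleton_iff.1 hF ▸ hGF)
  | m + 1 => hT.concat (IsLowerSet.blocks hT m)

theorem blocks_subset_blocks_succ (h0 : ∅ ∈ T) (v : Finset ℕ → Ordinal) (m : ℕ) :
    ∀ H ∈ blocks T m, H ∈ blocks T (m + 1) ∧ blocksRank T v m H ≤ blocksRank T v (m + 1) H := by
  intro H hH
  have hprec : Precedes ∅ H := fun _ h => absurd h (Finset.notMem_empty _)
  refine ⟨⟨∅, h0, H, hH, hprec, Finset.empty_union H⟩, ?_⟩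
  have := le_concatRank (v₁ := v) (v₂ := blocksRank T v m) h0 hH hprec
  rw [Finset.empty_union] at this
  exact (le_nadd_self (v ∅) _).trans this

theorem blocks_subset_blocks_of_le (h0 : ∅ ∈ T) (v : Finset ℕ → Ordinal) {p q : ℕ}
    (hpq : p ≤ q) :
    ∀ H ∈ blocks T p, H ∈ blocks T q ∧ blocksRank T v p H ≤ blocksRank T v q H := by
  induction q, hpq using Nat.le_induction with
  | base => exact fun H hH => ⟨hH, le_rfl⟩
  | succ q _ IH =>
    intro H hH
    obtain ⟨hHq, hle⟩ := IH H hH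
    obtain ⟨hHq', hle'⟩ := blocks_subset_blocks_succ h0 v q H hHq
    exact ⟨hHq', hle.trans hle'⟩

theorem isRankBelow_blocksRank {v : Finset ℕ → Ordinal} {e : Ordinal} (hT : IsLowerSet T)
    (hv : IsRankBelow T v (ω ^ e)) :
    ∀ m : ℕ, IsRankBelow (blocks T m) (blocksRank T v m) (ω ^ e * m)
  | 0 => by
    refine ⟨fun F hF G hG hFG => ?_, fun _ _ => by simp [blocksRank], fun F hF hne => ?_⟩
    · rw [blocks, Set.mem_singleton_iff] at hF hG
      exact absurd (hF.trans hG.symm) hFG.ne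
    · exact absurd (Set.mem_singleton_iff.1 hF) hne.ne_empty
  | m + 1 => (hv.concat hT (hT.blocks m) (isRankBelow_blocksRank hT hv m)).mono
      (omega0_opow_nadd_mul_le e m)

theorem empty_mem_derivFinsetTreeIter_blocks {δ : Ordinal}
    (h : ∀ N, ∅ ∈ derivFinsetTreeIter (restrictAbove T N) δ) :
    ∀ m k : ℕ, ∅ ∈ derivFinsetTreeIter (blocks (restrictAbove T k) m) (δ * m)
  | 0, _ => by simp [blocks, derivFinsetTreeIter_zero]
  | m + 1, k => by
    have hsub : ∀ N, blocks (restrictAbove T (max k N)) m ⊆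
        restrictAbove (blocks (restrictAbove T k) m) N := fun N =>
      (blocks_mono (T' := restrictAbove (restrictAbove T k) N)
        (fun F hF => ⟨restrictAbove_anti T (le_max_left k N) hF,
          fun a ha => (le_max_right k N).trans (hF.2 a ha)⟩) m).trans
        (blocks_restrictAbove_subset N m)
    rw [Nat.cast_succ, mul_add_one]
    exact derivFinsetTreeIter_subset_concat
      (fun N => derivFinsetTreeIter_mono (hsub N) _ (empty_mem_derivFinsetTreeIter_blocks h m _))
      δ (h k)

end Blocks

theorem Ordinal.forall_lt_induction {c : Ordinal} {P : Ordinal → Prop} (zero : P 0)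
    (succ : ∀ β, β + 1 < c → P β → P (β + 1))
    (limit : ∀ α < c, IsSuccLimit α → (∀ β < α, P β) → P α) : ∀ α < c, P α := by
  intro α
  induction α using Ordinal.limitRecOn with
  | zero => exact fun _ => zero
  | add_one β IH => exact fun hβ => succ β hβ (IH ((lt_add_one β).trans hβ))
  | limit α hα IH => exact fun hαc => limit α hαc hα fun β hβ => IH β hβ (hβ.trans hαc)

namespace SchreierSystem

variable {S : Ordinal → Set (Finset ℕ)} {A : Ordinal → ℕ → Ordinal}

theorem succ_eq (h : SchreierSystem S A) {β : Ordinal} (hβ : β + 1 < omega1) :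
    S (β + 1) = ⋃ k, blocks (restrictAbove (S β) k) k := by
  rw [h.2.2.1 β hβ]
  ext F
  simp only [Set.mem_ofPred_eq, Set.mem_iUnion, mem_blocks_iff]
  constructor
  · rintro ⟨k, Fs, hS, hlt, hk, rfl⟩
    exact ⟨k, Fs, fun i => ⟨hS i, hk i⟩, hlt, rfl⟩
  · rintro ⟨k, Fs, hS, hlt, rfl⟩
    exact ⟨k, Fs, fun i => (hS i).1, hlt, fun i => (hS i).2, rfl⟩

theorem limit_eq (h : SchreierSystem S A) {α : Ordinal} (hα : α < omega1)
    (hl : IsSuccLimit α) : S α = ⋃ n, restrictAbove (S (A α n)) n := by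
  rw [(h.2.2.2 α hα hl).2.2.2]
  ext F
  simp [restrictAbove]

theorem mem_zero_iff (h : SchreierSystem S A) {F : Finset ℕ} :
    F ∈ S 0 ↔ (∃ n, 1 ≤ n ∧ F = {n}) ∨ F = ∅ := by
  rw [h.1]
  rfl

theorem isLowerSet (h : SchreierSystem S A) : ∀ α < omega1, IsLowerSet (S α) := by
  refine Ordinal.forall_lt_induction (fun F G hGF hF => ?_) (fun β hβ IH => ?_)
    (fun α hα hl IH => ?_)
  · rcases h.mem_zero_iff.1 hF with ⟨n, hn, rfl⟩ | rfl
    · rcases Finset.subset_singleton_iff.1 hGF with rfl | rfl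
      · exact h.mem_zero_iff.2 (Or.inr rfl)
      · exact hF
    · exact h.mem_zero_iff.2 (Or.inr (Finset.subset_empty.1 hGF))
  · rw [h.succ_eq hβ]
    exact isLowerSet_iUnion fun k => (IH.restrictAbove k).blocks k
  · rw [h.limit_eq hα hl]
    exact isLowerSet_iUnion fun n => (IH _ ((h.2.2.2 α hα hl).2.1 n)).restrictAbove n

theorem empty_mem_derivFinsetTreeIter_succ (h : SchreierSystem S A) {β : Ordinal}
    (hβ : β + 1 < omega1) (IH : ∀ n, ∅ ∈ derivFinsetTreeIter (restrictAbove (S β) n) (ω ^ β))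
    (n : ℕ) : ∅ ∈ derivFinsetTreeIter (restrictAbove (S (β + 1)) n) (ω ^ (β + 1)) := by
  rw [mem_derivFinsetTreeIter_of_isSuccLimit
    (isSuccLimit_opow_left isSuccLimit_omega0 (by simp))]
  intro γ hγ
  rw [opow_add_one] at hγ
  obtain ⟨c, hc, hγc⟩ := (lt_mul_iff_of_isSuccLimit isSuccLimit_omega0).1 hγ
  obtain ⟨m, rfl⟩ := lt_omega0.1 hc
  have hsub : blocks (restrictAbove (S β) (max m n)) m ⊆ restrictAbove (S (β + 1)) n := by
    intro F hF
    refine ⟨?_, fun a ha => (le_max_right m n).trans ((blocks_restrictAbove_subset _ m hF).2 a ha)⟩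
    rw [h.succ_eq hβ]
    exact Set.mem_iUnion.2 ⟨m, blocks_mono (restrictAbove_anti _ (le_max_left m n)) m hF⟩
  exact derivFinsetTreeIter_antitone _ hγc.le
    (derivFinsetTreeIter_mono hsub _ (empty_mem_derivFinsetTreeIter_blocks IH m _))

theorem empty_mem_derivFinsetTreeIter_limit (h : SchreierSystem S A) {α : Ordinal}
    (hα : α < omega1) (hl : IsSuccLimit α)
    (IH : ∀ i n, ∅ ∈ derivFinsetTreeIter (restrictAbove (S (A α i)) n) (ω ^ A α i)) (n : ℕ) :
    ∅ ∈ derivFinsetTreeIter (restrictAbove (S α) n) (ω ^ α) := by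
  rw [mem_derivFinsetTreeIter_of_isSuccLimit (isSuccLimit_opow_left isSuccLimit_omega0 hl.ne_bot)]
  intro γ hγ
  obtain ⟨β, hβ, hγβ⟩ := (lt_opow_of_isSuccLimit omega0_ne_zero hl).1 hγ
  obtain ⟨i, hi⟩ := (h.2.2.2 α hα hl).2.2.1 β hβ
  have hsub : restrictAbove (S (A α i)) (max n i) ⊆ restrictAbove (S α) n := by
    intro F hF
    refine ⟨?_, fun a ha => (le_max_left n i).trans (hF.2 a ha)⟩
    rw [h.limit_eq hα hl]
    exact Set.mem_iUnion.2 ⟨i, hF.1, fun a ha => (le_max_right n i).trans (hF.2 a ha)⟩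
  exact derivFinsetTreeIter_antitone _ (hγβ.le.trans (opow_le_opow_right omega0_pos hi))
    (derivFinsetTreeIter_mono hsub _ (IH i _))

theorem empty_mem_derivFinsetTreeIter (h : SchreierSystem S A) :
    ∀ α < omega1, ∀ n, ∅ ∈ derivFinsetTreeIter (restrictAbove (S α) n) (ω ^ α) := by
  refine Ordinal.forall_lt_induction (fun n => ?_)
    (fun β hβ IH => h.empty_mem_derivFinsetTreeIter_succ hβ IH)
    (fun α hα hl IH => h.empty_mem_derivFinsetTreeIter_limit hα hl
      fun i => IH _ ((h.2.2.2 α hα hl).2.1 i))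
  rw [opow_zero, ← zero_add 1, derivFinsetTreeIter_succ, derivFinsetTreeIter_zero]
  refine ⟨⟨h.mem_zero_iff.2 (Or.inr rfl), by simp⟩, {n + 1},
    ⟨h.mem_zero_iff.2 (Or.inl ⟨n + 1, by omega, rfl⟩), by simp⟩,
    (Finset.singleton_nonempty _).empty_ssubset⟩

theorem empty_mem (h : SchreierSystem S A) {α : Ordinal} (hα : α < omega1) : ∅ ∈ S α := by
  simpa [restrictAbove_zero] using
    derivFinsetTreeIter_subset _ _ (h.empty_mem_derivFinsetTreeIter α hα 0)

theorem exists_isRankBelow_succ (h : SchreierSystem S A) {β : Ordinal} (hβ : β + 1 < omega1)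
    {v : Finset ℕ → Ordinal} (hv : IsRankBelow (S β) v (ω ^ β)) :
    ∃ w, IsRankBelow (S (β + 1)) w (ω ^ (β + 1)) := by
  have hSβ := h.isLowerSet β ((lt_add_one β).trans hβ)
  have h0 := h.empty_mem ((lt_add_one β).trans hβ)
  refine ⟨_, IsRankBelow.of_forall_mem_min' hSβ.blocks (isRankBelow_blocksRank hSβ hv)
    (fun p => ?_) (fun p q hpq F hF => (blocks_subset_blocks_of_le h0 v hpq F hF).2)
    fun F hF hne => ?_⟩
  · rw [opow_add_one]
    exact mul_lt_mul_of_pos_left (natCast_lt_omega0 p) (opow_pos β omega0_pos)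
  · rw [h.succ_eq hβ, Set.mem_iUnion] at hF
    obtain ⟨k, hk⟩ := hF
    have hkF : k ≤ F.min' hne := (blocks_restrictAbove_subset k k hk).2 _ (F.min'_mem hne)
    exact (blocks_subset_blocks_of_le h0 v hkF F (blocks_mono (fun G hG => hG.1) k hk)).1

theorem exists_isRankBelow_limit (h : SchreierSystem S A) {α : Ordinal} (hα : α < omega1)
    (hl : IsSuccLimit α) (IH : ∀ m, ∃ v, IsRankBelow (S (A α m)) v (ω ^ A α m)) :
    ∃ w, IsRankBelow (S α) w (ω ^ α) := by
  obtain ⟨hA_mono, hA_lt, -, -⟩ := h.2.2.2 α hα hl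
  choose v hv using IH
  have hS m : IsLowerSet (S (A α m)) := h.isLowerSet (A α m) ((hA_lt m).trans hα)
  have hv_le {m p : ℕ} (hm : m ∈ Finset.range (p + 1)) :
      IsRankBelow (S (A α m)) (v m) (ω ^ A α p) :=
    (hv m).mono (opow_le_opow_right omega0_pos
      (hA_mono.monotone (Nat.lt_succ_iff.1 (Finset.mem_range.1 hm))))
  refine ⟨_, IsRankBelow.of_forall_mem_min' (U := fun p => ⋃ m ∈ Finset.range (p + 1), S (A α m))
    (fun p => isLowerSet_iUnion₂ fun m _ => hS m) (fun p => IsRankBelow.biUnion _ hS fun m => hv_le)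
    (fun p => (opow_lt_opow_iff_right one_lt_omega0).2 (hA_lt p))
    (fun p q hpq F _ => Finset.sup_mono (Finset.range_subset_range.2 (by omega)))
    fun F hF hne => ?_⟩
  rw [h.limit_eq hα hl, Set.mem_iUnion] at hF
  obtain ⟨n, hn, hnF⟩ := hF
  exact Set.mem_iUnion₂.2 ⟨n, Finset.mem_range.2 (Nat.lt_succ_of_le (hnF _ (F.min'_mem hne))), hn⟩

theorem exists_isRankBelow (h : SchreierSystem S A) :
    ∀ α < omega1, ∃ v, IsRankBelow (S α) v (ω ^ α) := by
  refine Ordinal.forall_lt_induction ?_ (fun β hβ ⟨v, hv⟩ => h.exists_isRankBelow_succ hβ hv)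
    (fun α hα hl IH => h.exists_isRankBelow_limit hα hl fun m => IH _ ((h.2.2.2 α hα hl).2.1 m))
  classical
  refine ⟨fun F => if F.Nonempty then 0 else 1, ⟨?_, fun F _ => ?_, fun F _ hF => ?_⟩⟩
  · intro F _ G hG hFG
    rcases h.mem_zero_iff.1 hG with ⟨n, -, rfl⟩ | rfl
    · simp [Finset.ssubset_singleton_iff.1 hFG]
    · exact absurd hFG (Finset.not_ssubset_empty F)
  · split_ifs <;> simp
  · simp [hF]

end SchreierSystem

/-- The order of the tree `Tree(S_α) = (S_α, ⊆)` of Schreier sets is `ω^α + 1`. -/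
theorem order_tree_schreier
    (S : Ordinal → Set (Finset ℕ)) (A : Ordinal → ℕ → Ordinal)
    (h : SchreierSystem S A) :
    ∀ α < omega1, finsetTreeOrder (S α) = Ordinal.omega0 ^ α + 1 := by
  intro α hα
  obtain ⟨v, hv⟩ := h.exists_isRankBelow α hα
  refine finsetTreeOrder_eq_add_one (hv.derivFinsetTreeIter_subset_singleton.antisymm ?_)
  simpa [restrictAbove_zero] using h.empty_mem_derivFinsetTreeIter α hα 0
end

section
/- For any admissible enumeration (χ_{F_i})_{i=0}^∞ of the node functions B = {χ_F : F ∈ S_α}, the sequence (χ_{F_i}) is a monotone Schauder basis for C(ω^{ω^α}), identified with the space C(S_α) of continuous functions on the compact space S_α ⊆ {0,1}^ℕ of Schreier sets with the pointwise topology. -/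
open scoped Classical

/-- `F ≼ G`: `F` is an initial segment of `G`, i.e. `G ∩ {1,…,max F} = F`. -/
def FinsetInitSeg (F G : Finset ℕ) : Prop :=
  F ⊆ G ∧ ∀ n ∈ G, n ∉ F → ∀ m ∈ F, m < n

/-- `S_α`, identified with `{1_F : F ∈ S_α} ⊆ {0,1}^ℕ`, carries the topology of
pointwise convergence; it is homeomorphic to the ordinal interval `[1, ω^{ω^α}]`,
so bounded continuous functions on it form the space `C(ω^{ω^α})`. -/
instance schreierTop (Sa : Set (Finset ℕ)) : TopologicalSpace {F : Finset ℕ // F ∈ Sa} :=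
  TopologicalSpace.induced (fun F => (fun n => (decide (n ∈ F.1) : Bool))) inferInstance

/-! The value of `∑ i < n, a i • χ (E i)` at `G` is the sum of the `a i` over those nodes `E i`,
`i < n`, that are initial segments of `G`. By admissibility these are exactly the nodes below the
deepest one, `E j`, so the `n`-th partial sum takes at `G` the value that it, and also the
`(n + 1)`-st partial sum, takes at `E j`: this is monotonicity. Evaluating at the nodes turns an
expansion of `g` into a unitriangular system; for its solution the `n`-th partial sum at `G` is
`g (E j)`. Convergence is uniform because `S_α` is compact (by transfinite induction it is a tree
without infinite branches, hence closed in `{0,1}^ℕ`), so up to `ε` the function `g` only sees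
`G ∩ [0, M)`, which is itself a node, one of the first `n` when `n` is large. -/

open Filter Topology

local infix:50 " ≼ " => FinsetInitSeg

namespace FinsetInitSeg

variable {F G H : Finset ℕ}

theorem refl (F : Finset ℕ) : F ≼ F :=
  ⟨subset_rfl, fun _ hn hn' _ _ => absurd hn hn'⟩

theorem empty_left (F : Finset ℕ) : ∅ ≼ F :=
  ⟨Finset.empty_subset F, fun _ _ _ _ hm => absurd hm (Finset.notMem_empty _)⟩

theorem trans (h₁ : F ≼ G) (h₂ : G ≼ H) : F ≼ H := by
  refine ⟨h₁.1.trans h₂.1, fun n hn hnF m hm => ?_⟩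
  by_cases hG : n ∈ G
  · exact h₁.2 n hG hnF m hm
  · exact h₂.2 n hn hG m (h₁.1 hm)

theorem of_subset (h : F ≼ H) (hFG : F ⊆ G) (hGH : G ⊆ H) : F ≼ G :=
  ⟨hFG, fun n hn hnF m hm => h.2 n (hGH hn) hnF m hm⟩

theorem total (hF : F ≼ H) (hG : G ≼ H) : F ≼ G ∨ G ≼ F := by
  by_cases hFG : F ⊆ G
  · exact .inl (hF.of_subset hFG hG.1)
  · obtain ⟨a, haF, haG⟩ := Finset.not_subset.mp hFG
    refine .inr (hG.of_subset (fun b hb => ?_) hF.1)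
    by_contra hbF
    exact lt_asymm (hG.2 a (hF.1 haF) haG b hb) (hF.2 b (hG.1 hb) hbF a haF)

theorem inter_left {B : Finset ℕ} (h : G ≼ F) (hB : B ⊆ F) : B ∩ G ≼ B :=
  ⟨Finset.inter_subset_left, fun n hn hn' m hm =>
    h.2 n (hB hn) (fun hnG => hn' (Finset.mem_inter.mpr ⟨hn, hnG⟩)) m
      (Finset.mem_inter.mp hm).2⟩

end FinsetInitSeg

noncomputable def truncate (N : Set ℕ) (m : ℕ) : Finset ℕ :=
  (Finset.range m).filter (· ∈ N)

theorem mem_truncate {N : Set ℕ} {m n : ℕ} : n ∈ truncate N m ↔ n < m ∧ n ∈ N := by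
  simp [truncate]

theorem truncate_initSeg {N : Set ℕ} {m : ℕ} {F : Finset ℕ} (hFN : ↑F ⊆ N)
    (hF : truncate N m ⊆ F) : truncate N m ≼ F := by
  refine ⟨hF, fun n hn hn' k hk => ?_⟩
  have hnm : ¬ n < m := fun h => hn' (mem_truncate.mpr ⟨h, hFN hn⟩)
  have := (mem_truncate.mp hk).1
  omega

theorem truncate_initSeg_truncate (N : Set ℕ) {m m' : ℕ} (h : m ≤ m') :
    truncate N m ≼ truncate N m' :=
  truncate_initSeg (fun _ hn => (mem_truncate.mp hn).2)
    (fun _ hn => mem_truncate.mpr ⟨(mem_truncate.mp hn).1.trans_le h, (mem_truncate.mp hn).2⟩)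

theorem truncate_coe_initSeg (G : Finset ℕ) (m : ℕ) : truncate (↑G) m ≼ G :=
  truncate_initSeg subset_rfl fun _ hn => (mem_truncate.mp hn).2

theorem eventually_mem_truncate {N : Set ℕ} {n : ℕ} (hn : n ∈ N) :
    ∀ᶠ m in atTop, n ∈ truncate N m :=
  (eventually_gt_atTop n).mono fun _ hm => mem_truncate.mpr ⟨hm, hn⟩

def InitSegClosed (T : Set (Finset ℕ)) : Prop :=
  ∀ F ∈ T, ∀ G, G ≼ F → G ∈ T

/-- For `T` closed under initial segments: `T`, as a tree under `≼`, has no infinite branch. -/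
def NoInfiniteBranch (T : Set (Finset ℕ)) : Prop :=
  ∀ N : Set ℕ, N.Infinite → ∀ᶠ m in atTop, truncate N m ∉ T

def IsSuccessiveUnion (T : Set (Finset ℕ)) (k : ℕ) (F : Finset ℕ) : Prop :=
  ∃ Fs : Fin k → Finset ℕ, (∀ i, Fs i ∈ T) ∧
    (∀ i j : Fin k, i < j → ∀ a ∈ Fs i, ∀ b ∈ Fs j, a < b) ∧
    F = Finset.univ.biUnion Fs

def schreierSucc (T : Set (Finset ℕ)) : Set (Finset ℕ) :=
  {F | ∃ (k : ℕ) (Fs : Fin k → Finset ℕ),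
      (∀ i, Fs i ∈ T) ∧
      (∀ i j : Fin k, i < j → ∀ a ∈ Fs i, ∀ b ∈ Fs j, a < b) ∧
      (∀ i, ∀ a ∈ Fs i, k ≤ a) ∧
      F = Finset.univ.biUnion Fs}

def schreierLimit (T : ℕ → Set (Finset ℕ)) : Set (Finset ℕ) :=
  {F | ∃ n : ℕ, F ∈ T n ∧ ∀ a ∈ F, n ≤ a}

theorem SchreierSystem.induction {S : Ordinal → Set (Finset ℕ)}
    {A : Ordinal → ℕ → Ordinal}
    (h : SchreierSystem S A) (P : Set (Finset ℕ) → Prop) (zero : P (S 0))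
    (succ : ∀ T, P T → P (schreierSucc T))
    (limit : ∀ T : ℕ → Set (Finset ℕ), (∀ n, P (T n)) → P (schreierLimit T)) :
    ∀ α < omega1, P (S α) := by
  intro α
  induction α using WellFoundedLT.induction with
  | _ α IH =>
    intro hα
    rcases Ordinal.zero_or_succ_or_isSuccLimit α with rfl | ⟨β, rfl⟩ | hlim
    · exact zero
    · rw [Order.succ_eq_add_one] at hα ⊢
      rw [h.2.2.1 β hα]
      have hβ : β < β + 1 := Order.succ_eq_add_one β ▸ Order.lt_succ β
      exact succ _ (IH β hβ (hβ.trans hα))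
    · obtain ⟨-, hlt, -, hS⟩ := h.2.2.2 α hα hlim
      rw [hS]
      exact limit _ fun n => IH _ (hlt n) ((hlt n).trans hα)

theorem initSegClosed_of_card_le_one {T : Set (Finset ℕ)} (hemp : ∅ ∈ T)
    (hcard : ∀ F ∈ T, F.card ≤ 1) : InitSegClosed T := by
  intro F hF G hG
  rcases G.eq_empty_or_nonempty with rfl | hne
  · exact hemp
  · rwa [Finset.eq_of_subset_of_card_le hG.1 ((hcard F hF).trans hne.card_pos)]

theorem noInfiniteBranch_of_card_le_one {T : Set (Finset ℕ)} (hcard : ∀ F ∈ T, F.card ≤ 1) :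
    NoInfiniteBranch T := by
  intro N hN
  obtain ⟨a, ha, b, hb, hab⟩ := hN.nontrivial
  filter_upwards [eventually_mem_truncate ha, eventually_mem_truncate hb] with m ham hbm hT
  exact (Finset.one_lt_card.mpr ⟨a, ham, b, hbm, hab⟩).not_ge (hcard _ hT)

theorem InitSegClosed.schreierSucc {T : Set (Finset ℕ)} (hT : InitSegClosed T) :
    InitSegClosed (schreierSucc T) := by
  rintro F ⟨k, Fs, hmem, hsucc, hmin, rfl⟩ G hG
  refine ⟨k, fun i => Fs i ∩ G, fun i => hT _ (hmem i) _ (hG.inter_left ?_),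
    fun i j hij a ha b hb =>
      hsucc i j hij a (Finset.mem_inter.mp ha).1 b (Finset.mem_inter.mp hb).1,
    fun i a ha => hmin i a (Finset.mem_inter.mp ha).1, ?_⟩
  · exact Finset.subset_biUnion_of_mem Fs (Finset.mem_univ i)
  · rw [← Finset.biUnion_inter, Finset.inter_eq_right.mpr hG.1]

theorem InitSegClosed.schreierLimit {T : ℕ → Set (Finset ℕ)}
    (hT : ∀ n, InitSegClosed (T n)) :
    InitSegClosed (schreierLimit T) := by
  rintro F ⟨n, hF, hmin⟩ G hG
  exact ⟨n, hT n F hF G hG, fun a ha => hmin a (hG.1 ha)⟩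

theorem IsSuccessiveUnion.exists_initSeg {T : Set (Finset ℕ)} {j : ℕ} {F : Finset ℕ}
    (hF : IsSuccessiveUnion T (j + 1) F) :
    ∃ B ∈ T, B ≼ F ∧ IsSuccessiveUnion T j (F \ B) := by
  obtain ⟨Fs, hmem, hsucc, rfl⟩ := hF
  have hsub : ∀ i, Fs i ⊆ Finset.univ.biUnion Fs :=
    fun i => Finset.subset_biUnion_of_mem Fs (Finset.mem_univ i)
  refine ⟨Fs 0, hmem 0, ⟨hsub 0, fun n hn hn0 m hm => ?_⟩,
    fun i => Fs i.succ, fun i => hmem _,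
    fun i i' hii' => hsucc _ _ (Fin.succ_lt_succ_iff.mpr hii'), ?_⟩
  · obtain ⟨i, -, hni⟩ := Finset.mem_biUnion.mp hn
    have hi : i ≠ 0 := by rintro rfl; exact hn0 hni
    exact hsucc 0 i (Fin.pos_iff_ne_zero.mpr hi) m hm n hni
  · ext a
    simp only [Finset.mem_sdiff, Finset.mem_biUnion, Finset.mem_univ, true_and]
    constructor
    · rintro ⟨⟨i, hai⟩, ha0⟩
      obtain ⟨i, rfl⟩ := Fin.exists_succ_eq.mpr (show i ≠ 0 by rintro rfl; exact ha0 hai)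
      exact ⟨i, hai⟩
    · rintro ⟨i, hai⟩
      exact ⟨⟨_, hai⟩, fun ha0 => lt_irrefl a (hsucc 0 i.succ (Fin.succ_pos i) a ha0 a hai)⟩

theorem NoInfiniteBranch.isSuccessiveUnion {T : Set (Finset ℕ)} (hT : InitSegClosed T)
    (hnb : NoInfiniteBranch T) (j : ℕ) : NoInfiniteBranch {F | IsSuccessiveUnion T j F} := by
  induction j with
  | zero =>
    intro N hN
    obtain ⟨a, ha⟩ := hN.nonempty
    filter_upwards [eventually_mem_truncate ha] with m ham hF
    obtain ⟨Fs, -, -, hF⟩ := hF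
    simp [hF] at ham
  | succ j IH =>
    intro N hN
    obtain ⟨s, hs⟩ := (hnb N hN).exists
    have hrest := (eventually_all_finset (Finset.range s).powerset).mpr
      fun B _ => IH (N \ ↑B) (hN.sdiff B.finite_toSet)
    filter_upwards [hrest, eventually_ge_atTop s] with m hm hsm hF
    obtain ⟨B, hBT, hB, hrestB⟩ := IsSuccessiveUnion.exists_initSeg hF
    -- `B` cannot contain the truncation at `s`, which lies outside `T`
    have hBs : B ⊆ Finset.range s := by
      rcases hB.total (truncate_initSeg_truncate N hsm) with hBs | hsB
      · exact hBs.1.trans (Finset.filter_subset _ _)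
      · exact absurd (hT B hBT _ hsB) hs
    refine hm B (Finset.mem_powerset.mpr hBs) ?_
    convert hrestB using 1
    ext n
    simp only [mem_truncate, Finset.mem_sdiff, Set.mem_sdiff, Finset.mem_coe]
    tauto

theorem NoInfiniteBranch.schreierSucc {T : Set (Finset ℕ)} (hT : InitSegClosed T)
    (hnb : NoInfiniteBranch T) : NoInfiniteBranch (schreierSucc T) := by
  intro N hN
  obtain ⟨a, ha⟩ := hN.nonempty
  have hblocks := (eventually_all_finset (Finset.range (a + 1))).mpr
    fun k _ => hnb.isSuccessiveUnion hT k N hN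
  filter_upwards [hblocks, eventually_mem_truncate ha] with m hm ham hF
  obtain ⟨k, Fs, hmem, hsucc, hmin, hF⟩ := hF
  obtain ⟨i, -, hai⟩ := Finset.mem_biUnion.mp (hF ▸ ham)
  exact hm k (Finset.mem_range.mpr (Nat.lt_succ_of_le (hmin i a hai))) ⟨Fs, hmem, hsucc, hF⟩

theorem NoInfiniteBranch.schreierLimit {T : ℕ → Set (Finset ℕ)}
    (hnb : ∀ n, NoInfiniteBranch (T n)) :
    NoInfiniteBranch (schreierLimit T) := by
  intro N hN
  obtain ⟨a, ha⟩ := hN.nonempty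
  have hall := (eventually_all_finset (Finset.range (a + 1))).mpr fun n _ => hnb n N hN
  filter_upwards [hall, eventually_mem_truncate ha] with m hm ham hF
  obtain ⟨n, hn, hmin⟩ := hF
  exact hm n (Finset.mem_range.mpr (Nat.lt_succ_of_le (hmin a ham))) hn

theorem SchreierSystem.initSegClosed_and_noInfiniteBranch {S : Ordinal → Set (Finset ℕ)}
    {A : Ordinal → ℕ → Ordinal} (h : SchreierSystem S A) {α : Ordinal} (hα : α < omega1) :
    InitSegClosed (S α) ∧ NoInfiniteBranch (S α) := by
  have hcard : ∀ F ∈ S 0, F.card ≤ 1 := by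
    rw [h.1]
    rintro F (⟨n, -, rfl⟩ | rfl) <;> simp
  have hemp : ∅ ∈ S 0 := by
    rw [h.1]
    exact .inr rfl
  exact h.induction (fun T => InitSegClosed T ∧ NoInfiniteBranch T)
    ⟨initSegClosed_of_card_le_one hemp hcard, noInfiniteBranch_of_card_le_one hcard⟩
    (fun T hT => ⟨hT.1.schreierSucc, hT.2.schreierSucc hT.1⟩)
    (fun T hT => ⟨InitSegClosed.schreierLimit fun n => (hT n).1,
      NoInfiniteBranch.schreierLimit fun n => (hT n).2⟩) α hα

theorem Topology.IsInducing.exists_finset_dist_lt {X Y ι Z : Type*} [TopologicalSpace X]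
    [CompactSpace X] [TopologicalSpace Z] [DiscreteTopology Z] [PseudoMetricSpace Y]
    {p : X → ι → Z} (hp : IsInducing p) {g : X → Y} (hg : Continuous g) {ε : ℝ}
    (hε : 0 < ε) :
    ∃ s : Finset ι, ∀ x y, (∀ i ∈ s, p x i = p y i) → dist (g x) (g y) < ε := by
  have hcyl : ∀ x, ∃ s : Finset ι, ∀ y, (∀ i ∈ s, p y i = p x i) →
      dist (g y) (g x) < ε / 2 := by
    intro x
    have hball : {y | dist (g y) (g x) < ε / 2} ∈ 𝓝 x :=
      hg.continuousAt (Metric.ball_mem_nhds _ (half_pos hε))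
    rw [hp.nhds_eq_comap, mem_comap] at hball
    obtain ⟨W, hW, hWsub⟩ := hball
    obtain ⟨U, hUW, hUo, hxU⟩ := mem_nhds_iff.mp hW
    obtain ⟨s, u, hu, hsub⟩ := isOpen_pi_iff.mp hUo _ hxU
    exact ⟨s, fun y hy => hWsub (hUW (hsub fun i hi => hy i hi ▸ (hu i hi).2))⟩
  choose s hs using hcyl
  obtain ⟨t, ht⟩ :=
    CompactSpace.elim_nhds_subcover (fun x => {y | ∀ i ∈ s x, p y i = p x i})
    fun x => IsOpen.mem_nhds
      ((isOpen_set_pi (s x).finite_toSet fun i _ => isOpen_discrete {p x i}).preimage hp.continuous)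
      fun i _ => rfl
  refine ⟨t.biUnion s, fun x y hxy => ?_⟩
  obtain ⟨z, hz, hxz⟩ : ∃ z ∈ t, ∀ i ∈ s z, p x i = p z i := by
    simpa using ht.ge (Set.mem_univ x)
  have hyz : ∀ i ∈ s z, p y i = p z i :=
    fun i hi => (hxy i (Finset.mem_biUnion.mpr ⟨z, hz, hi⟩)).symm.trans (hxz i hi)
  calc dist (g x) (g y) ≤ dist (g x) (g z) + dist (g y) (g z) := dist_triangle_right _ _ _
    _ < ε / 2 + ε / 2 := add_lt_add (hs z x hxz) (hs z y hyz)
    _ = ε := add_halves ε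

def boolIndicator (T : Set (Finset ℕ)) (F : {F : Finset ℕ // F ∈ T}) : ℕ → Bool :=
  fun n => decide (n ∈ F.1)

theorem isInducing_boolIndicator (T : Set (Finset ℕ)) : IsInducing (boolIndicator T) := ⟨rfl⟩

theorem InitSegClosed.compactSpace {T : Set (Finset ℕ)} (hT : InitSegClosed T)
    (hnb : NoInfiniteBranch T) : CompactSpace {F : Finset ℕ // F ∈ T} := by
  refine IsClosedEmbedding.compactSpace (f := boolIndicator T) ⟨⟨isInducing_boolIndicator T,
    fun F G hFG => Subtype.ext <| Finset.ext fun n => by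
      simpa [boolIndicator] using congrFun hFG n⟩,
    isClosed_of_closure_subset fun f hf => ?_⟩
  set N := {n | f n = true}
  have htrunc : ∀ M, truncate N M ∈ T := by
    intro M
    obtain ⟨_, hcyl, F, rfl⟩ := mem_closure_iff_nhds.mp hf (PiNat.cylinder f M)
      ((PiNat.isOpen_cylinder _ f M).mem_nhds (PiNat.self_mem_cylinder f M))
    have hNF : truncate N M = truncate (↑F.1) M := by
      ext n
      simp only [mem_truncate, N, Set.mem_ofPred_eq, Finset.mem_coe, and_congr_right_iff]
      intro hn
      rw [← PiNat.mem_cylinder_iff.mp hcyl n hn]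
      simp [boolIndicator]
    rw [hNF]
    exact hT _ F.2 _ (truncate_coe_initSeg _ _)
  have hfin : N.Finite := by
    by_contra hinf
    obtain ⟨m, hm⟩ := (hnb N hinf).exists
    exact hm (htrunc m)
  obtain ⟨M, hM⟩ := hfin.bddAbove
  refine ⟨⟨_, htrunc (M + 1)⟩, funext fun n => ?_⟩
  have hnM : n ∈ N → n < M + 1 := fun hn => Nat.lt_succ_of_le (hM hn)
  cases hfn : f n <;> simp_all [boolIndicator, mem_truncate, N]

structure IsAdmissibleEnumeration (T : Set (Finset ℕ)) (E : ℕ → Finset ℕ) : Prop where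
  mem : ∀ i, E i ∈ T
  injective : Function.Injective E
  exists_eq : ∀ G ∈ T, ∃ i, E i = G
  lt_of_initSeg : ∀ i j, E i ≼ E j → E i ≠ E j → i < j

/-- The value at `G` of `∑ i < n, c i • χ (E i)`. -/
noncomputable def nodeValue (E : ℕ → Finset ℕ) (c : ℕ → ℝ) (n : ℕ) (G : Finset ℕ) :
    ℝ :=
  ∑ i ∈ (Finset.range n).filter (fun i => E i ≼ G), c i

theorem nodeValue_succ_self (E : ℕ → Finset ℕ) (c : ℕ → ℝ) (j : ℕ) :
    nodeValue E c (j + 1) (E j) = c j + nodeValue E c j (E j) := by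
  rw [nodeValue, Finset.range_add_one, Finset.filter_insert, if_pos (.refl _),
    Finset.sum_insert (by simp)]
  rfl

/-- The solution of the unitriangular system `nodeValue E c (j + 1) (E j) = f j`. -/
noncomputable def nodeCoeff (E : ℕ → Finset ℕ) (f : ℕ → ℝ) (j : ℕ) : ℝ :=
  f j - ∑ i ∈ (Finset.range j).attach, if E i ≼ E j then nodeCoeff E f i else 0
decreasing_by exact Finset.mem_range.mp i.2

theorem nodeCoeff_eq (E : ℕ → Finset ℕ) (f : ℕ → ℝ) (j : ℕ) :
    nodeCoeff E f j = f j - nodeValue E (nodeCoeff E f) j (E j) := by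
  rw [nodeCoeff, nodeValue, Finset.sum_filter,
    Finset.sum_attach (f := fun i => if E i ≼ E j then nodeCoeff E f i else 0)]

theorem nodeValue_nodeCoeff (E : ℕ → Finset ℕ) (f : ℕ → ℝ) (j : ℕ) :
    nodeValue E (nodeCoeff E f) (j + 1) (E j) = f j := by
  rw [nodeValue_succ_self, nodeCoeff_eq]
  ring

theorem eq_nodeCoeff {E : ℕ → Finset ℕ} {c f : ℕ → ℝ}
    (h : ∀ j, nodeValue E c (j + 1) (E j) = f j) : c = nodeCoeff E f := by
  funext j
  induction j using Nat.strong_induction_on with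
  | _ j IH =>
    have hsum : nodeValue E c j (E j) = nodeValue E (nodeCoeff E f) j (E j) :=
      Finset.sum_congr rfl fun i hi => IH i (Finset.mem_range.mp (Finset.mem_filter.mp hi).1)
    rw [nodeCoeff_eq, ← h j, nodeValue_succ_self, hsum]
    ring

namespace IsAdmissibleEnumeration

variable {T : Set (Finset ℕ)} {E : ℕ → Finset ℕ}

theorem le_of_initSeg (hE : IsAdmissibleEnumeration T E) {i j : ℕ} (h : E i ≼ E j) :
    i ≤ j := by
  by_cases hij : E i = E j
  · exact (hE.injective hij).le
  · exact (hE.lt_of_initSeg i j h hij).le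

theorem zero_eq_empty (hE : IsAdmissibleEnumeration T E) (hT : InitSegClosed T) : E 0 = ∅ := by
  obtain ⟨i, hi⟩ := hE.exists_eq ∅ (hT _ (hE.mem 0) ∅ (.empty_left _))
  have hi0 : i ≤ 0 := hE.le_of_initSeg (by rw [hi]; exact .empty_left _)
  rwa [Nat.le_zero.mp hi0] at hi

theorem exists_greatest_initSeg (hE : IsAdmissibleEnumeration T E) (hT : InitSegClosed T)
    {n : ℕ} (hn : 0 < n) (G : Finset ℕ) :
    ∃ j < n, E j ≼ G ∧ ∀ i < n, E i ≼ G → E i ≼ E j := by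
  set I := (Finset.range n).filter (fun i => E i ≼ G)
  have hI : I.Nonempty := ⟨0, Finset.mem_filter.mpr
    ⟨Finset.mem_range.mpr hn, hE.zero_eq_empty hT ▸ .empty_left G⟩⟩
  obtain ⟨hjn, hjG⟩ := Finset.mem_filter.mp (I.max'_mem hI)
  refine ⟨I.max' hI, Finset.mem_range.mp hjn, hjG, fun i hi hiG => ?_⟩
  rcases hiG.total hjG with h | h
  · exact h
  · rw [le_antisymm (I.le_max' i (Finset.mem_filter.mpr ⟨Finset.mem_range.mpr hi, hiG⟩))
      (hE.le_of_initSeg h)]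
    exact .refl _

theorem nodeValue_self_of_lt (hE : IsAdmissibleEnumeration T E) (c : ℕ → ℝ) {j n : ℕ}
    (hjn : j < n) : nodeValue E c n (E j) = nodeValue E c (j + 1) (E j) := by
  unfold nodeValue
  congr 1
  ext i
  simp only [Finset.mem_filter, Finset.mem_range, and_congr_left_iff]
  intro h
  have := hE.le_of_initSeg h
  omega

theorem nodeValue_eq_of_greatest (hE : IsAdmissibleEnumeration T E) (c : ℕ → ℝ) {j n : ℕ}
    {G : Finset ℕ} (hjn : j < n) (hjG : E j ≼ G) (hmax : ∀ i < n, E i ≼ G → E i ≼ E j) :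
    nodeValue E c n G = nodeValue E c (j + 1) (E j) := by
  rw [← hE.nodeValue_self_of_lt c hjn]
  unfold nodeValue
  congr 1
  ext i
  simp only [Finset.mem_filter, Finset.mem_range, and_congr_right_iff]
  exact fun hi => ⟨hmax i hi, fun h => h.trans hjG⟩

theorem exists_index_bound (hE : IsAdmissibleEnumeration T E) (M : ℕ) :
    ∃ n₀, ∀ i, E i ⊆ Finset.range M → i < n₀ := by
  have hfin : (E ⁻¹' ↑(Finset.range M).powerset).Finite :=
    (Finset.finite_toSet _).preimage hE.injective.injOn
  obtain ⟨n₀, hn₀⟩ := hfin.bddAbove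
  exact ⟨n₀ + 1, fun i hi =>
    Nat.lt_succ_of_le (hn₀ (Finset.mem_coe.mpr (Finset.mem_powerset.mpr hi)))⟩

variable {χ : Finset ℕ → BoundedContinuousFunction {F : Finset ℕ // F ∈ T} ℝ}

theorem sum_smul_apply (hχ : ∀ F G, χ F G = if F ≼ G.1 then 1 else 0) (c : ℕ → ℝ)
    (n : ℕ) (G : {F : Finset ℕ // F ∈ T}) :
    (∑ i ∈ Finset.range n, c i • χ (E i)) G = nodeValue E c n G.1 := by
  simp only [BoundedContinuousFunction.coe_sum, Finset.sum_apply,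
    BoundedContinuousFunction.coe_smul, smul_eq_mul, hχ, mul_ite, mul_one, mul_zero, nodeValue,
    Finset.sum_filter]

theorem norm_sum_le_succ (hE : IsAdmissibleEnumeration T E) (hT : InitSegClosed T)
    (hχ : ∀ F G, χ F G = if F ≼ G.1 then 1 else 0) (c : ℕ → ℝ) (n : ℕ) :
    ‖∑ i ∈ Finset.range n, c i • χ (E i)‖ ≤
      ‖∑ i ∈ Finset.range (n + 1), c i • χ (E i)‖ := by
  rcases n.eq_zero_or_pos with rfl | hn
  · simp
  refine (BoundedContinuousFunction.norm_le (norm_nonneg _)).mpr fun G => ?_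
  obtain ⟨j, hjn, hjG, hmax⟩ := hE.exists_greatest_initSeg hT hn G.1
  have hval : (∑ i ∈ Finset.range n, c i • χ (E i)) G =
      (∑ i ∈ Finset.range (n + 1), c i • χ (E i)) ⟨E j, hE.mem j⟩ := by
    rw [sum_smul_apply hχ, sum_smul_apply hχ, hE.nodeValue_eq_of_greatest c hjn hjG hmax,
      hE.nodeValue_self_of_lt c (hjn.trans n.lt_succ_self)]
  rw [hval]
  exact BoundedContinuousFunction.norm_coe_le_norm _ _

theorem tendsto_sum_nodeCoeff [CompactSpace {F : Finset ℕ // F ∈ T}]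
    (hE : IsAdmissibleEnumeration T E) (hT : InitSegClosed T)
    (hχ : ∀ F G, χ F G = if F ≼ G.1 then 1 else 0)
    (g : BoundedContinuousFunction {F : Finset ℕ // F ∈ T} ℝ) :
    Tendsto (fun n => ∑ i ∈ Finset.range n,
      nodeCoeff E (fun j => g ⟨E j, hE.mem j⟩) i • χ (E i)) atTop (𝓝 g) := by
  rw [Metric.tendsto_atTop]
  intro ε hε
  obtain ⟨s, hs⟩ :=
    (isInducing_boolIndicator T).exists_finset_dist_lt g.continuous (half_pos hε)
  obtain ⟨M, hsM⟩ := s.exists_nat_subset_range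
  obtain ⟨n₀, hn₀⟩ := hE.exists_index_bound M
  refine ⟨max n₀ 1, fun n hn => ?_⟩
  refine ((BoundedContinuousFunction.dist_le (half_pos hε).le).mpr fun G => ?_).trans_lt
    (half_lt_self hε)
  obtain ⟨j, hjn, hjG, hmax⟩ :=
    hE.exists_greatest_initSeg hT (lt_of_lt_of_le one_pos (le_of_max_le_right hn)) G.1
  rw [sum_smul_apply hχ, hE.nodeValue_eq_of_greatest _ hjn hjG hmax, nodeValue_nodeCoeff]
  refine (hs ⟨E j, hE.mem j⟩ G fun i hi => ?_).le
  -- `E j` contains the truncation of `G` at `M`, since that node comes before the `n`-th one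
  obtain ⟨k, hk⟩ := hE.exists_eq _ (hT _ G.2 _ (truncate_coe_initSeg G.1 M))
  have hkn : k < n :=
    (hn₀ k (hk ▸ fun _ h => Finset.mem_range.mpr (mem_truncate.mp h).1)).trans_le
      (le_of_max_le_left hn)
  have hkj : E k ⊆ E j := (hmax k hkn (hk ▸ truncate_coe_initSeg G.1 M)).1
  simp only [boolIndicator, decide_eq_decide]
  exact ⟨fun h => hjG.1 h,
    fun h => hkj (hk ▸ mem_truncate.mpr ⟨Finset.mem_range.mp (hsM hi), h⟩)⟩

theorem nodeValue_eq_of_tendsto (hE : IsAdmissibleEnumeration T E)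
    (hχ : ∀ F G, χ F G = if F ≼ G.1 then 1 else 0) {c : ℕ → ℝ}
    {g : BoundedContinuousFunction {F : Finset ℕ // F ∈ T} ℝ}
    (hc : Tendsto (fun n => ∑ i ∈ Finset.range n, c i • χ (E i)) atTop (𝓝 g)) (j : ℕ) :
    nodeValue E c (j + 1) (E j) = g ⟨E j, hE.mem j⟩ := by
  have hev :=
    ((continuous_eval_const (⟨E j, hE.mem j⟩ : {F : Finset ℕ // F ∈ T})).tendsto g).comp hc
  refine tendsto_nhds_unique (tendsto_const_nhds.congr' ?_) hev
  filter_upwards [eventually_gt_atTop j] with n hn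
  simp only [Function.comp_apply, sum_smul_apply hχ, hE.nodeValue_self_of_lt c hn]

end IsAdmissibleEnumeration

/-- For any admissible enumeration `(χ_{F_i})` of the node functions
`B = {χ_F : F ∈ S_α}`, the sequence `(χ_{F_i})` is a monotone Schauder basis of
`C(ω^{ω^α}) = C(S_α)`. -/
theorem node_basis_monotone_basis
    (S : Ordinal → Set (Finset ℕ)) (A : Ordinal → ℕ → Ordinal)
    (h : SchreierSystem S A) (α : Ordinal) (hα : α < omega1)
    (χ : Finset ℕ → BoundedContinuousFunction {F : Finset ℕ // F ∈ S α} ℝ)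
    (hχ : ∀ (F : Finset ℕ) (G : {F : Finset ℕ // F ∈ S α}),
      χ F G = if FinsetInitSeg F G.1 then 1 else 0)
    (E : ℕ → Finset ℕ)
    (hE1 : ∀ i, E i ∈ S α) (hE2 : Function.Injective E)
    (hE3 : ∀ G ∈ S α, ∃ i, E i = G)
    (hadm : ∀ i j, FinsetInitSeg (E i) (E j) → E i ≠ E j → i < j) :
    (∀ (a : ℕ → ℝ) (n : ℕ),
        ‖∑ i ∈ Finset.range n, a i • χ (E i)‖ ≤
          ‖∑ i ∈ Finset.range (n + 1), a i • χ (E i)‖) ∧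
    (∀ g : BoundedContinuousFunction {F : Finset ℕ // F ∈ S α} ℝ,
        ∃! a : ℕ → ℝ,
          Filter.Tendsto (fun n => ∑ i ∈ Finset.range n, a i • χ (E i))
            Filter.atTop (nhds g)) := by
  obtain ⟨hT, hnb⟩ := h.initSegClosed_and_noInfiniteBranch hα
  have := hT.compactSpace hnb
  have hE : IsAdmissibleEnumeration (S α) E := ⟨hE1, hE2, hE3, hadm⟩
  exact ⟨hE.norm_sum_le_succ hT hχ, fun g => ⟨_, hE.tendsto_sum_nodeCoeff hT hχ g,
    fun c hc => eq_nodeCoeff (hE.nodeValue_eq_of_tendsto hχ hc)⟩⟩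
end

section
/- For every ε > 0 and K ≥ 1 there exists n ≥ 1 such that: if (x_i)_{i=1}^n is a sequence of norm one vectors in the Schreier space X₁ which is K-equivalent to the unit vector basis of ℓ₁ⁿ, then there exists a vector x of X₁-norm 1 in the span of (x_i) with ‖x‖_∞ < ε. -/
/-- The Schreier-space norm on finitely supported sequences:
`‖∑ aᵢeᵢ‖ = sup_{E ∈ S₁} |∑_{i∈E} aᵢ|`, where `S₁ = {F : |F| ≤ min F}`.  (For a
finitely supported `a` it suffices to take admissible `E` inside the support.) -/
noncomputable def schNorm (a : ℕ →₀ ℝ) : ℝ :=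
  ((a.support.powerset).filter (fun E => ∀ n ∈ E, E.card ≤ n)).sup'
    ⟨∅, by simp⟩ (fun E => |∑ i ∈ E, a i|)

/-- The supremum norm `‖∑ aᵢeᵢ‖_∞ = sup_i |aᵢ|` of a finitely supported sequence. -/
noncomputable def supNorm (a : ℕ →₀ ℝ) : ℝ :=
  (insert 0 a.support).sup' (Finset.insert_nonempty _ _) (fun i => |a i|)

/-! Vectors of Schreier norm `≤ 1` have at most `3m` coordinates of size `≥ δ` once `1 < m δ`,
so for large `n` only few coordinates are `δ`-large in many of the `x i`. Choose coefficients
`c ∈ [-1, 1]ⁿ` killing those coordinates (and coordinate `0`) with many `|c i| = 1`: a vertex of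
the polytope cut out by these linear conditions. Then every coordinate of `∑ cᵢ xᵢ` is small,
while the `ℓ₁ⁿ` lower estimate makes `‖∑ cᵢ xᵢ‖` at least `∑ |cᵢ| / K`, which is large. -/

open Finset Module Filter Topology

lemma abs_sum_le_schNorm (a : ℕ →₀ ℝ) {E : Finset ℕ} (hE : ∀ k ∈ E, #E ≤ k) :
    |∑ i ∈ E, a i| ≤ schNorm a := by
  rw [← sum_filter_ne_zero]
  refine le_sup' (fun E => |∑ i ∈ E, a i|) (mem_filter.2 ⟨?_, fun k hk => ?_⟩)
  · exact mem_powerset.2 fun k hk => Finsupp.mem_support_iff.2 (mem_filter.1 hk).2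
  · exact (card_filter_le _ _).trans (hE k (mem_filter.1 hk).1)

lemma schNorm_le {a : ℕ →₀ ℝ} {B : ℝ} (h : ∀ E : Finset ℕ, (∀ k ∈ E, #E ≤ k) → |∑ i ∈ E, a i| ≤ B) :
    schNorm a ≤ B :=
  sup'_le _ _ fun E hE => h E (mem_filter.1 hE).2

lemma schNorm_nonneg (a : ℕ →₀ ℝ) : 0 ≤ schNorm a := by
  simpa using abs_sum_le_schNorm a (E := ∅) (by simp)

lemma abs_apply_le_schNorm (a : ℕ →₀ ℝ) {k : ℕ} (hk : 1 ≤ k) : |a k| ≤ schNorm a := by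
  simpa using abs_sum_le_schNorm a (E := {k}) (by simpa using hk)

lemma schNorm_smul_le (t : ℝ) (a : ℕ →₀ ℝ) : schNorm (t • a) ≤ |t| * schNorm a :=
  schNorm_le fun E hE => by
    simpa [← mul_sum, abs_mul] using
      mul_le_mul_of_nonneg_left (abs_sum_le_schNorm a hE) (abs_nonneg t)

lemma schNorm_smul (t : ℝ) (a : ℕ →₀ ℝ) : schNorm (t • a) = |t| * schNorm a := by
  refine (schNorm_smul_le t a).antisymm ?_
  rcases eq_or_ne t 0 with rfl | ht
  · simpa using schNorm_nonneg _
  · calc |t| * schNorm a = |t| * schNorm (t⁻¹ • t • a) := by rw [inv_smul_smul₀ ht]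
      _ ≤ |t| * (|t⁻¹| * schNorm (t • a)) := by gcongr; exact schNorm_smul_le _ _
      _ = schNorm (t • a) := by rw [abs_inv, mul_inv_cancel_left₀ (abs_ne_zero.2 ht)]

lemma supNorm_lt {a : ℕ →₀ ℝ} {ε : ℝ} (h : ∀ k, |a k| < ε) : supNorm a < ε :=
  sup'_lt_iff _ |>.2 fun k _ => h k

lemma card_filter_le_and_le_apply_lt {a : ℕ →₀ ℝ} {δ : ℝ} {m : ℕ} (h : schNorm a < m * δ) :
    #{k ∈ a.support | m ≤ k ∧ δ ≤ a k} < m := by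
  by_contra! hm
  obtain ⟨E, hEsub, hEcard⟩ := exists_subset_card_eq hm
  have hE : ∀ k ∈ E, m ≤ k ∧ δ ≤ a k := fun k hk => (mem_filter.1 (hEsub hk)).2
  have hsum : m * δ ≤ ∑ i ∈ E, a i := by
    simpa [hEcard] using card_nsmul_le_sum E a δ fun k hk => (hE k hk).2
  have := abs_sum_le_schNorm a (E := E) fun k hk => hEcard ▸ (hE k hk).1
  linarith [le_abs_self (∑ i ∈ E, a i)]

/-- Among the first `m` coordinates there are at most `m` large ones; beyond, an admissible set of
`m` large coordinates of one sign would have sum at least `m δ`. -/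
lemma card_filter_le_abs_apply_le {a : ℕ →₀ ℝ} {δ : ℝ} {m : ℕ} (h : schNorm a < m * δ) :
    #{k ∈ a.support | δ ≤ |a k|} ≤ 3 * m := by
  have hneg : schNorm (-a) < m * δ := by
    rwa [← neg_one_smul ℝ a, schNorm_smul, abs_neg, abs_one, one_mul]
  have hsub : {k ∈ a.support | δ ≤ |a k|} ⊆
      (range m ∪ {k ∈ a.support | m ≤ k ∧ δ ≤ a k}) ∪ {k ∈ (-a).support | m ≤ k ∧ δ ≤ (-a) k} := by
    intro k hk
    obtain ⟨hka, hδk⟩ := mem_filter.1 hk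
    simp only [mem_union, mem_range, mem_filter, Finsupp.support_neg, Finsupp.coe_neg,
      Pi.neg_apply]
    rcases lt_or_ge k m with hkm | hkm
    · exact .inl (.inl hkm)
    rcases le_total 0 (a k) with hak | hak
    · exact .inl (.inr ⟨hka, hkm, by rwa [abs_of_nonneg hak] at hδk⟩)
    · exact .inr ⟨hka, hkm, by rwa [abs_of_nonpos hak] at hδk⟩
  calc #{k ∈ a.support | δ ≤ |a k|} ≤ m + m + m := by
        refine (card_le_card hsub).trans ((card_union_le _ _).trans (add_le_add
          ((card_union_le _ _).trans (add_le_add (card_range m).le ?_)) ?_))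
        · exact (card_filter_le_and_le_apply_lt h).le
        · exact (card_filter_le_and_le_apply_lt hneg).le
    _ = 3 * m := by ring

lemma exists_mem_ker_ne_zero_forall_eq_zero {𝕜 ι W : Type*} [Field 𝕜] [Fintype ι]
    [AddCommGroup W] [Module 𝕜 W] [FiniteDimensional 𝕜 W] (f : (ι → 𝕜) →ₗ[𝕜] W) (A : Finset ι)
    (h : finrank 𝕜 W + #A < Fintype.card ι) :
    ∃ v ∈ LinearMap.ker f, v ≠ 0 ∧ ∀ i ∈ A, v i = 0 := by
  let g := f.prod (LinearMap.pi fun i : A => LinearMap.proj (R := 𝕜) (i : ι))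
  have hg : LinearMap.ker g ≠ ⊥ := LinearMap.ker_ne_bot_of_finrank_lt <| by
    simpa [g, finrank_prod] using h
  obtain ⟨v, hv, hv0⟩ := (Submodule.ne_bot_iff _).1 hg
  rw [LinearMap.ker_prod] at hv
  simp only [Submodule.mem_inf, LinearMap.mem_ker, funext_iff] at hv
  exact ⟨v, hv.1, hv0, fun i hi => hv.2 ⟨i, hi⟩⟩

lemma eventually_forall_abs_add_mul_le_one {ι : Type*} [Finite ι] {c v : ι → ℝ}
    (hc : ∀ i, |c i| ≤ 1) (hv : ∀ i, |c i| = 1 → v i = 0) :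
    ∀ᶠ s in 𝓝 (0 : ℝ), ∀ i, |c i + s * v i| ≤ 1 := by
  refine eventually_all.2 fun i => ?_
  by_cases hvi : v i = 0
  · simp [hvi, hc i]
  · have hlt : |c i| < 1 := (hc i).lt_of_ne (mt (hv i) hvi)
    refine (ContinuousAt.eventually_lt (f := fun s => |c i + s * v i|) (by fun_prop)
      continuousAt_const (by simpa using hlt)).mono fun _ => le_of_lt

/-- Take an extreme point `c` of the compact set `ker f ∩ [-1, 1]^ι` (Krein–Milman). A direction
`v ∈ ker f` vanishing where `|c i| = 1` can be followed a little both ways from `c`, so it is zero;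
hence these coordinates together with `f` determine `c`. -/
theorem exists_mem_ker_card_abs_eq_one {ι W : Type*} [Fintype ι] [AddCommGroup W] [Module ℝ W]
    [FiniteDimensional ℝ W] (f : (ι → ℝ) →ₗ[ℝ] W) :
    ∃ c ∈ LinearMap.ker f, (∀ i, |c i| ≤ 1) ∧
      Fintype.card ι ≤ finrank ℝ W + #{i | |c i| = 1} := by
  set P : Set (ι → ℝ) := LinearMap.ker f ∩ Metric.closedBall 0 1
  have mem_P : ∀ y, y ∈ P ↔ y ∈ LinearMap.ker f ∧ ∀ i, |y i| ≤ 1 := by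
    simp [P, pi_norm_le_iff_of_nonneg]
  have hP : IsCompact P :=
    (isCompact_closedBall 0 1).inter_left (LinearMap.ker f).closed_of_finiteDimensional
  obtain ⟨c, hc⟩ := hP.extremePoints_nonempty ⟨0, by simp [P]⟩
  obtain ⟨hcf, hc1⟩ := (mem_P c).1 hc.1
  refine ⟨c, hcf, hc1, ?_⟩
  by_contra! hcard
  obtain ⟨v, hvf, hv0, hvA⟩ := exists_mem_ker_ne_zero_forall_eq_zero f _ hcard
  have hv : ∀ i, |c i| = 1 → v i = 0 := fun i hi => hvA i (by simpa using hi)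
  have hsmall := eventually_forall_abs_add_mul_le_one hc1 hv
  obtain ⟨s, ⟨hs, hs'⟩, hs0⟩ := ((eventually_nhdsWithin_of_eventually_nhds
    (hsmall.and ((continuous_neg.tendsto' 0 0 neg_zero).eventually hsmall))).and
    self_mem_nhdsWithin).exists (f := 𝓝[≠] (0 : ℝ))
  have hsub : c - s • v ∈ P := (mem_P _).2
    ⟨sub_mem hcf (Submodule.smul_mem _ s hvf), fun i => by simpa [sub_eq_add_neg] using hs' i⟩
  have hadd : c + s • v ∈ P := (mem_P _).2
    ⟨add_mem hcf (Submodule.smul_mem _ s hvf), fun i => by simpa using hs i⟩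
  have := hc.2 hsub hadd (mem_openSegment_sub_add c (s • v))
  exact hv0 ((smul_eq_zero.1 (by simpa using this)).resolve_left hs0)

lemma exists_card_mul_le_forall_notMem_card_lt {ι α : Type*} [Fintype ι] [DecidableEq α]
    (S : ι → Finset α) {M : ℕ} (hS : ∀ i, #(S i) ≤ M) {T : ℕ} (hT : 0 < T) :
    ∃ C : Finset α, #C * T ≤ Fintype.card ι * M ∧ ∀ k ∉ C, #{i | k ∈ S i} < T := by
  refine ⟨{k ∈ univ.biUnion S | T ≤ #{i | k ∈ S i}}, ?_, fun k hk => ?_⟩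
  · refine card_mul_le_card_mul (fun k i => k ∈ S i) (fun k hk => (mem_filter.1 hk).2)
      fun i _ => (card_le_card fun k hk => (mem_filter.1 hk).2).trans (hS i)
  · by_contra! hTk
    obtain ⟨i, hi⟩ := card_pos.1 (hT.trans_le hTk)
    exact hk (mem_filter.2 ⟨mem_biUnion.2 ⟨i, mem_univ i, (mem_filter.1 hi).2⟩, hTk⟩)

lemma abs_sum_mul_le {ι : Type*} [Fintype ι] {a b : ι → ℝ} (ha : ∀ i, |a i| ≤ 1)
    (hb : ∀ i, |b i| ≤ 1) {δ : ℝ} (hδ : 0 ≤ δ) :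
    |∑ i, a i * b i| ≤ #{i | δ ≤ |b i|} + δ * ∑ i, |a i| := by
  calc |∑ i, a i * b i| ≤ ∑ i, |a i| * |b i| := by
        simpa only [abs_mul] using abs_sum_le_sum_abs (fun i => a i * b i) univ
    _ ≤ ∑ i, ((if δ ≤ |b i| then 1 else 0) + δ * |a i|) := by
        refine sum_le_sum fun i _ => ?_
        split_ifs with h
        · nlinarith [ha i, hb i, abs_nonneg (a i), abs_nonneg (b i)]
        · nlinarith [abs_nonneg (a i)]
    _ = #{i | δ ≤ |b i|} + δ * ∑ i, |a i| := by rw [sum_add_distrib, sum_boole, mul_sum]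

lemma exists_sum_smul_apply_eq_zero {ι : Type*} [Fintype ι] (x : ι → ℕ →₀ ℝ) (D : Finset ℕ) :
    ∃ c : ι → ℝ, (∀ k ∈ D, (∑ i, c i • x i) k = 0) ∧ (∀ i, |c i| ≤ 1) ∧
      (Fintype.card ι : ℝ) - #D ≤ ∑ i, |c i| := by
  let f : (ι → ℝ) →ₗ[ℝ] (D → ℝ) :=
    LinearMap.pi fun k => (Finsupp.lapply (k : ℕ)).comp (Fintype.linearCombination ℝ x)
  obtain ⟨c, hcf, hc1, hcard⟩ := exists_mem_ker_card_abs_eq_one f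
  refine ⟨c, fun k hk => ?_, hc1, ?_⟩
  · simpa [f, Fintype.linearCombination_apply] using congrFun (LinearMap.mem_ker.1 hcf) ⟨k, hk⟩
  · have hones : (#{i | |c i| = 1} : ℝ) ≤ ∑ i, |c i| := by
      rw [← sum_boole]
      exact sum_le_sum fun i _ => by split_ifs with h <;> simp [h]
    have : (Fintype.card ι : ℝ) ≤ #D + #{i | |c i| = 1} := by
      exact_mod_cast (by simpa using hcard : Fintype.card ι ≤ #D + #{i | |c i| = 1})
    linarith

lemma abs_sum_smul_apply_le {ι : Type*} [Fintype ι] {x : ι → ℕ →₀ ℝ}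
    (hx : ∀ i, schNorm (x i) ≤ 1) {c : ι → ℝ} (hc : ∀ i, |c i| ≤ 1) {k : ℕ} (hk : 1 ≤ k)
    {δ : ℝ} (hδ : 0 ≤ δ) :
    |(∑ i, c i • x i) k| ≤ #{i | δ ≤ |x i k|} + δ * ∑ i, |c i| := by
  simpa [Finsupp.finsetSum_apply] using
    abs_sum_mul_le hc (fun i => (abs_apply_le_schNorm (x i) hk).trans (hx i)) hδ

lemma exists_schNorm_eq_one_supNorm_lt {ι : Type*} [Fintype ι] (x : ι → ℕ →₀ ℝ) (c : ι → ℝ)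
    {ε : ℝ} (hpos : 0 < schNorm (∑ i, c i • x i))
    (hsmall : ∀ k, |(∑ i, c i • x i) k| < ε * schNorm (∑ i, c i • x i)) :
    ∃ c' : ι → ℝ, schNorm (∑ i, c' i • x i) = 1 ∧ supNorm (∑ i, c' i • x i) < ε := by
  set N := schNorm (∑ i, c i • x i)
  have hsum : ∑ i, (N⁻¹ * c i) • x i = N⁻¹ • ∑ i, c i • x i := by simp [smul_sum, smul_smul]
  refine ⟨fun i => N⁻¹ * c i, ?_, supNorm_lt fun k => ?_⟩
  · rw [hsum, schNorm_smul, abs_inv, abs_of_pos hpos, inv_mul_cancel₀ hpos.ne']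
  · rw [hsum, Finsupp.smul_apply, smul_eq_mul, abs_mul, abs_inv, abs_of_pos hpos,
      inv_mul_lt_iff₀ hpos, mul_comm]
    exact hsmall k

/-- Coordinate `0` is not controlled by the Schreier norm (`{0}` is not admissible), so it is
killed together with `C`. -/
theorem exists_schNorm_eq_one_supNorm_lt_of_card_lt {ι : Type*} [Fintype ι]
    {x : ι → ℕ →₀ ℝ} (hx : ∀ i, schNorm (x i) ≤ 1) {K : ℝ} (hK : 0 < K)
    (hlow : ∀ a : ι → ℝ, 1 / K * ∑ i, |a i| ≤ schNorm (∑ i, a i • x i))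
    {δ : ℝ} (hδ : 0 < δ) {T : ℕ} (C : Finset ℕ) (hC : ∀ k ∉ C, #{i | δ ≤ |x i k|} < T)
    (hT : T < δ * (Fintype.card ι - (#C + 1))) :
    ∃ c : ι → ℝ, schNorm (∑ i, c i • x i) = 1 ∧ supNorm (∑ i, c i • x i) < 2 * K * δ := by
  obtain ⟨c, hc0, hc1, hL⟩ := exists_sum_smul_apply_eq_zero x (insert 0 C)
  set L := ∑ i, |c i|
  have hTL : T < δ * L := hT.trans_le <| by
    have : (#(insert 0 C) : ℝ) ≤ #C + 1 := by exact_mod_cast card_insert_le 0 C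
    gcongr
    linarith
  have hLN : L / K ≤ schNorm (∑ i, c i • x i) := by simpa [div_eq_inv_mul] using hlow c
  have hNpos : 0 < schNorm (∑ i, c i • x i) :=
    lt_of_lt_of_le (div_pos (pos_of_mul_pos_right ((Nat.cast_nonneg T).trans_lt hTL) hδ.le) hK)
      hLN
  refine exists_schNorm_eq_one_supNorm_lt x c hNpos fun k => ?_
  by_cases hk : k ∈ insert 0 C
  · rw [hc0 k hk, abs_zero]
    positivity
  · obtain ⟨hk0, hkC⟩ : k ≠ 0 ∧ k ∉ C := by simpa using hk
    calc |(∑ i, c i • x i) k| ≤ #{i | δ ≤ |x i k|} + δ * L :=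
          abs_sum_smul_apply_le hx hc1 (Nat.one_le_iff_ne_zero.2 hk0) hδ.le
      _ < δ * L + δ * L := by
          gcongr
          exact (Nat.cast_lt.2 (hC k hkC)).trans hTL
      _ = 2 * K * δ * (L / K) := by field_simp; ring
      _ ≤ 2 * K * δ * schNorm (∑ i, c i • x i) := by gcongr

/-- For every `ε > 0` and `K ≥ 1` there is `n` such that any sequence of `n`
norm-one vectors of the Schreier space `X₁` which is `K`-equivalent to the unit
vector basis of `ℓ₁ⁿ` admits a norm-one vector in its span of sup norm `< ε`. -/
theorem exists_small_supNorm_in_span :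
    ∀ ε > (0 : ℝ), ∀ K : ℝ, 1 ≤ K → ∃ n : ℕ, 1 ≤ n ∧
      ∀ x : Fin n → (ℕ →₀ ℝ),
        (∀ i, schNorm (x i) = 1) →
        (∀ a : Fin n → ℝ,
          (1 / K) * ∑ i, |a i| ≤ schNorm (∑ i, a i • x i) ∧
            schNorm (∑ i, a i • x i) ≤ ∑ i, |a i|) →
        ∃ c : Fin n → ℝ,
          schNorm (∑ i, c i • x i) = 1 ∧ supNorm (∑ i, c i • x i) < ε := by
  intro ε hε K hK
  have hK0 : 0 < K := by linarith
  set δ := ε / (2 * K)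
  have hδ : 0 < δ := by positivity
  obtain ⟨m, hm⟩ : ∃ m : ℕ, 1 < m * δ := by
    obtain ⟨m, hm⟩ := exists_nat_gt δ⁻¹
    exact ⟨m, (inv_lt_iff_one_lt_mul₀ hδ).1 hm⟩
  obtain ⟨r, hr⟩ : ∃ r : ℕ, 6 * m < r * δ := by
    obtain ⟨r, hr⟩ := exists_nat_gt (6 * m / δ)
    exact ⟨r, (div_lt_iff₀ hδ).1 hr⟩
  have hm0 : 0 < m := Nat.cast_pos.1 (pos_of_mul_pos_left (one_pos.trans hm) hδ.le)
  refine ⟨2 * r + 2, by omega, fun x hx hlow => ?_⟩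
  have hlarge : ∀ i, #{k ∈ (x i).support | δ ≤ |x i k|} ≤ 3 * m := fun i =>
    card_filter_le_abs_apply_le (by rwa [hx i])
  have hmem : ∀ i k, k ∈ {k ∈ (x i).support | δ ≤ |x i k|} ↔ δ ≤ |x i k| := fun i k => by
    simpa using fun h => abs_pos.1 (hδ.trans_le h)
  obtain ⟨C, hCcard, hC⟩ := exists_card_mul_le_forall_notMem_card_lt _ hlarge
    (T := 6 * m) (by positivity)
  have hCr : (#C : ℝ) ≤ r + 1 := by
    rw [Fintype.card_fin] at hCcard
    exact_mod_cast (by nlinarith : #C ≤ r + 1)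
  have := exists_schNorm_eq_one_supNorm_lt_of_card_lt (fun i => (hx i).le) hK0
    (fun a => (hlow a).1) hδ C (T := 6 * m) (fun k hk => by simpa only [hmem] using hC k hk)
    (by rw [Fintype.card_fin]; push_cast; nlinarith)
  simpa [δ, mul_div_cancel₀ _ (by positivity : 2 * K ≠ 0)] using this
end

section
/- Let X be a Banach space with separable dual, ε > 0, and (f_i)_{i=1}^∞ ⊆ B_{X*} a weak* null sequence with ε/2 ≤ ‖f_i‖ ≤ 1 for all i. Then there exist a subsequence (f'_i) of (f_i) and a weakly null sequence (x_i) in the unit sphere of X such that f'_i(x_i) ≥ ε/5, |f'_i(x_j)| < ε/2^{i+6} whenever i ≠ j, and (x_i)_{i=1}^k is (1 + ε(1 − 2^{−k}))-basic for every k ≥ 1. -/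
open Filter

variable {X : Type*} [NormedAddCommGroup X] [NormedSpace ℝ X]

/-- The first `k` terms of a sequence are `C`-basic. -/
def IsBasicUpTo (C : ℝ) (x : ℕ → X) (k : ℕ) : Prop :=
  ∀ (a : ℕ → ℝ) (p q : ℕ), p ≤ q → q ≤ k →
    ‖∑ i ∈ Finset.range p, a i • x i‖ ≤ C * ‖∑ i ∈ Finset.range q, a i • x i‖

/-!
Pick `y i` in the unit ball with `f i (y i) > 9ε/20`. As `X*` is separable, sequential
Banach–Alaoglu in `X**` makes a subsequence of `(y i)` weakly Cauchy. The vectors `x j` are the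
normalized differences `y n - y m` with `m < n` both large: such differences are weakly small,
and `f n (y n - y m) ≥ 2ε/5` because `f n (y m) → 0` as `n → ∞`. Choosing the pairs one after
the other, each new vector is almost annihilated by finitely many functionals fixed in advance:
the earlier `f`'s, and (Mazur's lemma) a finite norming set for the span of the earlier `x`'s,
which keeps the basis constant of the first `k` vectors below `1 + ε (1 - 2⁻ᵏ)`.
-/

open Topology

theorem exists_seq_forall_prefix {α : Type*} (P : List α → α → Prop) (h : ∀ l, ∃ a, P l a) :
    ∃ u : ℕ → α, ∀ n, P ((List.range n).map u) (u n) := by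
  choose next hnext using h
  let L : ℕ → List α := fun n => Nat.rec [] (fun _ l => l ++ [next l]) n
  have hL : ∀ n, L n = (List.range n).map fun k => next (L k) := by
    intro n
    induction n with
    | zero => rfl
    | succ n ih => rw [List.range_succ, List.map_append, ← ih]; rfl
  exact ⟨fun n => next (L n), fun n => hL n ▸ hnext (L n)⟩

theorem exists_norm_le_one_lt_apply {g : StrongDual ℝ X} {r : ℝ} (hr : r < ‖g‖) :
    ∃ y : X, ‖y‖ ≤ 1 ∧ r < g y := by
  obtain ⟨y, hy, hgy⟩ := g.exists_lt_apply_of_lt_opNorm hr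
  rcases le_or_gt 0 (g y) with hpos | hneg
  · exact ⟨y, hy.le, by rwa [Real.norm_of_nonneg hpos] at hgy⟩
  · exact ⟨-y, by simpa using hy.le, by rwa [Real.norm_of_nonpos hneg.le, ← map_neg] at hgy⟩

theorem exists_strictMono_tendsto_apply [TopologicalSpace.SeparableSpace (StrongDual ℝ X)]
    {y : ℕ → X} {R : ℝ} (hy : ∀ i, ‖y i‖ ≤ R) :
    ∃ ψ : ℕ → ℕ, StrictMono ψ ∧ ∃ Φ : StrongDual ℝ (StrongDual ℝ X),
      ∀ g : StrongDual ℝ X, Tendsto (fun i => g (y (ψ i))) atTop (𝓝 (Φ g)) := by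
  obtain ⟨Φ, -, ψ, hψ, hΦ⟩ := WeakDual.isSeqCompact_closedBall ℝ (StrongDual ℝ X) 0 R
    (x := fun i => StrongDual.toWeakDual (NormedSpace.inclusionInDoubleDual ℝ X (y i)))
    fun i => by simpa using (NormedSpace.double_dual_bound ℝ X (y i)).trans (hy i)
  exact ⟨ψ, hψ, WeakDual.toStrongDual Φ,
    fun g => ((WeakDual.eval_continuous g).tendsto Φ).comp hΦ⟩

theorem IsCompact.exists_finset_norming {K : Set X} (hK : IsCompact K) (h0 : (0 : X) ∉ K)
    {s : ℝ} (hs : 0 < s) :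
    ∃ F : Finset (StrongDual ℝ X), (∀ h ∈ F, ‖h‖ ≤ 1) ∧ ∀ v ∈ K, ∃ h ∈ F, ‖v‖ < (1 + s) * h v := by
  classical
  choose g hg1 hgv using fun v : K => exists_dual_vector'' ℝ (v : X)
  obtain ⟨T, hT⟩ := hK.elim_finite_subcover (fun v => {w | ‖w‖ < (1 + s) * g v w})
    (fun v => isOpen_lt continuous_norm (continuous_const.mul (g v).continuous))
    fun v hv => Set.mem_iUnion.2 ⟨⟨v, hv⟩, by
      have : 0 < ‖v‖ := norm_pos_iff.2 (ne_of_mem_of_not_mem hv h0)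
      simp only [Set.mem_ofPred_eq, hgv, RCLike.ofReal_real_eq_id, id]
      nlinarith⟩
  refine ⟨T.image g, fun _ hh => ?_, fun v hv => ?_⟩
  · obtain ⟨v, -, rfl⟩ := Finset.mem_image.1 hh
    exact hg1 v
  · obtain ⟨w, hwT, hw⟩ := Set.mem_iUnion₂.1 (hT hv)
    exact ⟨g w, Finset.mem_image_of_mem g hwT, hw⟩

theorem mul_norm_le_mul_norm_add_smul {h : StrongDual ℝ X} {u z : X} {s η : ℝ}
    (hh : ‖h‖ ≤ 1) (hu : ‖u‖ ≤ (1 + s) * h u) (hz : ‖z‖ = 1) (hhz : |h z| ≤ η) (hs : 0 ≤ s)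
    (t : ℝ) : (1 - (1 + s) * η) * ‖u‖ ≤ (1 + s) * (1 + η) * ‖u + t • z‖ := by
  have hhu : h u ≤ ‖u + t • z‖ + |t| * η := by
    calc h u = h (u + t • z) - t * h z := by simp
      _ ≤ |h (u + t • z)| + |t| * |h z| := by
        rw [← abs_mul]; linarith [le_abs_self (h (u + t • z)), neg_abs_le (t * h z)]
      _ ≤ ‖u + t • z‖ + |t| * η := by
        gcongr
        exact (h.le_opNorm _).trans (mul_le_of_le_one_left (norm_nonneg _) hh)
  have ht : |t| ≤ ‖u + t • z‖ + ‖u‖ := by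
    calc |t| = ‖(u + t • z) - u‖ := by simp [norm_smul, hz]
      _ ≤ ‖u + t • z‖ + ‖u‖ := norm_sub_le _ _
  have hη : 0 ≤ η := (abs_nonneg _).trans hhz
  nlinarith [mul_le_mul_of_nonneg_left ht hη]

theorem exists_finset_norm_le_mul_norm_add_smul (E : Submodule ℝ X) [FiniteDimensional ℝ E]
    {c : ℝ} (hc : 1 < c) :
    ∃ F : Finset (StrongDual ℝ X), ∃ η > 0, ∀ z : X, ‖z‖ = 1 → (∀ h ∈ F, |h z| ≤ η) →
      ∀ u ∈ E, ∀ t : ℝ, ‖u‖ ≤ c * ‖u + t • z‖ := by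
  obtain ⟨s, hs, hsc⟩ : ∃ s > 0, (1 + s) * (1 + s) < c * (1 - (1 + s) * s) := by
    have h0 : ∀ᶠ s in 𝓝 (0 : ℝ), 0 < c * (1 - (1 + s) * s) - (1 + s) * (1 + s) :=
      (by fun_prop : Continuous fun s : ℝ => c * (1 - (1 + s) * s) - (1 + s) * (1 + s))
        |>.continuousAt.eventually (lt_mem_nhds (by norm_num; linarith))
    obtain ⟨s, hs, hpos⟩ :=
      (eventually_mem_nhdsWithin.and (nhdsWithin_le_nhds h0)).exists (f := 𝓝[>] (0 : ℝ))
    exact ⟨s, hs, by linarith⟩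
  obtain ⟨F, hF1, hF⟩ := ((isCompact_sphere (0 : E) 1).image continuous_subtype_val)
    |>.exists_finset_norming (by simp) hs
  refine ⟨F, s, hs, fun z hz hFz u hu t => ?_⟩
  rcases eq_or_ne u 0 with rfl | hu0
  · simp only [norm_zero, zero_add]; positivity
  have hn : 0 < ‖u‖ := norm_pos_iff.2 hu0
  obtain ⟨h, hhF, hh⟩ := hF (‖u‖⁻¹ • u)
    ⟨⟨‖u‖⁻¹ • u, E.smul_mem _ hu⟩, by simp [norm_smul, hn.ne'], rfl⟩
  have hhu : ‖u‖ ≤ (1 + s) * h u := by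
    rw [map_smul, smul_eq_mul, norm_smul, norm_inv, norm_norm, inv_mul_cancel₀ hn.ne'] at hh
    have := mul_lt_mul_of_pos_left hh hn
    field_simp at this
    linarith
  have hK : 0 < 1 - (1 + s) * s := by nlinarith
  have := mul_norm_le_mul_norm_add_smul (hF1 h hhF) hhu hz (hFz h hhF) hs.le t
  refine le_of_mul_le_mul_left ?_ hK
  nlinarith [norm_nonneg (u + t • z)]

theorem isBasicUpTo_of_mul_norm_le {x : ℕ → X} {C : ℕ → ℝ} (hC : Monotone C) (hC0 : 1 ≤ C 0)
    (hx : ∀ j, ∀ u ∈ Submodule.span ℝ (x '' Set.Iio j), ∀ t : ℝ,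
      C j * ‖u‖ ≤ C (j + 1) * ‖u + t • x j‖) (k : ℕ) :
    IsBasicUpTo (C k) x k := by
  intro a p q hpq hqk
  have hpq' : C p * ‖∑ l ∈ Finset.range p, a l • x l‖ ≤
      C q * ‖∑ l ∈ Finset.range q, a l • x l‖ := by
    clear hqk
    induction q, hpq using Nat.le_induction with
    | base => exact le_rfl
    | succ q _ ih =>
      rw [Finset.sum_range_succ]
      refine ih.trans (hx q _ (Submodule.sum_mem _ fun l hl => Submodule.smul_mem _ _ ?_) (a q))
      exact Submodule.subset_span ⟨l, Finset.mem_range.1 hl, rfl⟩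
  calc ‖∑ l ∈ Finset.range p, a l • x l‖
      ≤ C p * ‖∑ l ∈ Finset.range p, a l • x l‖ :=
        le_mul_of_one_le_left (norm_nonneg _) (hC0.trans (hC p.zero_le))
    _ ≤ C q * ‖∑ l ∈ Finset.range q, a l • x l‖ := hpq'
    _ ≤ C k * ‖∑ l ∈ Finset.range q, a l • x l‖ := by gcongr; exact hC hqk

section Construction

variable {f : ℕ → StrongDual ℝ X} {Y : ℕ → X} {b r : ℝ} {C δ : ℕ → ℝ}

theorem le_norm_of_le_apply {g : StrongDual ℝ X} {v : X} (hg : ‖g‖ ≤ 1) (hgv : b ≤ g v) :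
    b ≤ ‖v‖ :=
  hgv.trans ((le_abs_self _).trans (by simpa using g.le_of_opNorm_le hg v))

theorem abs_apply_inv_norm_smul_lt {g h : StrongDual ℝ X} {v : X} {β : ℝ} (hg : ‖g‖ ≤ 1)
    (hb : 0 < b) (hgv : b ≤ g v) (hhv : |h v| < b * β) : |h (‖v‖⁻¹ • v)| < β := by
  have hv : b ≤ ‖v‖ := le_norm_of_le_apply hg hgv
  rw [map_smul, smul_eq_mul, abs_mul, abs_inv, abs_norm, inv_mul_lt_iff₀ (hb.trans_le hv)]
  nlinarith [abs_nonneg (h v)]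

theorem div_two_le_apply_inv_norm_smul {g : StrongDual ℝ X} {v : X} (hv : ‖v‖ ≤ 2)
    (hb : 0 < b) (hgv : b ≤ g v) : b / 2 ≤ g (‖v‖⁻¹ • v) := by
  have hv0 : 0 < ‖v‖ := norm_pos_iff.2 fun h => by simp [h] at hgv; linarith
  rw [map_smul, smul_eq_mul, le_inv_mul_iff₀ hv0]
  nlinarith

noncomputable def normalizedDiff (Y : ℕ → X) (w : ℕ × ℕ) : X := ‖Y w.2 - Y w.1‖⁻¹ • (Y w.2 - Y w.1)

theorem norm_normalizedDiff {w : ℕ × ℕ} (hb : 0 < b) (hw : b ≤ f w.2 (Y w.2 - Y w.1)) :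
    ‖normalizedDiff Y w‖ = 1 :=
  norm_smul_inv_norm fun h => by simp [h] at hw; linarith

theorem eventually_abs_apply_normalizedDiff_lt (hf : ∀ k, ‖f k‖ ≤ 1)
    (hY : ∀ g : StrongDual ℝ X, CauchySeq fun k => g (Y k)) (hb : 0 < b)
    {G : Set (StrongDual ℝ X)} (hG : G.Finite) {β : ℝ} (hβ : 0 < β) :
    ∀ᶠ w in atTop ×ˢ atTop, b ≤ f w.2 (Y w.2 - Y w.1) →
      ∀ g ∈ G, |g (normalizedDiff Y w)| < β := by
  have hdiff : ∀ᶠ w in atTop ×ˢ atTop, ∀ g ∈ G, |g (Y w.2 - Y w.1)| < b * β := by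
    refine hG.eventually_all.2 fun g _ => ?_
    have hg := cauchySeq_iff_tendsto_dist_atTop_0.1 (hY g)
    rw [← prod_atTop_atTop_eq] at hg
    filter_upwards [hg.eventually (gt_mem_nhds (by positivity : (0 : ℝ) < b * β))] with w hw
    rwa [map_sub, abs_sub_comm, ← Real.dist_eq]
  filter_upwards [hdiff] with w hw hfw g hg
  exact abs_apply_inv_norm_smul_lt (hf _) hb hfw (hw g hg)

/-- `hist` lists the pairs `(m, n)` chosen so far; the next pair `w` contributes the vector
`normalizedDiff Y w` and the functional `f w.2`. -/
structure IsGoodStep (f : ℕ → StrongDual ℝ X) (Y : ℕ → X) (b : ℝ) (C δ : ℕ → ℝ)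
    (hist : List (ℕ × ℕ)) (w : ℕ × ℕ) : Prop where
  snd_lt_fst : ∀ v ∈ hist, v.2 < w.1
  fst_lt_snd : w.1 < w.2
  le_apply_sub : b ≤ f w.2 (Y w.2 - Y w.1)
  abs_apply_new_lt : ∀ v ∈ hist, |f v.2 (normalizedDiff Y w)| < δ hist.length
  abs_apply_old_lt : ∀ v ∈ hist, |f w.2 (normalizedDiff Y v)| < δ hist.length
  mul_norm_le : ∀ u ∈ Submodule.span ℝ (normalizedDiff Y '' {v | v ∈ hist}), ∀ t : ℝ,
    C hist.length * ‖u‖ ≤ C (hist.length + 1) * ‖u + t • normalizedDiff Y w‖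

theorem exists_isGoodStep (hf : ∀ k, ‖f k‖ ≤ 1)
    (hf0 : ∀ v, Tendsto (fun k => f k v) atTop (𝓝 0))
    (hY : ∀ g : StrongDual ℝ X, CauchySeq fun k => g (Y k)) (hfY : ∀ k, r ≤ f k (Y k))
    (hb : 0 < b) (hbr : b < r) (hC : StrictMono C) (hC0 : 0 < C 0) (hδ : ∀ j, 0 < δ j)
    (hist : List (ℕ × ℕ)) : ∃ w, IsGoodStep f Y b C δ hist w := by
  set j := hist.length
  have hhist : {v | v ∈ hist}.Finite := hist.finite_toSet
  set E := Submodule.span ℝ (normalizedDiff Y '' {v | v ∈ hist})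
  have : FiniteDimensional ℝ E := FiniteDimensional.span_of_finite ℝ (hhist.image _)
  have hCj : 0 < C j := hC0.trans_le (hC.monotone j.zero_le)
  obtain ⟨F, η, hη, hF⟩ :=
    exists_finset_norm_le_mul_norm_add_smul E ((one_lt_div hCj).2 (hC j.lt_add_one))
  have hsmall := eventually_abs_apply_normalizedDiff_lt hf hY hb
    (F.finite_toSet.union (hhist.image fun v => f v.2)) (lt_min hη (hδ j))
  have hgood : ∀ᶠ m in atTop, ∀ᶠ n in atTop, IsGoodStep f Y b C δ hist (m, n) := by
    filter_upwards [hsmall.curry, hhist.eventually_all.2 fun v _ => eventually_gt_atTop v.2]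
      with m hm hmhist
    filter_upwards [hm, eventually_gt_atTop m,
      (hf0 (Y m)).abs.eventually_lt_const (by simpa using sub_pos.2 hbr : |(0 : ℝ)| < r - b),
      hhist.eventually_all.2 fun v _ =>
        (hf0 (normalizedDiff Y v)).abs.eventually_lt_const (by simpa using hδ j)]
      with n hsmall hmn hfYm hold
    have hle : b ≤ f n (Y n - Y m) := by
      rw [map_sub]; linarith [hfY n, le_abs_self (f n (Y m))]
    replace hsmall := hsmall hle
    refine ⟨hmhist, hmn, hle, fun v hv => ?_, hold, fun u hu t => ?_⟩
    · exact (hsmall _ (Or.inr ⟨v, hv, rfl⟩)).trans_le (min_le_right _ _)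
    · have := hF _ (norm_normalizedDiff hb hle)
        (fun h hh => (hsmall h (Or.inl hh)).le.trans (min_le_left _ _)) u hu t
      calc C j * ‖u‖ ≤ C j * (C (j + 1) / C j * ‖u + t • normalizedDiff Y (m, n)‖) := by gcongr
        _ = C (j + 1) * ‖u + t • normalizedDiff Y (m, n)‖ := by field_simp
  obtain ⟨m, hm⟩ := hgood.exists
  obtain ⟨n, hn⟩ := hm.exists
  exact ⟨(m, n), hn⟩

theorem exists_weaklyNull_biorthogonalish_of_cauchySeq_apply (hf : ∀ k, ‖f k‖ ≤ 1)
    (hf0 : ∀ v, Tendsto (fun k => f k v) atTop (𝓝 0)) (hY1 : ∀ k, ‖Y k‖ ≤ 1)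
    (hY : ∀ g : StrongDual ℝ X, CauchySeq fun k => g (Y k)) (hfY : ∀ k, r ≤ f k (Y k))
    (hb : 0 < b) (hbr : b < r) (hC : StrictMono C) (hC0 : 1 ≤ C 0) (hδ : Antitone δ)
    (hδ0 : ∀ j, 0 < δ j) :
    ∃ φ : ℕ → ℕ, StrictMono φ ∧ ∃ x : ℕ → X, (∀ i, ‖x i‖ = 1) ∧
      (∀ g : StrongDual ℝ X, Tendsto (fun i => g (x i)) atTop (𝓝 0)) ∧
      (∀ i, b / 2 ≤ f (φ i) (x i)) ∧ (∀ i j, i ≠ j → |f (φ i) (x j)| < δ i) ∧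
      ∀ k, IsBasicUpTo (C k) x k := by
  obtain ⟨p, hp⟩ := exists_seq_forall_prefix (IsGoodStep f Y b C δ)
    (exists_isGoodStep hf hf0 hY hfY hb hbr hC (by linarith) hδ0)
  have hmem : ∀ {l j}, l < j → p l ∈ (List.range j).map p :=
    fun h => List.mem_map_of_mem (List.mem_range.2 h)
  have hlen : ∀ j, ((List.range j).map p).length = j := by simp
  have hsnd_lt_fst : ∀ {l j}, l < j → (p l).2 < (p j).1 := fun h => (hp _).snd_lt_fst _ (hmem h)
  have hfst : StrictMono fun j => (p j).1 := fun l _ h => (hp l).fst_lt_snd.trans (hsnd_lt_fst h)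
  have hsnd : StrictMono fun j => (p j).2 := fun _ j h => (hsnd_lt_fst h).trans (hp j).fst_lt_snd
  refine ⟨fun i => (p i).2, hsnd, fun i => normalizedDiff Y (p i),
    fun i => norm_normalizedDiff hb (hp i).le_apply_sub, fun g => ?_, fun i => ?_,
    fun i j hij => ?_, isBasicUpTo_of_mul_norm_le hC.monotone hC0 fun j => ?_⟩
  · rw [Metric.tendsto_nhds]
    intro β hβ
    filter_upwards [(hfst.tendsto_atTop.prodMk hsnd.tendsto_atTop).eventually
      (eventually_abs_apply_normalizedDiff_lt hf hY hb (Set.finite_singleton g) hβ)] with i hi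
    simpa using hi (hp i).le_apply_sub g rfl
  · exact div_two_le_apply_inv_norm_smul
      ((norm_sub_le _ _).trans (by linarith [hY1 (p i).2, hY1 (p i).1])) hb (hp i).le_apply_sub
  · rcases hij.lt_or_gt with h | h
    · have := (hp j).abs_apply_new_lt _ (hmem h)
      rw [hlen] at this
      exact this.trans_le (hδ h.le)
    · have := (hp i).abs_apply_old_lt _ (hmem h)
      rwa [hlen] at this
  · have hspan : normalizedDiff Y '' {v | v ∈ (List.range j).map p} =
        (fun i => normalizedDiff Y (p i)) '' Set.Iio j := by
      ext; simp
    have := (hp j).mul_norm_le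
    rwa [hlen, hspan] at this

end Construction

theorem exists_subsequence_weaklyNull_biorthogonalish_general
    [TopologicalSpace.SeparableSpace (StrongDual ℝ X)]
    (ε : ℝ) (hε : 0 < ε) (f : ℕ → StrongDual ℝ X)
    (hf1 : ∀ i, ‖f i‖ ≤ 1) (hf2 : ∀ i, ε / 2 ≤ ‖f i‖)
    (hwstar : ∀ v : X, Tendsto (fun i => f i v) atTop (nhds 0)) :
    ∃ φ : ℕ → ℕ, StrictMono φ ∧
      ∃ x : ℕ → X, (∀ i, ‖x i‖ = 1) ∧
        (∀ g : StrongDual ℝ X, Tendsto (fun i => g (x i)) atTop (nhds 0)) ∧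
        (∀ i, ε / 5 ≤ f (φ i) (x i)) ∧
        (∀ i j, i ≠ j → |f (φ i) (x j)| < ε / 2 ^ (i + 7)) ∧
        (∀ k : ℕ, 1 ≤ k → IsBasicUpTo (1 + ε * (1 - 1 / 2 ^ k)) x k) := by
  choose y hy1 hfy using fun i =>
    exists_norm_le_one_lt_apply ((by linarith : 9 * ε / 20 < ε / 2).trans_le (hf2 i))
  obtain ⟨ψ, hψ, Φ, hΦ⟩ := exists_strictMono_tendsto_apply hy1
  have hC : StrictMono fun k : ℕ => 1 + ε * (1 - 1 / (2 : ℝ) ^ k) := fun k l hkl => by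
    have h2 : (2 : ℝ) ^ k < 2 ^ l := pow_lt_pow_right₀ one_lt_two hkl
    have := one_div_lt_one_div_of_lt (by positivity) h2
    nlinarith
  obtain ⟨φ, hφ, x, hx1, hx0, hfx, hfxy, hbasic⟩ :=
    exists_weaklyNull_biorthogonalish_of_cauchySeq_apply (f := f ∘ ψ) (Y := y ∘ ψ) (b := 2 * ε / 5)
      (δ := fun i => ε / 2 ^ (i + 7))
      (fun k => hf1 _) (fun v => (hwstar v).comp hψ.tendsto_atTop) (fun k => hy1 _)
      (fun g => (hΦ g).cauchySeq) (fun k => (hfy _).le) (by positivity) (by linarith) hC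
      (by simp) (fun i j hij => div_le_div_of_nonneg_left hε.le (by positivity)
        (pow_le_pow_right₀ one_le_two (by omega))) (fun j => by positivity)
  refine ⟨ψ ∘ φ, hψ.comp hφ, x, hx1, hx0, fun i => ?_, hfxy, fun k _ => hbasic k⟩
  exact (by ring : ε / 5 = 2 * ε / 5 / 2).trans_le (hfx i)

/-- Extraction lemma: given a weak* null sequence `(f_i) ⊆ B_{X*}` with
`ε/2 ≤ ‖f_i‖ ≤ 1` in a space with separable dual, there is a subsequence
`(f'_i) = (f_{φ(i)})` and a weakly null normalized sequence `(x_i)` with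
`f'_i(x_i) ≥ ε/5`, `|f'_i(x_j)| < ε/2^{i+6}` for `i ≠ j` (indices starting at 1),
and `(x_i)_{i=1}^k` being `(1 + ε(1 − 2^{−k}))`-basic for each `k`. -/
theorem exists_subsequence_weaklyNull_biorthogonalish
    [CompleteSpace X] [TopologicalSpace.SeparableSpace (StrongDual ℝ X)]
    (ε : ℝ) (hε : 0 < ε) (f : ℕ → StrongDual ℝ X)
    (hf1 : ∀ i, ‖f i‖ ≤ 1) (hf2 : ∀ i, ε / 2 ≤ ‖f i‖)
    (hwstar : ∀ v : X, Tendsto (fun i => f i v) atTop (nhds 0)) :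
    ∃ φ : ℕ → ℕ, StrictMono φ ∧
      ∃ x : ℕ → X, (∀ i, ‖x i‖ = 1) ∧
        (∀ g : StrongDual ℝ X, Tendsto (fun i => g (x i)) atTop (nhds 0)) ∧
        (∀ i, ε / 5 ≤ f (φ i) (x i)) ∧
        (∀ i j, i ≠ j → |f (φ i) (x j)| < ε / 2 ^ (i + 7)) ∧
        (∀ k : ℕ, 1 ≤ k → IsBasicUpTo (1 + ε * (1 - 1 / 2 ^ k)) x k) :=
  exists_subsequence_weaklyNull_biorthogonalish_general ε hε f hf1 hf2 hwstar
end

section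
/- Let X be a Banach space with a basis (e_i). If (e_i) is not a boundedly complete basis, then there exist K ≥ 1 and a normalized block basis (x_i)_{i=1}^∞ of (e_i) such that (x_i)_{i=1}^m is an ℓ∞⁺-K sequence for every m ≥ 1. Conversely, if there exist K ≥ 1 and such a block basis, then (e_i) is not boundedly complete. -/
/-!
Unique expansions make `e` a Schauder basis (by the open mapping theorem), so the partial-sum
projections are uniformly bounded by some `C`, and every block sequence of `e` is `C`-basic.

If `∑ aᵢ eᵢ` has bounded partial sums `‖σₙ‖ ≤ M` but diverges, it is not Cauchy, so it splits
into blocks `uₙ = σ_{kₙ₊₁} - σ_{kₙ}` with `ε ≤ ‖uₙ‖ ≤ 2M`. The normalized blocks `uₙ / ‖uₙ‖`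
with coefficients `‖uₙ‖ / 2M ∈ [ε / 2M, 1]` are `ℓ∞⁺` sequences, because the corresponding sum
telescopes to `(σ_{kₘ} - σ_{k₀}) / 2M`.

Conversely, a compactness argument in `[1/K, 1]^ℕ` gives a single coefficient sequence `αₙ`
such that all partial sums of `∑ αₙ xₙ` are bounded by `K²`. Expanded in `e`, this series has
partial sums bounded by `C K²`, but it cannot converge since `‖αₙ xₙ‖ ≥ 1/K`.
-/

open Filter

variable {X : Type*} [NormedAddCommGroup X] [NormedSpace ℝ X]

/-- A basis `(e_i)` of `X` is boundedly complete if every series with bounded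
partial sums converges. -/
def BoundedlyComplete (e : ℕ → X) : Prop :=
  ∀ a : ℕ → ℝ, (∃ M : ℝ, ∀ n, ‖∑ i ∈ Finset.range n, a i • e i‖ ≤ M) →
    ∃ v : X, Tendsto (fun n => ∑ i ∈ Finset.range n, a i • e i) atTop (nhds v)

open Topology ZeroAtInfty

section

variable {𝕜 E : Type*} [NontriviallyNormedField 𝕜] [NormedAddCommGroup E] [NormedSpace 𝕜 E]

variable (𝕜) in
def HasUniqueExpansion (e : ℕ → E) : Prop :=
  ∀ v : E, ∃! a : ℕ → 𝕜, Tendsto (fun n => ∑ i ∈ Finset.range n, a i • e i) atTop (𝓝 v)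

theorem ZeroAtInftyContinuousMap.norm_apply_le {α : Type*} [TopologicalSpace α] (t : C₀(α, E))
    (x : α) : ‖t x‖ ≤ ‖t‖ :=
  BoundedContinuousFunction.norm_coe_le_norm t.toBCF x

theorem ZeroAtInftyContinuousMap.tendsto_atTop_nat (t : C₀(ℕ, E)) : Tendsto t atTop (𝓝 0) :=
  cocompact_eq_atTop (α := ℕ) ▸ t.zero_at_infty'

variable (𝕜) in
/-- `t n` plays the role of the tail `v - ∑_{i<n} aᵢ eᵢ` of an expansion of `v = t 0`. -/
def expansionTails (e : ℕ → E) : Submodule 𝕜 C₀(ℕ, E) where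
  carrier := {t | ∀ n, t n - t (n + 1) ∈ 𝕜 ∙ e n}
  add_mem' {s t} hs ht n := by simpa [add_sub_add_comm] using add_mem (hs n) (ht n)
  zero_mem' n := by simp
  smul_mem' c t ht n := by simpa [← smul_sub] using Submodule.smul_mem _ c (ht n)

variable (𝕜) in
noncomputable def expansionTails.evalZero (e : ℕ → E) : expansionTails 𝕜 e →L[𝕜] E :=
  LinearMap.mkContinuous
    { toFun := fun t => (t : C₀(ℕ, E)) 0
      map_add' := fun _ _ => rfl
      map_smul' := fun _ _ => rfl } 1
    fun t => by simpa using (t : C₀(ℕ, E)).norm_apply_le 0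

theorem expansionTails.isClosed [CompleteSpace 𝕜] (e : ℕ → E) :
    IsClosed (expansionTails 𝕜 e : Set C₀(ℕ, E)) := by
  have hev (n : ℕ) : Continuous fun t : C₀(ℕ, E) => t n :=
    (continuous_eval_const (F := BoundedContinuousFunction ℕ E) n).comp
      ZeroAtInftyContinuousMap.isometry_toBCF.continuous
  simp only [expansionTails, Submodule.coe_set_mk, AddSubmonoid.coe_set_mk,
    AddSubsemigroup.coe_set_mk, Set.ofPred_forall]
  exact isClosed_iInter fun n =>
    (Submodule.closed_of_finiteDimensional _).preimage ((hev n).sub (hev (n + 1)))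

namespace HasUniqueExpansion

variable {e : ℕ → E} (he : HasUniqueExpansion 𝕜 e)
include he

noncomputable def coeffs (v : E) : ℕ → 𝕜 := (he v).exists.choose

theorem tendsto_coeffs (v : E) :
    Tendsto (fun n => ∑ i ∈ Finset.range n, he.coeffs v i • e i) atTop (𝓝 v) :=
  (he v).exists.choose_spec

theorem coeffs_eq_of_tendsto {a : ℕ → 𝕜} {v : E}
    (ha : Tendsto (fun n => ∑ i ∈ Finset.range n, a i • e i) atTop (𝓝 v)) : he.coeffs v = a :=
  (he v).unique (he.tendsto_coeffs v) ha

noncomputable def coeffsₗ : E →ₗ[𝕜] ℕ → 𝕜 where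
  toFun := he.coeffs
  map_add' v w := he.coeffs_eq_of_tendsto <| by
    simpa [add_smul, Finset.sum_add_distrib] using (he.tendsto_coeffs v).add (he.tendsto_coeffs w)
  map_smul' c v := he.coeffs_eq_of_tendsto <| by
    simpa [mul_smul, ← Finset.smul_sum] using (he.tendsto_coeffs v).const_smul c

theorem coeffs_single (i : ℕ) : he.coeffs (e i) = Pi.single i 1 := by
  refine he.coeffs_eq_of_tendsto (tendsto_atTop_of_eventually_const (i₀ := i + 1) fun n hn => ?_)
  rw [Finset.sum_eq_single_of_mem i (Finset.mem_range.2 (by omega))] <;> simp +contextual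

theorem ne_zero (i : ℕ) : e i ≠ 0 := by
  intro h
  have h0 : he.coeffs 0 = 0 := he.coeffs_eq_of_tendsto (by simp)
  simpa [h, h0] using congrFun (he.coeffs_single i) i

theorem surjective_evalZero : Function.Surjective (expansionTails.evalZero 𝕜 e) := by
  intro v
  let t : C₀(ℕ, E) :=
    ⟨⟨fun n => v - ∑ i ∈ Finset.range n, he.coeffs v i • e i, continuous_of_discreteTopology⟩,
      cocompact_eq_atTop (α := ℕ) ▸ by simpa using (he.tendsto_coeffs v).const_sub v⟩
  have ht : t ∈ expansionTails 𝕜 e := fun n =>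
    Submodule.mem_span_singleton.2 ⟨he.coeffs v n, by simp [t, Finset.sum_range_succ]⟩
  exact ⟨⟨t, ht⟩, by simp [expansionTails.evalZero, t]⟩

variable [CompleteSpace 𝕜] [CompleteSpace E]

/-- By the open mapping theorem, `v` has a tail sequence of norm `≤ C ‖v‖`; by uniqueness its
differences are the terms of the expansion of `v`. -/
theorem exists_norm_partialSum_le :
    ∃ C, ∀ v n, ‖∑ i ∈ Finset.range n, he.coeffs v i • e i‖ ≤ C * ‖v‖ := by
  have : CompleteSpace (expansionTails 𝕜 e) := (expansionTails.isClosed e).completeSpace_coe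
  obtain ⟨C, -, hC⟩ := (expansionTails.evalZero 𝕜 e).exists_preimage_norm_le he.surjective_evalZero
  refine ⟨2 * C, fun v n => ?_⟩
  obtain ⟨⟨t, ht⟩, rfl, htC⟩ := hC v
  choose c hc using fun n => Submodule.mem_span_singleton.1 (ht n)
  have hsum (n : ℕ) : ∑ i ∈ Finset.range n, c i • e i = t 0 - t n := by
    simp only [hc, Finset.sum_range_sub']
  have hcoeffs : he.coeffs (t 0) = c := he.coeffs_eq_of_tendsto <| by
    simpa [hsum] using tendsto_const_nhds.sub t.tendsto_atTop_nat
  have htC' : ‖t‖ ≤ C * ‖t 0‖ := htC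
  calc ‖∑ i ∈ Finset.range n, he.coeffs (t 0) i • e i‖ = ‖t 0 - t n‖ := by rw [hcoeffs, hsum]
    _ ≤ ‖t‖ + ‖t‖ := (norm_sub_le _ _).trans (add_le_add (t.norm_apply_le 0) (t.norm_apply_le n))
    _ ≤ 2 * C * ‖t 0‖ := by linarith

theorem exists_norm_coeffs_le (i : ℕ) : ∃ C, ∀ v, ‖he.coeffs v i‖ ≤ C * ‖v‖ := by
  obtain ⟨C, hC⟩ := he.exists_norm_partialSum_le
  refine ⟨2 * C / ‖e i‖, fun v => ?_⟩
  have h : he.coeffs v i • e i = ∑ j ∈ Finset.range (i + 1), he.coeffs v j • e j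
      - ∑ j ∈ Finset.range i, he.coeffs v j • e j := by
    rw [Finset.sum_range_succ, add_sub_cancel_left]
  rw [div_mul_eq_mul_div, le_div_iff₀ (norm_pos_iff.2 (he.ne_zero i)), ← norm_smul, h]
  linarith [norm_sub_le (∑ j ∈ Finset.range (i + 1), he.coeffs v j • e j)
    (∑ j ∈ Finset.range i, he.coeffs v j • e j), hC v (i + 1), hC v i]

noncomputable def coord (i : ℕ) : StrongDual 𝕜 E :=
  LinearMap.mkContinuousOfExistsBound ((LinearMap.proj i).comp he.coeffsₗ) <|
    he.exists_norm_coeffs_le i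

theorem coord_apply (i : ℕ) (v : E) : he.coord i v = he.coeffs v i := rfl

noncomputable def schauderBasis : SchauderBasis 𝕜 E where
  basis := e
  coord := he.coord
  ortho i j := by simp [coord_apply, coeffs_single, Pi.single_apply]
  expansion v := by
    rw [HasSum, SummationFilter.conditional_filter_eq_map_range, tendsto_map'_iff]
    exact he.tendsto_coeffs v

end HasUniqueExpansion

namespace GeneralSchauderBasis

variable {β : Type*} {L : SummationFilter β} (b : GeneralSchauderBasis β 𝕜 E L)
  {A B : Finset β} {v : E}

theorem proj_eq_self_of_mem_span (hv : v ∈ Submodule.span 𝕜 (b '' A)) (hAB : A ⊆ B) :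
    b.proj B v = v := by
  classical
  obtain ⟨w, rfl⟩ : v ∈ (b.proj A).toLinearMap.range := b.range_proj_eq_span A ▸ hv
  rw [ContinuousLinearMap.coe_coe, proj_comp, Finset.inter_eq_right.2 hAB]

theorem proj_eq_zero_of_mem_span (hv : v ∈ Submodule.span 𝕜 (b '' A)) (hAB : Disjoint B A) :
    b.proj B v = 0 := by
  classical
  obtain ⟨w, rfl⟩ : v ∈ (b.proj A).toLinearMap.range := b.range_proj_eq_span A ▸ hv
  rw [ContinuousLinearMap.coe_coe, proj_comp, Finset.disjoint_iff_inter_eq_empty.1 hAB,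
    proj_empty, zero_apply]

theorem coord_eq_zero_of_mem_span (hv : v ∈ Submodule.span 𝕜 (b '' A)) {i : β} (hi : i ∉ A) :
    b.coord i v = 0 := by
  have h := b.proj_eq_zero_of_mem_span hv (Finset.disjoint_singleton_left.2 hi)
  rw [proj_apply, Finset.sum_singleton, smul_eq_zero] at h
  exact h.resolve_right (b.linearIndependent.ne_zero i)

end GeneralSchauderBasis

namespace SchauderBasis

variable {b : SchauderBasis 𝕜 E} {k : ℕ → ℕ} {x : ℕ → E}

theorem proj_blockSeq (hk : Monotone k)
    (hx : ∀ n, x n ∈ Submodule.span 𝕜 (b '' Set.Ico (k n) (k (n + 1)))) (p n : ℕ) :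
    b.proj (k p) (x n) = if n < p then x n else 0 := by
  have hxn := hx n
  rw [← Finset.coe_Ico] at hxn
  split_ifs with hnp
  · refine b.proj_eq_self_of_mem_span hxn fun j hj => ?_
    simp only [Finset.mem_Ico, Finset.mem_range] at hj ⊢
    exact hj.2.trans_le (hk hnp)
  · refine b.proj_eq_zero_of_mem_span hxn (Finset.disjoint_left.2 fun j hj hj' => ?_)
    simp only [Finset.mem_Ico, Finset.mem_range] at hj hj'
    exact (hj.trans_le (hk (not_lt.1 hnp))).not_ge hj'.1

theorem coord_blockSeq_eq_zero (hk : StrictMono k)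
    (hx : ∀ n, x n ∈ Submodule.span 𝕜 (b '' Set.Ico (k n) (k (n + 1)))) {j n : ℕ} (hjn : j < n) :
    b.coord j (x n) = 0 := by
  have hxn := hx n
  rw [← Finset.coe_Ico] at hxn
  refine b.coord_eq_zero_of_mem_span hxn fun hj => ?_
  exact (hjn.trans_le (hk.id_le n)).not_ge (Finset.mem_Ico.1 hj).1

theorem exists_coeffs_of_blockSeq (hk : StrictMono k)
    (hx : ∀ n, x n ∈ Submodule.span 𝕜 (b '' Set.Ico (k n) (k (n + 1)))) (α : ℕ → 𝕜) :
    ∃ a : ℕ → 𝕜,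
      (∀ r, ∑ j ∈ Finset.range r, a j • b j = b.proj r (∑ n ∈ Finset.range r, α n • x n)) ∧
      ∀ N, ∑ j ∈ Finset.range (k N), a j • b j = ∑ n ∈ Finset.range N, α n • x n := by
  set S : ℕ → E := fun N => ∑ n ∈ Finset.range N, α n • x n
  -- `x n` has no `j`-th coordinate once `j < n`, so `coord j (S M)` is constant for `M > j`
  have hcoord {j M : ℕ} (hjM : j < M) : b.coord j (S M) = b.coord j (S (j + 1)) := by
    simp only [S]
    rw [← Finset.sum_range_add_sum_Ico _ hjM, map_add, add_eq_left, map_sum]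
    exact Finset.sum_eq_zero fun n hn => by
      rw [map_smul, coord_blockSeq_eq_zero hk hx (Finset.mem_Ico.1 hn).1, smul_zero]
  have hpartial (r : ℕ) :
      ∑ j ∈ Finset.range r, b.coord j (S (j + 1)) • b j = b.proj r (S r) := by
    rw [proj_apply]
    exact Finset.sum_congr rfl fun j hj => by rw [hcoord (Finset.mem_range.1 hj)]
  refine ⟨fun j => b.coord j (S (j + 1)), hpartial, fun N => ?_⟩
  rw [hpartial]
  simp only [S, map_sum, map_smul, proj_blockSeq hk.monotone hx, smul_ite, smul_zero,
    Finset.sum_ite, Finset.sum_const_zero, add_zero]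
  congr 1
  ext n
  simp only [Finset.mem_filter, Finset.mem_range]
  have := hk.le_apply (x := N)
  omega

end SchauderBasis

end

theorem prefSum_eq_sum_univ {m : ℕ} (x : Fin m → X) (a : Fin m → ℝ) :
    prefSum x a m = ∑ i, a i • x i :=
  Finset.sum_congr rfl fun i _ => if_pos i.isLt

theorem prefSum_eq_sum_range {m p : ℕ} (x : ℕ → X) (a : ℕ → ℝ) (hp : p ≤ m) :
    prefSum (fun i : Fin m => x i) (fun i => a i) p = ∑ i ∈ Finset.range p, a i • x i := by
  rw [prefSum, Fin.sum_univ_eq_sum_range (fun i => if i < p then a i • x i else 0),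
    ← Finset.sum_range_add_sum_Ico _ hp, Finset.sum_ite_of_true (fun i hi => Finset.mem_range.1 hi),
    Finset.sum_ite_of_false (fun i hi => (Finset.mem_Ico.1 hi).1.not_gt)]
  simp

theorem isFinBasic_blockSeq {b : SchauderBasis ℝ X} {k : ℕ → ℕ} {x : ℕ → X} {C : ℝ}
    (hC : ∀ n, ‖b.proj n‖ ≤ C) (hk : Monotone k)
    (hx : ∀ n, x n ∈ Submodule.span ℝ (b '' Set.Ico (k n) (k (n + 1)))) (m : ℕ) :
    IsFinBasic C (fun i : Fin m => x i) := by
  intro a p q hpq _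
  have h : prefSum (fun i : Fin m => x i) a p =
      b.proj (k p) (prefSum (fun i : Fin m => x i) a q) := by
    simp only [prefSum, map_sum, apply_ite (b.proj (k p)), map_smul, map_zero,
      SchauderBasis.proj_blockSeq hk hx, smul_ite, smul_zero]
    refine Finset.sum_congr rfl fun i _ => ?_
    by_cases hip : (i : ℕ) < p
    · simp [hip, hip.trans_le hpq]
    · simp [hip]
  rw [h]
  exact ((b.proj (k p)).le_opNorm _).trans (mul_le_mul_of_nonneg_right (hC _) (norm_nonneg _))

theorem isLInfPlus_normalize {m : ℕ} {u : Fin m → X} {δ B K : ℝ} (hδ : 0 < δ) (hB : 0 < B)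
    (hu : ∀ i, δ ≤ ‖u i‖ ∧ ‖u i‖ ≤ B) (hsum : ‖∑ i, u i‖ ≤ B) (hK : B / δ ≤ K) (hK1 : 1 ≤ K)
    (hbasic : IsFinBasic K fun i => ‖u i‖⁻¹ • u i) :
    IsLInfPlus K fun i => ‖u i‖⁻¹ • u i := by
  have hu0 (i : Fin m) : 0 < ‖u i‖ := hδ.trans_le (hu i).1
  refine ⟨fun i => norm_smul_inv_norm (norm_pos_iff.1 (hu0 i)), hbasic,
    fun i => ‖u i‖ / B, fun i => ⟨?_, (div_le_one hB).2 (hu i).2⟩, ?_⟩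
  · calc 1 / K ≤ δ / B := by
          rw [one_div_le (by positivity) (by positivity)]
          simpa using hK
      _ ≤ ‖u i‖ / B := by gcongr; exact (hu i).1
  · have h (i : Fin m) : (‖u i‖ / B) • ‖u i‖⁻¹ • u i = B⁻¹ • u i := by
      rw [smul_smul, div_mul_eq_mul_div, mul_inv_cancel₀ (hu0 i).ne', one_div]
    simp only [h, ← Finset.smul_sum, norm_smul, norm_inv, Real.norm_of_nonneg hB.le]
    calc B⁻¹ * ‖∑ i, u i‖ ≤ B⁻¹ * B := by gcongr
      _ ≤ K := by rw [inv_mul_cancel₀ hB.ne']; exact hK1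

theorem exists_strictMono_le_dist_of_not_cauchySeq {α : Type*} [PseudoMetricSpace α] {u : ℕ → α}
    (hu : ¬CauchySeq u) :
    ∃ ε > 0, ∃ k : ℕ → ℕ, StrictMono k ∧ ∀ n, ε ≤ dist (u (k (n + 1))) (u (k n)) := by
  rw [Metric.cauchySeq_iff'] at hu
  push Not at hu
  obtain ⟨ε, hε, h⟩ := hu
  choose f hf hfε using h
  have hlt (N : ℕ) : N < f N := (hf N).lt_of_ne fun heq => by
    have := hfε N
    rw [← heq, dist_self] at this
    linarith
  refine ⟨ε, hε, fun n => f^[n] 0, strictMono_nat_of_lt_succ fun n => ?_, fun n => ?_⟩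
  · simpa [Function.iterate_succ_apply'] using hlt _
  · simpa [Function.iterate_succ_apply'] using hfε _

theorem SchauderBasis.exists_lInfPlus_blockSeq_of_not_boundedlyComplete [CompleteSpace X]
    (b : SchauderBasis ℝ X) (h : ¬BoundedlyComplete b) :
    ∃ K : ℝ, 1 ≤ K ∧ ∃ (k : ℕ → ℕ) (x : ℕ → X), StrictMono k ∧
      (∀ n, x n ∈ Submodule.span ℝ (b '' Set.Ico (k n) (k (n + 1)))) ∧
      (∀ n, ‖x n‖ = 1) ∧ ∀ m : ℕ, 1 ≤ m → IsLInfPlus K (fun i : Fin m => x (i : ℕ)) := by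
  simp only [BoundedlyComplete, not_forall, not_exists] at h
  obtain ⟨a, ⟨M, hM⟩, hdiv⟩ := h
  set σ : ℕ → X := fun n => ∑ i ∈ Finset.range n, a i • b i
  have hσ : ¬CauchySeq σ := fun hc => hdiv _ (cauchySeq_tendsto_of_complete hc).choose_spec
  obtain ⟨ε, hε, k, hk, hkε⟩ := exists_strictMono_le_dist_of_not_cauchySeq hσ
  obtain ⟨C, hC⟩ := b.exists_norm_proj_le
  set u : ℕ → X := fun n => σ (k (n + 1)) - σ (k n)
  have hu_mem (n : ℕ) : u n ∈ Submodule.span ℝ (b '' Set.Ico (k n) (k (n + 1))) := by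
    rw [show u n = ∑ j ∈ Finset.Ico (k n) (k (n + 1)), a j • b j from
      (Finset.sum_Ico_eq_sub (fun j => a j • b j) (hk (Nat.lt_succ_self n)).le).symm]
    exact Submodule.sum_smul_mem _ a fun j hj => Submodule.subset_span ⟨j, Finset.mem_Ico.1 hj, rfl⟩
  have hσu (p q : ℕ) : ‖σ p - σ q‖ ≤ 2 * M := (norm_sub_le _ _).trans (by linarith [hM p, hM q])
  have hu (n : ℕ) : ε ≤ ‖u n‖ ∧ ‖u n‖ ≤ 2 * M := ⟨dist_eq_norm (σ _) (σ _) ▸ hkε n, hσu _ _⟩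
  have hM0 : 0 < 2 * M := hε.trans_le ((hu 0).1.trans (hu 0).2)
  set K := max (max C 1) (2 * M / ε)
  have hCK (n : ℕ) : ‖b.proj n‖ ≤ K := (hC n).trans (le_max_of_le_left (le_max_left _ _))
  have hx_mem (n : ℕ) : ‖u n‖⁻¹ • u n ∈ Submodule.span ℝ (b '' Set.Ico (k n) (k (n + 1))) :=
    Submodule.smul_mem _ _ (hu_mem n)
  refine ⟨K, le_max_of_le_left (le_max_right _ _), k, fun n => ‖u n‖⁻¹ • u n, hk, hx_mem,
    fun n => norm_smul_inv_norm (norm_pos_iff.1 (hε.trans_le (hu n).1)), fun m _ => ?_⟩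
  have hsum : ‖∑ i : Fin m, u i‖ ≤ 2 * M := by
    rw [Fin.sum_univ_eq_sum_range u, Finset.sum_range_sub (fun n => σ (k n))]
    exact hσu _ _
  exact isLInfPlus_normalize hε hM0 (fun i => hu i) hsum (le_max_right _ _)
    (le_max_of_le_left (le_max_right _ _))
    (isFinBasic_blockSeq hCK hk.monotone hx_mem m)

theorem exists_coeffs_norm_partialSum_le_of_isLInfPlus {m : ℕ} {x : ℕ → X} {K : ℝ} (hK1 : 1 ≤ K)
    (h : IsLInfPlus K fun i : Fin m => x i) :
    ∃ α : ℕ → ℝ, (∀ n, α n ∈ Set.Icc (1 / K) 1) ∧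
      ∀ N ≤ m, ‖∑ n ∈ Finset.range N, α n • x n‖ ≤ K * K := by
  obtain ⟨-, hbasic, a, ha, hsum⟩ := h
  set α : ℕ → ℝ := fun n => if hn : n < m then a ⟨n, hn⟩ else 1
  have hαa : (fun i : Fin m => α i) = a := funext fun i => dif_pos i.isLt
  refine ⟨α, fun n => ?_, fun N hN => ?_⟩
  · by_cases hn : n < m
    · simpa [α, hn] using ha ⟨n, hn⟩
    · simpa [α, hn] using inv_le_one_of_one_le₀ hK1
  · rw [← prefSum_eq_sum_range x α hN, hαa]
    calc ‖prefSum (fun i : Fin m => x i) a N‖ ≤ K * ‖prefSum (fun i : Fin m => x i) a m‖ :=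
          hbasic a N m hN le_rfl
      _ ≤ K * K := by
          rw [prefSum_eq_sum_univ]
          exact mul_le_mul_of_nonneg_left hsum (by linarith)

theorem exists_coeffs_norm_partialSum_le {x : ℕ → X} {K : ℝ} (hK1 : 1 ≤ K)
    (hm : ∀ m : ℕ, 1 ≤ m → IsLInfPlus K fun i : Fin m => x i) :
    ∃ α : ℕ → ℝ, (∀ n, α n ∈ Set.Icc (1 / K) 1) ∧
      ∀ N, ‖∑ n ∈ Finset.range N, α n • x n‖ ≤ K * K := by
  choose A hA hAS using fun m : ℕ =>
    exists_coeffs_norm_partialSum_le_of_isLInfPlus hK1 (hm (m + 1) m.succ_pos)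
  have hcpt : IsCompact (Set.univ.pi fun _ : ℕ => Set.Icc (1 / K) 1) :=
    isCompact_univ_pi fun _ => isCompact_Icc
  obtain ⟨α, hα, φ, hφ, hlim⟩ := hcpt.tendsto_subseq fun m => Set.mem_univ_pi.2 (hA m)
  refine ⟨α, Set.mem_univ_pi.1 hα, fun N => ?_⟩
  have hcont : Continuous fun c : ℕ → ℝ => ∑ n ∈ Finset.range N, c n • x n := by fun_prop
  refine le_of_tendsto ((hcont.tendsto α).comp hlim).norm ?_
  filter_upwards [eventually_ge_atTop N] with j hj
  exact hAS (φ j) N ((hj.trans (hφ.id_le j)).trans (Nat.le_succ _))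

theorem SchauderBasis.not_boundedlyComplete_of_lInfPlus_blockSeq [CompleteSpace X]
    (b : SchauderBasis ℝ X) {K : ℝ} (hK1 : 1 ≤ K) {k : ℕ → ℕ} {x : ℕ → X} (hk : StrictMono k)
    (hx : ∀ n, x n ∈ Submodule.span ℝ (b '' Set.Ico (k n) (k (n + 1))))
    (hx1 : ∀ n, ‖x n‖ = 1) (hm : ∀ m : ℕ, 1 ≤ m → IsLInfPlus K fun i : Fin m => x i) :
    ¬BoundedlyComplete b := by
  obtain ⟨α, hα, hS⟩ := exists_coeffs_norm_partialSum_le hK1 hm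
  obtain ⟨C, hC⟩ := b.exists_norm_proj_le
  obtain ⟨a, ha_proj, ha_block⟩ := SchauderBasis.exists_coeffs_of_blockSeq hk hx α
  intro hbc
  obtain ⟨v, hv⟩ := hbc a ⟨C * (K * K), fun r => by
    rw [ha_proj]
    exact ((b.proj r).le_opNorm _).trans (mul_le_mul (hC r) (hS r) (norm_nonneg _)
      ((norm_nonneg _).trans (hC r)))⟩
  have hsum : Tendsto (fun N => ∑ n ∈ Finset.range N, α n • x n) atTop (𝓝 v) :=
    (hv.comp hk.tendsto_atTop).congr ha_block
  have hterm : Tendsto (fun n => α n • x n) atTop (𝓝 0) := by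
    simpa [Finset.sum_range_succ] using (hsum.comp (tendsto_add_atTop_nat 1)).sub hsum
  have hK : 0 < 1 / K := one_div_pos.2 (by linarith)
  have hK0 : ‖(0 : X)‖ < 1 / K := by rwa [norm_zero]
  obtain ⟨n, hn⟩ := (hterm.norm.eventually (gt_mem_nhds hK0)).exists
  rw [norm_smul, hx1, mul_one, Real.norm_of_nonneg (hK.le.trans (hα n).1)] at hn
  exact hn.not_ge (hα n).1

/-- A basis `(e_i)` of a Banach space fails to be boundedly complete iff some
normalized block basis of `(e_i)` is an `ℓ∞⁺-K` sequence of every length, for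
some `K ≥ 1`. -/
theorem not_boundedlyComplete_iff_lInfPlus_blockBasis
    [CompleteSpace X] (e : ℕ → X)
    (hbasis : ∀ v : X, ∃! a : ℕ → ℝ,
      Tendsto (fun n => ∑ i ∈ Finset.range n, a i • e i) atTop (nhds v)) :
    ¬ BoundedlyComplete e ↔
      ∃ K : ℝ, 1 ≤ K ∧ ∃ (k : ℕ → ℕ) (x : ℕ → X), StrictMono k ∧
        (∀ n, x n ∈ Submodule.span ℝ (e '' Set.Ico (k n) (k (n + 1)))) ∧
        (∀ n, ‖x n‖ = 1) ∧
        ∀ m : ℕ, 1 ≤ m → IsLInfPlus K (fun i : Fin m => x (i : ℕ)) := by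
  have he : HasUniqueExpansion ℝ e := hbasis
  refine ⟨he.schauderBasis.exists_lInfPlus_blockSeq_of_not_boundedlyComplete, ?_⟩
  rintro ⟨K, hK1, k, x, hk, hx, hx1, hm⟩
  exact he.schauderBasis.not_boundedlyComplete_of_lInfPlus_blockSeq hK1 hk hx hx1 hm
end
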